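/- arXiv:2408.10881 — 10 statements merged into one kernel-verified Lean document; each statement's English description precedes it below -/
import Mathlib

section
/- There exists an absolute constant b₀ with the following property. Let a, b, c be positive integers with a < b ≤ c ≤ b^{1.01}, b ≥ b₀, gcd(b,c) = 1 and c ≠ a + b. Then there exists κ > 0 such that for every positive integer N there is a set A ⊆ [N] with |A| ≥ κ·N^{1/4.77} that contains no non-trivial solutions to the equation ax + by + cz = ax' + by' + cz'. -/
/-!
Let `p` be a shortest nonzero integer vector with `a p₀ + b p₁ + c p₂ = 0` and `L = max |pᵢ|`;
`c ≠ a + b` forces `L ≥ 2`. A solution inside `[0, L)` would give a shorter relation, so `[0, L)`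
is solution-free. Inside `[0, M)` with `2 L M ≤ c`, the difference vector of a solution is a
multiple of `p`, because its cross product with `p` is divisible by `c` (as `gcd(b, c) = 1`) and
small. If all numbers of the set have base-`R` digits below `L`, where `R = 2L(L-1)+1`, comparing
digits shows that the largest entry `p j` divides every digit of the `j`-th coordinate, so the
multiple is zero. The first seed `S = [0, L)` when `L ≥ c^{10/37}`, and otherwise the second one,
satisfies `|S|^{4.77} ≥ (a+b+c) M`. Finally, writing numbers in base
`(a+b+c) M` with all digits in `S` causes no carries in `a x + b y + c z`, so these digit sets are
solution-free, and they have the required density in every `[1, N]`.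
-/

open Finset

namespace SymmetricEquation

section Digits

theorem eq_zero_of_sum_mul_pow_eq_zero {D : ℤ} :
    ∀ {K : ℕ} {e : Fin K → ℤ}, (∀ i, |e i| < D) → ∑ i, e i * D ^ (i : ℕ) = 0 → e = 0
  | 0, _, _, _ => Subsingleton.elim _ _
  | K + 1, e, he, h => by
    have hsplit : e 0 + D * ∑ i : Fin K, e i.succ * D ^ (i : ℕ) = 0 := by
      rw [← h, Fin.sum_univ_succ, mul_sum]
      simp only [Fin.val_zero, pow_zero, mul_one, Fin.val_succ, pow_succ]
      congr 1
      exact sum_congr rfl fun i _ => by ring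
    have h0 : e 0 = 0 :=
      Int.eq_zero_of_abs_lt_dvd ⟨-∑ i : Fin K, e i.succ * D ^ (i : ℕ), by linarith⟩ (he 0)
    have hD : D ≠ 0 := by have := he 0; rw [h0, abs_zero] at this; exact this.ne'
    have htail : (fun i : Fin K => e i.succ) = 0 :=
      eq_zero_of_sum_mul_pow_eq_zero (fun i => he i.succ) (by simpa [h0, hD] using hsplit)
    funext i
    exact Fin.cases h0 (fun i => congrFun htail i) i

theorem sum_digits_lt_mul {D m : ℤ} {K : ℕ} {d : Fin (K + 1) → ℤ} (hD : 0 ≤ D)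
    (hd : ∀ i, 0 ≤ d i) (hlow : ∑ i : Fin K, d i.castSucc * D ^ (i : ℕ) < D ^ K)
    (htop : d (Fin.last K) < m) :
    ∑ i, d i * D ^ (i : ℕ) < m * D ^ K := by
  have hDK : 0 < D ^ K :=
    lt_of_le_of_lt (sum_nonneg fun i _ => mul_nonneg (hd _) (by positivity)) hlow
  rw [Fin.sum_univ_castSucc]
  simp only [Fin.val_castSucc, Fin.val_last]
  nlinarith

theorem sum_digits_lt {D : ℤ} :
    ∀ {K : ℕ} {d : Fin K → ℤ}, (∀ i, 0 ≤ d i) → (∀ i, d i < D) → ∑ i, d i * D ^ (i : ℕ) < D ^ K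
  | 0, _, _, _ => by simp
  | K + 1, d, hd0, hdD => by
    rw [pow_succ']
    exact sum_digits_lt_mul ((hd0 0).trans (hdD 0).le) hd0
      (sum_digits_lt (fun i => hd0 _) fun i => hdD _) (hdD _)

theorem abs_sub_lt_of_mem_Ico {x y L : ℤ} (hx : x ∈ Ico 0 L) (hy : y ∈ Ico 0 L) :
    |x - y| < L := by
  rw [mem_Ico] at hx hy
  exact abs_sub_lt_iff.mpr ⟨by linarith, by linarith⟩

def digitSet {K : ℕ} (S : Fin K → Finset ℤ) (D : ℤ) : Finset ℤ :=
  (Fintype.piFinset S).image fun d : Fin K → ℤ => ∑ i, d i * D ^ (i : ℕ)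

variable {K : ℕ} {S : Fin K → Finset ℤ} {D : ℤ}

theorem mem_digitSet {x : ℤ} :
    x ∈ digitSet S D ↔ ∃ d ∈ Fintype.piFinset S, ∑ i, d i * D ^ (i : ℕ) = x :=
  mem_image

theorem exists_sub_eq_sum_of_mem_digitSet {L : ℤ} (hS : ∀ i, S i ⊆ Ico 0 L) {x x' : ℤ}
    (hx : x ∈ digitSet S D) (hx' : x' ∈ digitSet S D) :
    ∃ δ : Fin K → ℤ, (∀ i, |δ i| < L) ∧ x - x' = ∑ i : Fin K, δ i * D ^ (i : ℕ) := by
  obtain ⟨d, hd, rfl⟩ := mem_digitSet.mp hx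
  obtain ⟨d', hd', rfl⟩ := mem_digitSet.mp hx'
  refine ⟨d - d', fun i => ?_, by simp only [Pi.sub_apply, sub_mul, sum_sub_distrib]⟩
  exact abs_sub_lt_of_mem_Ico (hS i (Fintype.mem_piFinset.mp hd i))
    (hS i (Fintype.mem_piFinset.mp hd' i))

theorem card_digitSet (hS : ∀ i, S i ⊆ Ico 0 D) : #(digitSet S D) = ∏ i, #(S i) := by
  rw [digitSet, card_image_of_injOn, Fintype.card_piFinset]
  intro d hd d' hd' h
  refine sub_eq_zero.mp (eq_zero_of_sum_mul_pow_eq_zero (D := D) (fun i => ?_) ?_)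
  · exact abs_sub_lt_of_mem_Ico (hS i (Fintype.mem_piFinset.mp hd i))
      (hS i (Fintype.mem_piFinset.mp hd' i))
  · simp only [Pi.sub_apply, sub_mul, sum_sub_distrib]
    exact sub_eq_zero.mpr h

theorem digitSet_subset_Ico (hS : ∀ i, S i ⊆ Ico 0 D) : digitSet S D ⊆ Ico 0 (D ^ K) := by
  intro x hx
  obtain ⟨d, hd, rfl⟩ := mem_digitSet.mp hx
  have hdi i := mem_Ico.mp (hS i (Fintype.mem_piFinset.mp hd i))
  exact mem_Ico.mpr ⟨sum_nonneg fun i _ =>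
      mul_nonneg (hdi i).1 (pow_nonneg ((hdi i).1.trans (hdi i).2.le) _),
    sum_digits_lt (fun i => (hdi i).1) fun i => (hdi i).2⟩

/-- The numbers below `t R^ℓ` all of whose base-`R` digits are below `L` (for `t ≤ L ≤ R`). -/
noncomputable def truncatedDigitSet (L t R ℓ : ℕ) : Finset ℤ :=
  digitSet (fun i : Fin (ℓ + 1) => Ico 0 ((if i = Fin.last ℓ then t else L : ℕ) : ℤ)) R

variable {L t R ℓ : ℕ}

theorem truncated_digits_subset (htL : t ≤ L) (i : Fin (ℓ + 1)) :
    Ico 0 ((if i = Fin.last ℓ then t else L : ℕ) : ℤ) ⊆ Ico 0 (L : ℤ) :=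
  Ico_subset_Ico_right (by split_ifs <;> simp [htL])

theorem truncatedDigitSet_subset_Ico (hLR : L ≤ R) :
    truncatedDigitSet L t R ℓ ⊆ Ico 0 ((t * R ^ ℓ : ℕ) : ℤ) := by
  intro x hx
  obtain ⟨d, hd, rfl⟩ := mem_digitSet.mp hx
  have hdi (i : Fin (ℓ + 1)) := mem_Ico.mp (Fintype.mem_piFinset.mp hd i)
  refine mem_Ico.mpr ⟨sum_nonneg fun i _ => mul_nonneg (hdi i).1 (by positivity), ?_⟩
  push_cast
  refine sum_digits_lt_mul (by positivity) (fun i => (hdi i).1)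
    (sum_digits_lt (fun i => (hdi _).1) fun i => ?_) (by simpa using (hdi (Fin.last ℓ)).2)
  have := (hdi i.castSucc).2
  rw [if_neg (Fin.castSucc_ne_last i)] at this
  exact this.trans_le (by exact_mod_cast hLR)

theorem card_truncatedDigitSet (htL : t ≤ L) (hLR : L ≤ R) :
    #(truncatedDigitSet L t R ℓ) = L ^ ℓ * t := by
  rw [truncatedDigitSet, card_digitSet fun i => (truncated_digits_subset htL i).trans
    (Ico_subset_Ico_right (by exact_mod_cast hLR)), Fin.prod_univ_castSucc]
  simp [Fin.castSucc_ne_last]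

end Digits

section SolutionFree

def SolutionFree (a b c : ℤ) (A : Finset ℤ) : Prop :=
  ∀ x y z x' y' z' : ℤ, x ∈ A → y ∈ A → z ∈ A → x' ∈ A → y' ∈ A → z' ∈ A →
    a * x + b * y + c * z = a * x' + b * y' + c * z' → x = x' ∧ y = y' ∧ z = z'

variable {a b c : ℤ}

theorem SolutionFree.image_add_const {A : Finset ℤ} (hA : SolutionFree a b c A) (t : ℤ) :
    SolutionFree a b c (A.image (· + t)) := by
  intro x y z x' y' z' hx hy hz hx' hy' hz' h
  simp only [mem_image] at hx hy hz hx' hy' hz'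
  obtain ⟨x, hx, rfl⟩ := hx
  obtain ⟨y, hy, rfl⟩ := hy
  obtain ⟨z, hz, rfl⟩ := hz
  obtain ⟨x', hx', rfl⟩ := hx'
  obtain ⟨y', hy', rfl⟩ := hy'
  obtain ⟨z', hz', rfl⟩ := hz'
  obtain ⟨rfl, rfl, rfl⟩ := hA x y z x' y' z' hx hy hz hx' hy' hz' (by linarith)
  exact ⟨rfl, rfl, rfl⟩

/-- Digit by digit, `a (x - x') + b (y - y') + c (z - z')` has absolute value less than the
base `D`, so a vanishing total forces every digit combination to vanish. -/
theorem SolutionFree.digitSet {K : ℕ} {S : Finset ℤ} {M D : ℤ} (hS : SolutionFree a b c S)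
    (hSM : S ⊆ Ico 0 M) (hD : (|a| + |b| + |c|) * (M - 1) < D) :
    SolutionFree a b c (digitSet (fun _ : Fin K => S) D) := by
  intro x y z x' y' z' hx hy hz hx' hy' hz' h
  obtain ⟨dx, hdx, rfl⟩ := mem_digitSet.mp hx
  obtain ⟨dy, hdy, rfl⟩ := mem_digitSet.mp hy
  obtain ⟨dz, hdz, rfl⟩ := mem_digitSet.mp hz
  obtain ⟨dx', hdx', rfl⟩ := mem_digitSet.mp hx'
  obtain ⟨dy', hdy', rfl⟩ := mem_digitSet.mp hy'
  obtain ⟨dz', hdz', rfl⟩ := mem_digitSet.mp hz'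
  simp only [Fintype.mem_piFinset] at hdx hdy hdz hdx' hdy' hdz'
  have hdiff {u u' : ℤ} (hu : u ∈ S) (hu' : u' ∈ S) : |u - u'| ≤ M - 1 :=
    Int.le_sub_one_of_lt (abs_sub_lt_of_mem_Ico (hSM hu) (hSM hu'))
  have hcarry := eq_zero_of_sum_mul_pow_eq_zero (D := D)
    (e := fun i => a * (dx i - dx' i) + b * (dy i - dy' i) + c * (dz i - dz' i))
    (fun i => by
      calc _ ≤ |a| * |dx i - dx' i| + |b| * |dy i - dy' i| + |c| * |dz i - dz' i| := by
            simpa only [abs_mul] using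
              abs_add_three (a * (dx i - dx' i)) (b * (dy i - dy' i)) (c * (dz i - dz' i))
        _ ≤ |a| * (M - 1) + |b| * (M - 1) + |c| * (M - 1) := by
            gcongr
            exacts [hdiff (hdx i) (hdx' i), hdiff (hdy i) (hdy' i), hdiff (hdz i) (hdz' i)]
        _ < D := by linarith)
    (by
      simp only [add_mul, sub_mul, mul_assoc, sum_add_distrib, sum_sub_distrib, ← mul_sum]
      linarith)
  have hdigit (i : Fin K) : dx i = dx' i ∧ dy i = dy' i ∧ dz i = dz' i :=
    hS _ _ _ _ _ _ (hdx i) (hdy i) (hdz i) (hdx' i) (hdy' i) (hdz' i)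
      (by linarith [congrFun hcarry i, Pi.zero_apply (M := fun _ : Fin K => ℤ) i])
  obtain ⟨rfl, rfl, rfl⟩ : dx = dx' ∧ dy = dy' ∧ dz = dz' :=
    ⟨funext fun i => (hdigit i).1, funext fun i => (hdigit i).2.1, funext fun i => (hdigit i).2.2⟩
  exact ⟨rfl, rfl, rfl⟩

theorem exists_solutionFree_subset_Icc {a b c M : ℕ} {S : Finset ℤ} {θ : ℝ}
    (hS : SolutionFree a b c S) (hSM : S ⊆ Ico 0 (M : ℤ)) (hD : 1 < (a + b + c) * M)
    (hθ : 0 ≤ θ) (hcard : (((a + b + c) * M : ℕ) : ℝ) ^ θ ≤ #S) :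
    ∃ κ : ℝ, 0 < κ ∧ ∀ N : ℕ, 0 < N → ∃ A : Finset ℤ,
      A ⊆ Icc 1 (N : ℤ) ∧ κ * (N : ℝ) ^ θ ≤ #A ∧ SolutionFree a b c A := by
  set D := (a + b + c) * M with hDdef
  have habc : 0 < a + b + c := Nat.pos_of_ne_zero fun h => by simp [hDdef, h] at hD
  refine ⟨((D : ℝ) ^ θ)⁻¹, by positivity, fun N hN => ?_⟩
  set K := Nat.log D N
  set T := digitSet (fun _ : Fin K => S) D
  have hSD : S ⊆ Ico 0 (D : ℤ) :=
    hSM.trans (Ico_subset_Ico_right (by exact_mod_cast Nat.le_mul_of_pos_left M habc))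
  have hDK : D ^ K ≤ N := Nat.pow_log_le_self D hN.ne'
  have hND : N < D ^ (K + 1) := Nat.lt_pow_succ_log_self hD N
  have hTcard : #T = #S ^ K := by simp [T, card_digitSet fun _ => hSD]
  refine ⟨T.image (· + 1), fun x hx => ?_, ?_, (hS.digitSet hSM ?_).image_add_const 1⟩
  · obtain ⟨y, hy, rfl⟩ := mem_image.mp hx
    have := mem_Ico.mp (digitSet_subset_Ico (fun _ => hSD) hy)
    have : ((D ^ K : ℕ) : ℤ) ≤ N := by exact_mod_cast hDK
    push_cast at this
    exact mem_Icc.mpr ⟨by linarith, by linarith⟩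
  · rw [card_image_of_injective _ (add_left_injective 1), hTcard, inv_mul_le_iff₀ (by positivity)]
    calc (N : ℝ) ^ θ ≤ ((D ^ (K + 1) : ℕ) : ℝ) ^ θ := by gcongr
      _ = (D : ℝ) ^ θ * ((D : ℝ) ^ θ) ^ K := by
        rw [Nat.cast_pow, ← Real.rpow_pow_comm (Nat.cast_nonneg _), pow_succ']
      _ ≤ (D : ℝ) ^ θ * (#S : ℝ) ^ K := by gcongr
      _ = (D : ℝ) ^ θ * ((#S ^ K : ℕ) : ℝ) := by rw [Nat.cast_pow]
  · simp only [Nat.abs_cast]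
    push_cast [hDdef]
    nlinarith

end SolutionFree

section Primitive

variable {ι R : Type*} [Fintype ι] [CommRing R] {p : ι → R}

theorem exists_sum_mul_eq_one_of_span_eq_top (hp : Ideal.span (Set.range p) = ⊤) :
    ∃ α : ι → R, ∑ i, α i * p i = 1 :=
  Ideal.mem_span_range_iff_exists_fun.mp (hp ▸ Submodule.mem_top)

theorem ne_zero_of_span_eq_top [Nontrivial R] (hp : Ideal.span (Set.range p) = ⊤) : p ≠ 0 := by
  rintro rfl
  obtain ⟨α, hα⟩ := exists_sum_mul_eq_one_of_span_eq_top hp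
  simp at hα

theorem dvd_of_forall_dvd_mul (hp : Ideal.span (Set.range p) = ⊤) {d x : R}
    (h : ∀ i, d ∣ p i * x) : d ∣ x := by
  obtain ⟨α, hα⟩ := exists_sum_mul_eq_one_of_span_eq_top hp
  rw [← one_mul x, ← hα, sum_mul]
  exact dvd_sum fun i _ => mul_assoc (α i) (p i) x ▸ dvd_mul_of_dvd_right (h i) _

theorem exists_eq_smul_of_mul_eq_mul (hp : Ideal.span (Set.range p) = ⊤) {q : ι → R}
    (h : ∀ i j, p i * q j = p j * q i) : ∃ k : R, q = k • p := by
  obtain ⟨α, hα⟩ := exists_sum_mul_eq_one_of_span_eq_top hp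
  refine ⟨∑ i, α i * q i, funext fun j => ?_⟩
  calc q j = (∑ i, α i * p i) * q j := by rw [hα, one_mul]
    _ = ∑ i, α i * (p i * q j) := by simp only [sum_mul, mul_assoc]
    _ = (∑ i, α i * q i) * p j := by
      rw [sum_mul]; exact sum_congr rfl fun i _ => by rw [h i j]; ring

/-- A nonzero multiple of a primitive vector `p` cannot have base-`R` digits smaller than its
largest entry `|p j|`: comparing digits gives `p i δ_j = p j δ_i`, so `p j` divides every digit
`δ_j`. -/
theorem eq_zero_of_smul_eq_sum_digits {p : ι → ℤ} (hprim : Ideal.span (Set.range p) = ⊤)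
    {j : ι} (hj : ∀ i, |p i| ≤ |p j|) {R : ℤ} (hR : 2 * |p j| * (|p j| - 1) < R) {n : ℕ}
    {δ : ι → Fin n → ℤ} (hδ : ∀ i t, |δ i t| < |p j|) {k : ℤ}
    (hk : ∀ i, k * p i = ∑ t, δ i t * R ^ (t : ℕ)) :
    k = 0 := by
  have hpj : p j ≠ 0 := fun h0 => ne_zero_of_span_eq_top hprim <|
    funext fun i => abs_nonpos_iff.mp (by simpa [h0] using hj i)
  have hcross (i : ι) (t : Fin n) : p i * δ j t = p j * δ i t := by
    refine sub_eq_zero.mp (congrFun (eq_zero_of_sum_mul_pow_eq_zero (D := R)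
      (e := fun t => p i * δ j t - p j * δ i t) (fun t => ?_) ?_) t)
    · calc |p i * δ j t - p j * δ i t| ≤ |p i| * |δ j t| + |p j| * |δ i t| := by
            simpa only [abs_mul] using abs_sub (p i * δ j t) (p j * δ i t)
        _ ≤ |p j| * (|p j| - 1) + |p j| * (|p j| - 1) :=
            add_le_add (mul_le_mul (hj i) (Int.le_sub_one_of_lt (hδ j t)) (abs_nonneg _)
              (abs_nonneg _)) (mul_le_mul_of_nonneg_left (Int.le_sub_one_of_lt (hδ i t))
              (abs_nonneg _))
        _ < R := by linarith
    · calc ∑ t, (p i * δ j t - p j * δ i t) * R ^ (t : ℕ)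
          = p i * (k * p j) - p j * (k * p i) := by
            rw [hk, hk, mul_sum, mul_sum, ← sum_sub_distrib]
            exact sum_congr rfl fun t _ => by ring
        _ = 0 := by ring
  have hδj (t : Fin n) : δ j t = 0 := by
    refine Int.eq_zero_of_abs_lt_dvd ?_ (hδ j t)
    exact (abs_dvd _ _).mpr (dvd_of_forall_dvd_mul hprim fun i => ⟨δ i t, hcross i t⟩)
  have : k * p j = 0 := by simp [hk j, hδj]
  exact (mul_eq_zero.mp this).resolve_right hpj

end Primitive

section Relations

def IsRelation (a b c : ℤ) (p : Fin 3 → ℤ) : Prop :=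
  a * p 0 + b * p 1 + c * p 2 = 0

variable {a b c : ℤ}

theorem isRelation_sub {x y z x' y' z' : ℤ}
    (h : a * x + b * y + c * z = a * x' + b * y' + c * z') :
    IsRelation a b c ![x - x', y - y', z - z'] := by
  simp only [IsRelation, Matrix.cons_val]
  linarith

theorem eq_of_vec_sub_eq_zero {x y z x' y' z' : ℤ} (h : ![x - x', y - y', z - z'] = 0) :
    x = x' ∧ y = y' ∧ z = z' :=
  ⟨sub_eq_zero.mp (congrFun h 0), sub_eq_zero.mp (congrFun h 1), sub_eq_zero.mp (congrFun h 2)⟩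

theorem IsRelation.eq_zero_of_abs_le_one (ha : 0 < a) (hab : a < b) (hbc : b < c)
    (hcab : c ≠ a + b) {q : Fin 3 → ℤ} (hq : IsRelation a b c q) (h : ∀ i, |q i| ≤ 1) :
    q = 0 := by
  have hunit (i : Fin 3) : q i = -1 ∨ q i = 0 ∨ q i = 1 := by
    have := abs_le.mp (h i); omega
  unfold IsRelation at hq
  funext i
  rcases hunit 0 with h0 | h0 | h0 <;> rcases hunit 1 with h1 | h1 | h1 <;>
    rcases hunit 2 with h2 | h2 | h2 <;> rw [h0, h1, h2] at hq <;>
    fin_cases i <;> simp <;> omega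

/-- Two relations with small entries are proportional: their cross product is small and
divisible by `c`, because `b (p₀ q₁ - p₁ q₀) = c (p₂ q₀ - p₀ q₂)` and `b` is prime to `c`. -/
theorem IsRelation.exists_eq_smul (hbc : IsCoprime b c) {p q : Fin 3 → ℤ}
    (hp : IsRelation a b c p) (hq : IsRelation a b c q)
    (hprim : Ideal.span (Set.range p) = ⊤) {L m : ℤ} (hpL : ∀ i, |p i| ≤ L)
    (hqm : ∀ i, |q i| ≤ m) (hc : 2 * L * m < c) : ∃ k : ℤ, q = k • p := by
  unfold IsRelation at hp hq
  have hL : 0 ≤ L := (abs_nonneg _).trans (hpL 0)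
  have hc0 : c ≠ 0 := by nlinarith [(abs_nonneg _).trans (hqm 0)]
  have h01 : p 0 * q 1 - p 1 * q 0 = 0 := by
    refine Int.eq_zero_of_abs_lt_dvd (hbc.symm.dvd_of_dvd_mul_left
      ⟨p 2 * q 0 - p 0 * q 2, by linear_combination p 0 * hq - q 0 * hp⟩) (lt_of_le_of_lt ?_ hc)
    calc |p 0 * q 1 - p 1 * q 0| ≤ |p 0| * |q 1| + |p 1| * |q 0| := by
          simpa only [abs_mul] using abs_sub (p 0 * q 1) (p 1 * q 0)
      _ ≤ L * m + L * m := by gcongr <;> first | exact hpL _ | exact hqm _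
      _ = 2 * L * m := by ring
  have h02 : p 2 * q 0 - p 0 * q 2 = 0 :=
    (mul_eq_zero.mp (by linear_combination q 0 * hp - p 0 * hq + b * h01)).resolve_left hc0
  have h12 : p 1 * q 2 - p 2 * q 1 = 0 :=
    (mul_eq_zero.mp (by linear_combination p 1 * hq - q 1 * hp + a * h01)).resolve_left hc0
  refine exists_eq_smul_of_mul_eq_mul hprim fun i j => ?_
  fin_cases i <;> fin_cases j <;> simp <;> linarith

theorem span_range_eq_top_of_shortest {p : Fin 3 → ℤ} (hp : IsRelation a b c p) (hp0 : p ≠ 0)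
    {j : Fin 3} (hj : ∀ i, |p i| ≤ |p j|)
    (hmin : ∀ q, IsRelation a b c q → (∀ i, |q i| < |p j|) → q = 0) :
    Ideal.span (Set.range p) = ⊤ := by
  by_contra hI
  have hgI := Ideal.span_singleton_generator (Ideal.span (Set.range p))
  set g := Submodule.IsPrincipal.generator (Ideal.span (Set.range p))
  have hg (i : Fin 3) : g ∣ p i := Ideal.mem_span_singleton.mp (hgI ▸ Ideal.subset_span ⟨i, rfl⟩)
  choose p' hp' using hg
  have hg0 : g ≠ 0 := fun h => hp0 (funext fun i => by simp [hp' i, h])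
  have hg2 : 2 ≤ |g| := by
    have : ¬IsUnit g := fun hu => hI (hgI ▸ Ideal.span_singleton_eq_top.mpr hu)
    rw [Int.isUnit_iff] at this
    rcases abs_cases g with h | h <;> omega
  have hpj : 0 < |p j| := by
    by_contra! h
    exact hp0 (funext fun i => abs_nonpos_iff.mp ((hj i).trans h))
  have hp'rel : IsRelation a b c p' := by
    unfold IsRelation at hp ⊢
    rw [hp' 0, hp' 1, hp' 2] at hp
    exact (mul_eq_zero.mp (by linear_combination hp)).resolve_left hg0
  have hp'0 : p' = 0 := hmin p' hp'rel fun i => by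
    have := hj i
    rw [hp' i, abs_mul] at this
    nlinarith [abs_nonneg (p' i)]
  exact hp0 (funext fun i => by simp [hp' i, hp'0])

theorem exists_shortest_relation (ha : a ≠ 0) :
    ∃ p : Fin 3 → ℤ, IsRelation a b c p ∧ Ideal.span (Set.range p) = ⊤ ∧
      ∃ j, (∀ i, |p i| ≤ |p j|) ∧ ∀ q, IsRelation a b c q → (∀ i, |q i| < |p j|) → q = 0 := by
  set s : Set (Fin 3 → ℤ) := {q | IsRelation a b c q ∧ q ≠ 0}
  have hs : s.Nonempty := ⟨![b, -a, 0], by simp [IsRelation]; ring, fun h => ha <| by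
    simpa using congrFun h 1⟩
  let μ : (Fin 3 → ℤ) → ℕ := fun q => univ.sup fun i => (q i).natAbs
  set p := Function.argminOn μ s hs
  obtain ⟨hp, hp0⟩ : p ∈ s := Function.argminOn_mem μ s hs
  obtain ⟨j, -, hj⟩ := exists_mem_eq_sup univ univ_nonempty fun i => (p i).natAbs
  have hjmax (i : Fin 3) : |p i| ≤ |p j| := by
    rw [Int.abs_eq_natAbs, Int.abs_eq_natAbs, Nat.cast_le, ← hj]
    exact le_sup (f := fun i => (p i).natAbs) (mem_univ i)
  have hmin (q : Fin 3 → ℤ) (hq : IsRelation a b c q) (hlt : ∀ i, |q i| < |p j|) : q = 0 := by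
    by_contra hq0
    refine Function.not_lt_argminOn μ s ⟨hq, hq0⟩ ?_
    have hlt' (i : Fin 3) : (q i).natAbs < (p j).natAbs := by
      have := hlt i
      rwa [Int.abs_eq_natAbs, Int.abs_eq_natAbs, Nat.cast_lt] at this
    show (univ.sup fun i => (q i).natAbs) < univ.sup fun i => (p i).natAbs
    rw [hj, Finset.sup_lt_iff (Nat.bot_eq_zero ▸ Nat.zero_lt_of_lt (hlt' 0))]
    exact fun i _ => hlt' i
  exact ⟨p, hp, span_range_eq_top_of_shortest hp hp0 hjmax hmin, j, hjmax, hmin⟩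

theorem two_le_abs_of_isRelation (ha : 0 < a) (hab : a < b) (hbc : b < c)
    (hcab : c ≠ a + b) {p : Fin 3 → ℤ} (hp : IsRelation a b c p)
    (hprim : Ideal.span (Set.range p) = ⊤) {j : Fin 3} (hj : ∀ i, |p i| ≤ |p j|) :
    2 ≤ |p j| := by
  by_contra! h
  exact ne_zero_of_span_eq_top hprim
    (hp.eq_zero_of_abs_le_one ha hab hbc hcab fun i => by have := hj i; omega)

theorem solutionFree_Ico_of_shortest {L : ℤ}
    (hmin : ∀ q, IsRelation a b c q → (∀ i, |q i| < L) → q = 0) :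
    SolutionFree a b c (Ico 0 L) := by
  intro x y z x' y' z' hx hy hz hx' hy' hz' h
  refine eq_of_vec_sub_eq_zero (hmin _ (isRelation_sub h) fun i => ?_)
  fin_cases i
  exacts [abs_sub_lt_of_mem_Ico hx hx', abs_sub_lt_of_mem_Ico hy hy',
    abs_sub_lt_of_mem_Ico hz hz']

theorem solutionFree_of_sub_eq_sum_digits (hbc : IsCoprime b c) {p : Fin 3 → ℤ}
    (hp : IsRelation a b c p) (hprim : Ideal.span (Set.range p) = ⊤) {j : Fin 3}
    (hj : ∀ i, |p i| ≤ |p j|) {R : ℤ} (hR : 2 * |p j| * (|p j| - 1) < R) {S : Finset ℤ}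
    {M : ℤ} (hSM : S ⊆ Ico 0 M) (hc : 2 * |p j| * (M - 1) < c) {n : ℕ}
    (hdigits : ∀ x ∈ S, ∀ x' ∈ S,
      ∃ δ : Fin n → ℤ, (∀ t, |δ t| < |p j|) ∧ x - x' = ∑ t, δ t * R ^ (t : ℕ)) :
    SolutionFree a b c S := by
  intro x y z x' y' z' hx hy hz hx' hy' hz' h
  have hdiff {u u' : ℤ} (hu : u ∈ S) (hu' : u' ∈ S) : |u - u'| ≤ M - 1 :=
    Int.le_sub_one_of_lt (abs_sub_lt_of_mem_Ico (hSM hu) (hSM hu'))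
  obtain ⟨k, hk⟩ := IsRelation.exists_eq_smul hbc hp (isRelation_sub h) hprim hj (fun i => by
    fin_cases i
    exacts [hdiff hx hx', hdiff hy hy', hdiff hz hz']) hc
  obtain ⟨δx, hδx, hx⟩ := hdigits x hx x' hx'
  obtain ⟨δy, hδy, hy⟩ := hdigits y hy y' hy'
  obtain ⟨δz, hδz, hz⟩ := hdigits z hz z' hz'
  have hk0 : k = 0 := eq_zero_of_smul_eq_sum_digits hprim hj hR (δ := ![δx, δy, δz])
    (fun i => by fin_cases i <;> assumption) fun i => by
      have := congrFun hk i
      fin_cases i <;> simp at this ⊢ <;> linarith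
  rw [hk0, zero_smul] at hk
  exact eq_of_vec_sub_eq_zero hk

end Relations

section Numerics

/-- The per-digit inequality behind the exponent `4.77`: each digit multiplies the size of the
seed by `L` and its range `M` by `R`, while the base `(a + b + c) M` grows like `M²`. It is
nearly sharp at `L = 3`. -/
theorem pow_mul_pow_le_of_two_le {L : ℕ} (hL : 2 ≤ L) :
    (2 * L * (L - 1) + 1) ^ 200 * L ^ 10 ≤ L ^ 477 := by
  rcases le_or_gt L 7 with h7 | h8
  · rw [show 477 = 9 * 53 from rfl, pow_mul]
    interval_cases L <;> norm_num
  · calc (2 * L * (L - 1) + 1) ^ 200 * L ^ 10 ≤ (2 * L ^ 2) ^ 200 * L ^ 10 := by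
          gcongr
          cases L with
          | zero => omega
          | succ n => simp only [Nat.add_sub_cancel]; nlinarith
      _ = 2 ^ 200 * L ^ 410 := by ring
      _ ≤ 8 ^ 67 * L ^ 410 := Nat.mul_le_mul_right _ (by norm_num)
      _ ≤ L ^ 67 * L ^ 410 := by gcongr; omega
      _ = L ^ 477 := by ring

theorem pow_mul_pow_le_of_two_pow_thirty_le {L R : ℕ} (hRL : R ≤ 2 * L ^ 2) (hL : 2 ^ 30 ≤ L) :
    R ^ 200 * L ^ 70 ≤ L ^ 477 :=
  calc R ^ 200 * L ^ 70 ≤ (2 * L ^ 2) ^ 200 * L ^ 70 := by gcongr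
    _ = 2 ^ 200 * L ^ 470 := by ring
    _ ≤ (2 ^ 30) ^ 7 * L ^ 470 := Nat.mul_le_mul_right _ (by norm_num)
    _ ≤ L ^ 7 * L ^ 470 := by gcongr
    _ = L ^ 477 := by ring

theorem pow_le_of_full_leading_digit {L R M ℓ s : ℕ} (hkey : R ^ 200 * L ^ s ≤ L ^ 477)
    (hsurp : 16 ^ 100 * L ^ 100 ≤ L ^ (s * (ℓ + 1))) (hM : M < R ^ (ℓ + 1)) :
    16 ^ 100 * L ^ 100 * M ^ 200 ≤ (L ^ ℓ * L) ^ 477 :=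
  calc 16 ^ 100 * L ^ 100 * M ^ 200 ≤ L ^ (s * (ℓ + 1)) * (R ^ (ℓ + 1)) ^ 200 := by gcongr
    _ = (R ^ 200 * L ^ s) ^ (ℓ + 1) := by ring
    _ ≤ (L ^ 477) ^ (ℓ + 1) := by gcongr
    _ = (L ^ ℓ * L) ^ 477 := by ring

theorem pow_le_of_partial_leading_digit {L R M ℓ s t : ℕ} (hkey : R ^ 200 * L ^ s ≤ L ^ 477)
    (hsurp : 16 ^ 150 * L ^ 100 ≤ L ^ (s * ℓ) * t ^ 277) (hM : M ≤ 2 * t * R ^ ℓ) :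
    16 ^ 100 * L ^ 100 * M ^ 200 ≤ (L ^ ℓ * t) ^ 477 :=
  calc 16 ^ 100 * L ^ 100 * M ^ 200 ≤ 16 ^ 100 * L ^ 100 * (2 * t * R ^ ℓ) ^ 200 := by gcongr
    _ = 16 ^ 150 * L ^ 100 * (t ^ 200 * (R ^ 200) ^ ℓ) := by ring
    _ ≤ L ^ (s * ℓ) * t ^ 277 * (t ^ 200 * (R ^ 200) ^ ℓ) := by gcongr
    _ = (R ^ 200 * L ^ s) ^ ℓ * t ^ 477 := by ring
    _ ≤ (L ^ 477) ^ ℓ * t ^ 477 := by gcongr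
    _ = (L ^ ℓ * t) ^ 477 := by ring

theorem three_mul_mul_pow_le {c L : ℕ} (hc : (2 ^ 100) ^ 50 ≤ c) (hcL : c ^ 10 ≤ L ^ 37) :
    (3 * c * L) ^ 100 ≤ L ^ 477 := by
  have hL : 3 ^ 100 ≤ L ^ 7 := by
    by_contra! h
    have hL0 : 0 < L := by
      by_contra! h0
      have : 0 < c := lt_of_lt_of_le (by positivity) hc
      simp_all
    have := calc ((2 ^ 100) ^ 50) ^ 10 ≤ c ^ 10 := by gcongr
      _ ≤ L ^ 37 := hcL
      _ ≤ (L ^ 7) ^ 6 := by rw [← pow_mul]; exact Nat.pow_le_pow_right hL0 (by norm_num)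
      _ < (3 ^ 100) ^ 6 := by gcongr
    norm_num at this
  calc (3 * c * L) ^ 100 = 3 ^ 100 * (c ^ 10) ^ 10 * L ^ 100 := by ring
    _ ≤ L ^ 7 * (L ^ 37) ^ 10 * L ^ 100 := by gcongr
    _ = L ^ 477 := by ring

theorem two_pow_thirty_le_of_few_digits {L R M c ℓ : ℕ} (hRL : R ≤ 2 * L ^ 2)
    (hc : (2 ^ 100) ^ 50 ≤ c) (hcM : c ≤ 4 * L * M) (hMℓ : M < R ^ (ℓ + 1)) (hℓ : ℓ < 70) :
    2 ^ 30 ≤ L := by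
  by_contra! hL
  have hR : 0 < R := Nat.pos_of_ne_zero fun h => by simp [h] at hMℓ
  have := calc (2 ^ 100) ^ 50 ≤ 4 * L * M := hc.trans hcM
    _ ≤ 4 * L * R ^ 70 := by gcongr; exact hMℓ.le.trans (Nat.pow_le_pow_right hR (by omega))
    _ ≤ 4 * L * (2 * L ^ 2) ^ 70 := by gcongr
    _ = 2 ^ 72 * L ^ 141 := by ring
    _ < 2 ^ 72 * (2 ^ 30) ^ 141 := by gcongr
  norm_num at this

theorem surplus_of_single_digit {L R M c t : ℕ} (hL : 2 ^ 30 ≤ L) (hRL : R ≤ 2 * L ^ 2)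
    (hLc : L ^ 37 < c ^ 10) (hcM : c ≤ 4 * L * M) (hM : M ≤ 2 * t * R) :
    16 ^ 150 * L ^ 100 ≤ L ^ (70 * 1) * t ^ 277 := by
  have hc : c ≤ L ^ 3 * (16 * t) := calc
    c ≤ 4 * L * (2 * t * R) := hcM.trans (by gcongr)
    _ ≤ 4 * L * (2 * t * (2 * L ^ 2)) := by gcongr
    _ = L ^ 3 * (16 * t) := by ring
  have h7 : L ^ 7 < (16 * t) ^ 10 := by
    refine lt_of_mul_lt_mul_left (a := L ^ 30) ?_ (Nat.zero_le _)
    calc L ^ 30 * L ^ 7 = L ^ 37 := by ring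
      _ < c ^ 10 := hLc
      _ ≤ (L ^ 3 * (16 * t)) ^ 10 := by gcongr
      _ = L ^ 30 * (16 * t) ^ 10 := by ring
  have ht : 16 ≤ t := by
    have : (2 ^ 21) ^ 10 < (16 * t) ^ 10 :=
      calc (2 ^ 21) ^ 10 ≤ (2 ^ 30) ^ 7 := by norm_num
        _ ≤ L ^ 7 := by gcongr
        _ < (16 * t) ^ 10 := h7
    have := lt_of_pow_lt_pow_left₀ 10 (Nat.zero_le _) this
    omega
  calc 16 ^ 150 * L ^ 100 ≤ L ^ 70 * (16 ^ 150 * (L ^ 7) ^ 5) := by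
        rw [← pow_mul]
        have : L ^ 30 ≤ L ^ 35 := Nat.pow_le_pow_right (by omega) (by norm_num)
        calc 16 ^ 150 * L ^ 100 = L ^ 70 * (16 ^ 150 * L ^ 30) := by ring
          _ ≤ _ := by gcongr
    _ ≤ L ^ 70 * (16 ^ 150 * ((16 * t) ^ 10) ^ 5) := by gcongr
    _ = L ^ 70 * (16 ^ 200 * t ^ 50) := by ring
    _ ≤ L ^ 70 * (t ^ 227 * t ^ 50) := by
        refine Nat.mul_le_mul_left _ (Nat.mul_le_mul_right _ ?_)
        calc 16 ^ 200 ≤ 16 ^ 227 := Nat.pow_le_pow_right (by norm_num) (by norm_num)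
          _ ≤ t ^ 227 := Nat.pow_le_pow_left ht _
    _ = L ^ (70 * 1) * t ^ 277 := by ring

theorem pow_le_of_digit_params {L R M c ℓ t : ℕ} (hL : 2 ≤ L) (hRL : R ≤ 2 * L ^ 2)
    (hkey : R ^ 200 * L ^ 10 ≤ L ^ 477) (hc : (2 ^ 100) ^ 50 ≤ c) (hLc : L ^ 37 < c ^ 10)
    (hcM : c ≤ 4 * L * M) (hℓ : 0 < ℓ) (hMℓ : M < R ^ (ℓ + 1)) (ht0 : 0 < t)
    (ht : t = L ∨ M ≤ 2 * t * R ^ ℓ) :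
    16 ^ 100 * L ^ 100 * M ^ 200 ≤ (L ^ ℓ * t) ^ 477 := by
  have h16 : 16 ^ 100 * L ^ 100 ≤ 16 ^ 150 * L ^ 100 := by gcongr <;> norm_num
  have hpos : 0 < t ^ 277 := by positivity
  by_cases hℓ70 : 70 ≤ ℓ
  · have h700 : 16 ^ 150 * L ^ 100 ≤ L ^ (10 * ℓ) := calc
        16 ^ 150 * L ^ 100 ≤ (L ^ 4) ^ 150 * L ^ 100 := by
          gcongr; exact (Nat.pow_le_pow_left hL 4 : 2 ^ 4 ≤ L ^ 4)
        _ = (L ^ 10) ^ 70 := by ring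
        _ ≤ (L ^ 10) ^ ℓ := Nat.pow_le_pow_right (by positivity) hℓ70
        _ = L ^ (10 * ℓ) := by rw [pow_mul]
    obtain rfl | ht := ht
    · refine pow_le_of_full_leading_digit hkey ((h16.trans h700).trans ?_) hMℓ
      exact Nat.pow_le_pow_right (by omega) (by omega)
    · exact pow_le_of_partial_leading_digit hkey (h700.trans (Nat.le_mul_of_pos_right _ hpos)) ht
  · have hL30 := two_pow_thirty_le_of_few_digits hRL hc hcM hMℓ (by omega)
    have hkey' := pow_mul_pow_le_of_two_pow_thirty_le hRL hL30
    have h140 : 16 ^ 150 * L ^ 100 ≤ L ^ (70 * 2) := calc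
        16 ^ 150 * L ^ 100 ≤ (2 ^ 30) ^ 40 * L ^ 100 := Nat.mul_le_mul_right _ (by norm_num)
        _ ≤ L ^ 40 * L ^ 100 := by gcongr
        _ = L ^ (70 * 2) := by ring
    obtain rfl | ht := ht
    · refine pow_le_of_full_leading_digit hkey' ((h16.trans h140).trans ?_) hMℓ
      exact Nat.pow_le_pow_right (by omega) (by omega)
    · refine pow_le_of_partial_leading_digit hkey' ?_ ht
      obtain rfl | hℓ2 : ℓ = 1 ∨ 2 ≤ ℓ := by omega
      · exact surplus_of_single_digit hL30 hRL hLc hcM (by simpa using ht)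
      · refine (h140.trans ?_).trans (Nat.le_mul_of_pos_right _ hpos)
        exact Nat.pow_le_pow_right (by omega) (by omega)

theorem le_two_mul_div_mul {n k : ℕ} (hk : 0 < k) (hkn : k ≤ n) : n ≤ 2 * (n / k) * k := by
  have := Nat.lt_div_mul_add (a := n) hk
  have : 1 ≤ n / k := (Nat.one_le_div_iff hk).mpr hkn
  nlinarith

theorem eight_mul_pow_three_le {L c : ℕ} (hc : (2 ^ 100) ^ 50 ≤ c) (hLc : L ^ 37 < c ^ 10) :
    8 * L ^ 3 ≤ c := by
  refine (Nat.pow_le_pow_iff_left (show (37 : ℕ) ≠ 0 by norm_num)).mp ?_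
  calc (8 * L ^ 3) ^ 37 = 8 ^ 37 * (L ^ 37) ^ 3 := by ring
    _ ≤ c ^ 7 * (c ^ 10) ^ 3 := by
      refine Nat.mul_le_mul ?_ (Nat.pow_le_pow_left hLc.le 3)
      exact (le_trans (by norm_num) hc).trans (Nat.le_self_pow (show 7 ≠ 0 by norm_num) c)
    _ = c ^ 37 := by ring

theorem exists_digit_params {L R c : ℕ} (hL : 2 ≤ L) (hLR : L ≤ R) (hRL : R ≤ 2 * L ^ 2)
    (hkey : R ^ 200 * L ^ 10 ≤ L ^ 477) (hc : (2 ^ 100) ^ 50 ≤ c) (hLc : L ^ 37 < c ^ 10) :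
    ∃ ℓ t : ℕ, 0 < t ∧ t ≤ L ∧ 2 * L * (t * R ^ ℓ) ≤ c ∧
      (3 * c * (t * R ^ ℓ)) ^ 100 ≤ (L ^ ℓ * t) ^ 477 := by
  -- the seed lives in `[0, M)`, so that `IsRelation.exists_eq_smul` applies to its solutions
  set M := c / (2 * L)
  have hL8 := eight_mul_pow_three_le hc hLc
  have hRM : R ≤ M := (Nat.le_div_iff_mul_le (show 0 < 2 * L by omega)).mpr <| calc
    R * (2 * L) ≤ 2 * L ^ 2 * (2 * L) := by gcongr
    _ ≤ 8 * L ^ 3 := by ring_nf; omega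
    _ ≤ c := hL8
  have hcM : c ≤ 4 * L * M := by
    have : c ≤ 2 * M * (2 * L) :=
      le_two_mul_div_mul (show 0 < 2 * L by omega) (show 2 * L ≤ c by nlinarith)
    linarith
  have hℓ : 0 < Nat.log R M := Nat.log_pos (by omega) hRM
  have hRℓ : R ^ Nat.log R M ≤ M := Nat.pow_log_le_self R (by omega)
  set ℓ := Nat.log R M
  set t := min L (M / R ^ ℓ)
  have hRℓ0 : 0 < R ^ ℓ := pow_pos (by omega) ℓ
  have ht0 : 0 < t := lt_min (by omega) (Nat.div_pos hRℓ hRℓ0)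
  have ht : t = L ∨ M ≤ 2 * t * R ^ ℓ := by
    rcases le_total L (M / R ^ ℓ) with h | h
    · exact .inl (min_eq_left h)
    · have ht : t = M / R ^ ℓ := min_eq_right h
      exact .inr (ht ▸ le_two_mul_div_mul hRℓ0 hRℓ)
  have htM : t * R ^ ℓ ≤ M :=
    (Nat.mul_le_mul_right _ (min_le_right _ _)).trans (Nat.div_mul_le_self M _)
  refine ⟨ℓ, t, ht0, min_le_left _ _, le_trans (by gcongr) (Nat.mul_div_le c (2 * L)), ?_⟩
  calc (3 * c * (t * R ^ ℓ)) ^ 100 ≤ (3 * (4 * L * M) * M) ^ 100 := by gcongr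
    _ = 12 ^ 100 * L ^ 100 * M ^ 200 := by ring
    _ ≤ 16 ^ 100 * L ^ 100 * M ^ 200 := by gcongr; norm_num
    _ ≤ (L ^ ℓ * t) ^ 477 :=
      pow_le_of_digit_params hL hRL hkey hc hLc hcM hℓ (Nat.lt_pow_succ_log_self (by omega) M)
        ht0 ht

theorem rpow_div_le_of_pow_le {x y m n : ℕ} (hn : n ≠ 0) (h : x ^ m ≤ y ^ n) :
    (x : ℝ) ^ ((m : ℝ) / n) ≤ y := by
  refine le_of_pow_le_pow_left₀ hn (by positivity) ?_
  rw [← Real.rpow_natCast, ← Real.rpow_mul (by positivity),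
    div_mul_cancel₀ _ (by exact_mod_cast hn), Real.rpow_natCast]
  exact_mod_cast h

end Numerics

theorem exists_solutionFree_seed {a b c : ℕ} (hbc : Nat.Coprime b c) {p : Fin 3 → ℤ}
    (hp : IsRelation a b c p) (hprim : Ideal.span (Set.range p) = ⊤) {j : Fin 3}
    (hj : ∀ i, |p i| ≤ |p j|) (hmin : ∀ q, IsRelation a b c q → (∀ i, |q i| < |p j|) → q = 0)
    (hL : 2 ≤ |p j|) (hc : (2 ^ 100) ^ 50 ≤ c) :
    ∃ (M : ℕ) (S : Finset ℤ), 0 < M ∧ SolutionFree a b c S ∧ S ⊆ Ico 0 (M : ℤ) ∧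
      (3 * c * M) ^ 100 ≤ #S ^ 477 := by
  set L := (p j).natAbs
  have hpj : |p j| = L := Int.abs_eq_natAbs _
  have hL2 : 2 ≤ L := by omega
  by_cases hcL : c ^ 10 ≤ L ^ 37
  · exact ⟨L, Ico 0 (L : ℤ), by omega, solutionFree_Ico_of_shortest (hpj ▸ hmin), subset_rfl,
      by simpa using three_mul_mul_pow_le hc hcL⟩
  set R := 2 * L * (L - 1) + 1 with hRdef
  have hRz : (R : ℤ) = 2 * L * (L - 1) + 1 := by
    rw [hRdef]; push_cast [Nat.cast_sub (by omega : 1 ≤ L)]; ring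
  have hLR : L ≤ R := by zify; nlinarith
  have hRL : R ≤ 2 * L ^ 2 := by zify; nlinarith
  obtain ⟨ℓ, t, ht0, htL, htc, hcard⟩ :=
    exists_digit_params hL2 hLR hRL (pow_mul_pow_le_of_two_le hL2) hc (not_le.mp hcL)
  refine ⟨t * R ^ ℓ, truncatedDigitSet L t R ℓ, by positivity, ?_,
    truncatedDigitSet_subset_Ico hLR, by rwa [card_truncatedDigitSet htL hLR]⟩
  refine solutionFree_of_sub_eq_sum_digits (Nat.isCoprime_iff_coprime.mpr hbc) hp hprim hj
    (R := R) (by rw [hpj, hRz]; linarith) (truncatedDigitSet_subset_Ico hLR) ?_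
    fun x hx x' hx' => hpj ▸ exists_sub_eq_sum_of_mem_digitSet (truncated_digits_subset htL) hx hx'
  rw [hpj]
  have : ((2 * L * (t * R ^ ℓ) : ℕ) : ℤ) ≤ c := by exact_mod_cast htc
  push_cast at this ⊢
  linarith

end SymmetricEquation

open SymmetricEquation in
/-- There is an absolute constant `b₀` such that for all positive integers
`a < b ≤ c ≤ b^{1.01}` with `b ≥ b₀`, `gcd(b,c) = 1` and `c ≠ a + b`, there exists `κ > 0`
such that for every positive integer `N` there is a set `A ⊆ [N]` with `|A| ≥ κ·N^{1/4.77}`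
containing no non-trivial solutions to `ax + by + cz = ax' + by' + cz'`. -/
theorem statement1 :
    ∃ b₀ : ℕ, ∀ a b c : ℕ, 0 < a → a < b → b ≤ c →
      (c : ℝ) ≤ (b : ℝ) ^ (1.01 : ℝ) → b₀ ≤ b → Nat.Coprime b c → c ≠ a + b →
      ∃ κ : ℝ, 0 < κ ∧ ∀ N : ℕ, 0 < N → ∃ A : Finset ℤ,
        A ⊆ Finset.Icc 1 (N : ℤ) ∧
        κ * (N : ℝ) ^ ((1 : ℝ) / 4.77) ≤ A.card ∧
        ∀ x y z x' y' z' : ℤ, x ∈ A → y ∈ A → z ∈ A → x' ∈ A → y' ∈ A → z' ∈ A →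
          (a : ℤ) * x + (b : ℤ) * y + (c : ℤ) * z
            = (a : ℤ) * x' + (b : ℤ) * y' + (c : ℤ) * z' →
          x = x' ∧ y = y' ∧ z = z' := by
  refine ⟨(2 ^ 100) ^ 50, fun a b c ha hab hbc _ hb0 hcop hcab => ?_⟩
  have hbc' : b < c := hbc.lt_of_ne fun h => by rw [← h, Nat.coprime_self] at hcop; omega
  obtain ⟨p, hp, hprim, j, hj, hmin⟩ :=
    exists_shortest_relation (a := a) (b := b) (c := c) (by exact_mod_cast ha.ne')
  have hL := two_le_abs_of_isRelation (by exact_mod_cast ha) (by exact_mod_cast hab)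
    (by exact_mod_cast hbc') (by exact_mod_cast hcab) hp hprim hj
  obtain ⟨M, S, hM, hS, hSM, hcard⟩ :=
    exists_solutionFree_seed hcop hp hprim hj hmin hL (hb0.trans hbc)
  refine exists_solutionFree_subset_Icc hS hSM (by nlinarith) (by norm_num) ?_
  rw [show (1 : ℝ) / 4.77 = ((100 : ℕ) : ℝ) / (477 : ℕ) by norm_num]
  exact rpow_div_le_of_pow_le (by norm_num)
    ((Nat.pow_le_pow_left (Nat.mul_le_mul_right _ (by omega)) _).trans hcard)
end

section
/- Let a₁,…,a_k be integers forming a dissociated tuple (equivalently, the symmetric equation a₁x₁+⋯+a_kx_k = a₁x₁'+⋯+a_kx_k' is primitive). Let L > 1 be an integer and let A_L be a nonempty subset of {0,1,…,L−1} containing no non-trivial solutions to the equation, and suppose (|a₁|+|a₂|+⋯+|a_k|)·max(A_L) < L. Then there exists κ > 0 such that for every positive integer N there is a set A ⊆ [N] with |A| ≥ κ·N^r containing no non-trivial solutions to the equation, where r = log|A_L| / log L. -/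
/-!
Take `A` to be the numbers `1 + ∑ j < m, d j * L ^ j` with every digit `d j` in `A_L`, where
`L ^ m ≤ N < L ^ (m + 1)`. Splitting each coefficient as `aᵢ = aᵢ⁺ - aᵢ⁻` and moving the negative
parts across, a solution in `A` becomes an equality of two base-`L` expansions whose `j`-th digits
are `∑ (aᵢ⁺ xᵢⱼ + aᵢ⁻ x'ᵢⱼ)` and `∑ (aᵢ⁺ x'ᵢⱼ + aᵢ⁻ xᵢⱼ)`. Both lie in `[0, (∑ |aᵢ|) max A_L] ⊆ [0, L)`,
so no carries occur and the digits agree: each column `(xᵢⱼ), (x'ᵢⱼ)` is a solution in `A_L`,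
hence trivial. Finally `|A| = |A_L| ^ m ≥ N ^ r / L`.
-/

open Finset

section SolutionFree

variable {ι : Type*} [Fintype ι]

def SolutionFree (a : ι → ℤ) (A : Finset ℤ) : Prop :=
  ∀ x x' : ι → ℤ, (∀ i, x i ∈ A) → (∀ i, x' i ∈ A) →
    ∑ i, a i * x i = ∑ i, a i * x' i → x = x'

theorem SolutionFree.image_add_right {a : ι → ℤ} {A : Finset ℤ} (h : SolutionFree a A) (t : ℤ) :
    SolutionFree a (A.image (· + t)) := by
  intro x x' hx hx' heq
  choose y hy hyx using fun i => mem_image.1 (hx i)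
  choose y' hy' hyx' using fun i => mem_image.1 (hx' i)
  have hyy' : y = y' := h y y' hy hy' (by
    simp only [← hyx, ← hyx', mul_add, sum_add_distrib] at heq
    linarith)
  funext i
  rw [← hyx, ← hyx', hyy']

end SolutionFree

section BaseExpand

variable {L : ℤ}

def baseExpand (L : ℤ) (m : ℕ) : (Fin m → ℤ) →ₗ[ℤ] ℤ :=
  Fintype.linearCombination ℤ fun j : Fin m => L ^ (j : ℕ)

theorem baseExpand_apply {m : ℕ} (d : Fin m → ℤ) :
    baseExpand L m d = ∑ j, d j * L ^ (j : ℕ) := by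
  simp only [baseExpand, Fintype.linearCombination_apply, smul_eq_mul]

theorem baseExpand_succ {m : ℕ} (d : Fin (m + 1) → ℤ) :
    baseExpand L (m + 1) d = d 0 + L * baseExpand L m (Fin.tail d) := by
  simp only [baseExpand_apply, Fin.sum_univ_succ, Fin.val_zero, pow_zero, mul_one, Fin.val_succ,
    mul_sum, Fin.tail]
  congr 1
  exact sum_congr rfl fun j _ => by ring

theorem baseExpand_mem_Ico {m : ℕ} {d : Fin m → ℤ} (hd : ∀ j, d j ∈ Set.Ico 0 L) :
    baseExpand L m d ∈ Set.Ico 0 (L ^ m) := by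
  induction m with
  | zero => simp [baseExpand_apply]
  | succ m ih =>
    obtain ⟨htail₀, htail₁⟩ := ih (d := Fin.tail d) fun j => hd j.succ
    obtain ⟨hd₀, hd₁⟩ := hd 0
    rw [baseExpand_succ, pow_succ]
    constructor <;> nlinarith

theorem baseExpand_injOn (m : ℕ) : Set.InjOn (baseExpand L m) {d | ∀ j, d j ∈ Set.Ico 0 L} := by
  induction m with
  | zero => exact fun d _ d' _ _ => Subsingleton.elim d d'
  | succ m ih =>
    intro d hd d' hd' h
    rw [baseExpand_succ, baseExpand_succ] at h
    have hL : L ≠ 0 := by have := hd 0; exact (this.1.trans_lt this.2).ne'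
    have h₀ : d 0 = d' 0 := by
      have := congrArg (· % L) h
      simp only [Int.add_mul_emod_self_left] at this
      rwa [Int.emod_eq_of_lt (hd 0).1 (hd 0).2, Int.emod_eq_of_lt (hd' 0).1 (hd' 0).2] at this
    have htail : Fin.tail d = Fin.tail d' :=
      ih (fun j => hd j.succ) (fun j => hd' j.succ)
        (mul_left_cancel₀ hL (add_left_cancel (h₀ ▸ h)))
    funext j
    exact Fin.cases h₀ (fun j => congrFun htail j) j

end BaseExpand

section NoCarries

variable {ι : Type*} [Fintype ι]

theorem sum_posPart_mul_add_negPart_mul_mem_Icc (a : ι → ℤ) {M : ℤ} {y z : ι → ℤ}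
    (hy : ∀ i, y i ∈ Set.Icc 0 M) (hz : ∀ i, z i ∈ Set.Icc 0 M) :
    ∑ i, ((a i)⁺ * y i + (a i)⁻ * z i) ∈ Set.Icc 0 ((∑ i, |a i|) * M) := by
  constructor
  · exact sum_nonneg fun i _ => add_nonneg (mul_nonneg (posPart_nonneg _) (hy i).1)
      (mul_nonneg (negPart_nonneg _) (hz i).1)
  · rw [sum_mul]
    refine sum_le_sum fun i _ => ?_
    calc (a i)⁺ * y i + (a i)⁻ * z i ≤ (a i)⁺ * M + (a i)⁻ * M := by
          gcongr
          exacts [(hy i).2, (hz i).2]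
      _ = |a i| * M := by rw [← posPart_add_negPart, add_mul]

theorem sum_mul_apply_eq_of_sum_mul_baseExpand_eq {a : ι → ℤ} {L M : ℤ} {m : ℕ}
    (hM : (∑ i, |a i|) * M < L) {D D' : ι → Fin m → ℤ}
    (hD : ∀ i j, D i j ∈ Set.Icc 0 M) (hD' : ∀ i j, D' i j ∈ Set.Icc 0 M)
    (h : ∑ i, a i * baseExpand L m (D i) = ∑ i, a i * baseExpand L m (D' i)) (j : Fin m) :
    ∑ i, a i * D i j = ∑ i, a i * D' i j := by
  set u : Fin m → ℤ := ∑ i, ((a i)⁺ • D i + (a i)⁻ • D' i)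
  set v : Fin m → ℤ := ∑ i, ((a i)⁺ • D' i + (a i)⁻ • D i)
  have hu : ∀ j, u j = ∑ i, ((a i)⁺ * D i j + (a i)⁻ * D' i j) := by
    simp [u, Finset.sum_apply]
  have hv : ∀ j, v j = ∑ i, ((a i)⁺ * D' i j + (a i)⁻ * D i j) := by
    simp [v, Finset.sum_apply]
  have hdigits : ∀ w : Fin m → ℤ, (∀ j, w j ∈ Set.Icc 0 ((∑ i, |a i|) * M)) →
      w ∈ {d | ∀ j, d j ∈ Set.Ico 0 L} :=
    fun w hw j => ⟨(hw j).1, (hw j).2.trans_lt hM⟩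
  have huv : u = v := by
    refine baseExpand_injOn m
      (hdigits u fun j => hu j ▸ sum_posPart_mul_add_negPart_mul_mem_Icc a (hD · j) (hD' · j))
      (hdigits v fun j => hv j ▸ sum_posPart_mul_add_negPart_mul_mem_Icc a (hD' · j) (hD · j)) ?_
    have hdiff : baseExpand L m u - baseExpand L m v =
        ∑ i, a i * baseExpand L m (D i) - ∑ i, a i * baseExpand L m (D' i) := by
      simp only [u, v, map_sum, map_add, map_smul, smul_eq_mul, ← sum_sub_distrib]
      exact sum_congr rfl fun i _ => by
        linear_combination (baseExpand L m (D i) - baseExpand L m (D' i)) *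
          posPart_sub_negPart (a i)
    linarith
  have hcol := congrFun huv j
  rw [hu, hv, ← sub_eq_zero, ← sum_sub_distrib] at hcol
  rw [← sub_eq_zero, ← sum_sub_distrib, ← hcol]
  exact sum_congr rfl fun i _ => by
    linear_combination (D' i j - D i j) * posPart_sub_negPart (a i)

end NoCarries

section DigitSet

variable {L : ℤ} {B : Finset ℤ} {m : ℕ}

def digitSet (L : ℤ) (B : Finset ℤ) (m : ℕ) : Finset ℤ :=
  (Fintype.piFinset fun _ : Fin m => B).image (baseExpand L m)

theorem card_digitSet (hB : ∀ b ∈ B, b ∈ Set.Ico 0 L) : (digitSet L B m).card = B.card ^ m := by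
  rw [digitSet, card_image_of_injOn, Fintype.card_piFinset, prod_const, card_univ,
    Fintype.card_fin]
  intro d hd d' hd' h
  exact baseExpand_injOn m (fun j => hB _ (Fintype.mem_piFinset.1 hd j))
    (fun j => hB _ (Fintype.mem_piFinset.1 hd' j)) h

theorem mem_Ico_of_mem_digitSet (hB : ∀ b ∈ B, b ∈ Set.Ico 0 L) {x : ℤ}
    (hx : x ∈ digitSet L B m) : x ∈ Set.Ico 0 (L ^ m) := by
  obtain ⟨d, hd, rfl⟩ := mem_image.1 hx
  exact baseExpand_mem_Ico fun j => hB _ (Fintype.mem_piFinset.1 hd j)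

theorem solutionFree_digitSet {ι : Type*} [Fintype ι] {a : ι → ℤ} {M : ℤ}
    (hM : (∑ i, |a i|) * M < L) (hB : ∀ b ∈ B, b ∈ Set.Icc 0 M) (hfree : SolutionFree a B) :
    SolutionFree a (digitSet L B m) := by
  intro x x' hx hx' h
  choose D hD hDx using fun i => mem_image.1 (hx i)
  choose D' hD' hD'x using fun i => mem_image.1 (hx' i)
  simp only [Fintype.mem_piFinset] at hD hD'
  have hcol : ∀ j, (fun i => D i j) = fun i => D' i j := fun j =>
    hfree _ _ (fun i => hD i j) (fun i => hD' i j)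
      (sum_mul_apply_eq_of_sum_mul_baseExpand_eq hM (fun i j => hB _ (hD i j))
        (fun i j => hB _ (hD' i j)) (by simpa only [hDx, hD'x] using h) j)
  funext i
  rw [← hDx, ← hD'x]
  congr 1
  funext j
  exact congrFun (hcol j) i

end DigitSet

theorem inv_mul_rpow_logb_le_pow_log {L c N : ℕ} (hL : 1 < L) (hc : 1 ≤ c) (hcL : c ≤ L) :
    (L : ℝ)⁻¹ * (N : ℝ) ^ Real.logb L c ≤ (c : ℝ) ^ Nat.log L N := by
  set m := Nat.log L N
  have hL₁ : (1 : ℝ) < L := by exact_mod_cast hL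
  have hc₁ : (1 : ℝ) ≤ c := by exact_mod_cast hc
  have hNlt : (N : ℝ) ≤ (L : ℝ) ^ (m + 1) := by exact_mod_cast (Nat.lt_pow_succ_log_self hL N).le
  have hr : 0 ≤ Real.logb L c := Real.logb_nonneg hL₁ hc₁
  have hpow : (N : ℝ) ^ Real.logb L c ≤ c ^ m * L := calc
    (N : ℝ) ^ Real.logb L c ≤ ((L : ℝ) ^ (m + 1)) ^ Real.logb L c :=
      Real.rpow_le_rpow (Nat.cast_nonneg N) hNlt hr
    _ = (c : ℝ) ^ (m + 1) := by
      rw [← Real.rpow_pow_comm (by positivity), Real.rpow_logb (by positivity) hL₁.ne' (by positivity)]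
    _ ≤ c ^ m * L := by rw [pow_succ]; gcongr
  rw [inv_mul_le_iff₀ (by positivity), mul_comm]
  exact hpow

theorem statement2_general (k : ℕ) (a : Fin k → ℤ)
    (L : ℕ) (hL : 1 < L) (AL : Finset ℤ)
    (hALsub : AL ⊆ Finset.Icc 0 ((L : ℤ) - 1)) (hne : AL.Nonempty)
    (hmax : (∑ i, |a i|) * AL.max' hne < (L : ℤ))
    (hAL : ∀ x x' : Fin k → ℤ, (∀ i, x i ∈ AL) → (∀ i, x' i ∈ AL) →
      ∑ i, a i * x i = ∑ i, a i * x' i → x = x') :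
    ∃ κ : ℝ, 0 < κ ∧ ∀ N : ℕ, 0 < N → ∃ A : Finset ℤ,
      A ⊆ Finset.Icc 1 (N : ℤ) ∧
      κ * (N : ℝ) ^ (Real.log AL.card / Real.log L) ≤ A.card ∧
      ∀ x x' : Fin k → ℤ, (∀ i, x i ∈ A) → (∀ i, x' i ∈ A) →
        ∑ i, a i * x i = ∑ i, a i * x' i → x = x' := by
  have hdigit : ∀ b ∈ AL, b ∈ Set.Ico (0 : ℤ) L := fun b hb => by
    have := mem_Icc.1 (hALsub hb)
    exact ⟨this.1, by omega⟩
  have hbound : ∀ b ∈ AL, b ∈ Set.Icc 0 (AL.max' hne) :=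
    fun b hb => ⟨(hdigit b hb).1, AL.le_max' b hb⟩
  have hcard_le : AL.card ≤ L := by simpa using card_le_card hALsub
  refine ⟨(L : ℝ)⁻¹, by positivity, fun N hN => ?_⟩
  set m := Nat.log L N
  refine ⟨(digitSet L AL m).image (· + 1), ?_, ?_,
    (solutionFree_digitSet hmax hbound hAL).image_add_right 1⟩
  · intro x hx
    obtain ⟨y, hy, rfl⟩ := mem_image.1 hx
    have hy_lt := mem_Ico_of_mem_digitSet hdigit hy
    have hLN : (L : ℤ) ^ m ≤ N := by exact_mod_cast Nat.pow_log_le_self L hN.ne'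
    exact mem_Icc.2 ⟨by linarith [hy_lt.1], by linarith [hy_lt.2]⟩
  · rw [card_image_of_injective _ (add_left_injective 1), card_digitSet hdigit, Real.log_div_log]
    push_cast
    exact inv_mul_rpow_logb_le_pow_log hL (card_pos.2 hne) hcard_le

/-- Let `a₁,…,a_k` be a dissociated tuple of integers (all subset sums are
distinct), `L > 1` an integer, and `A_L` a nonempty subset of `{0,…,L−1}` with no non-trivial
solutions to `∑ aᵢxᵢ = ∑ aᵢxᵢ'` and `(∑|aᵢ|)·max(A_L) < L`. Then there is `κ > 0` such that
for every positive integer `N` there is `A ⊆ [N]` with `|A| ≥ κ·N^r`, `r = log|A_L|/log L`,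
containing no non-trivial solutions to the equation. -/
theorem statement2 (k : ℕ) (a : Fin k → ℤ)
    (hdiss : ∀ S T : Finset (Fin k), ∑ i ∈ S, a i = ∑ i ∈ T, a i → S = T)
    (L : ℕ) (hL : 1 < L) (AL : Finset ℤ)
    (hALsub : AL ⊆ Finset.Icc 0 ((L : ℤ) - 1)) (hne : AL.Nonempty)
    (hmax : (∑ i, |a i|) * AL.max' hne < (L : ℤ))
    (hAL : ∀ x x' : Fin k → ℤ, (∀ i, x i ∈ AL) → (∀ i, x' i ∈ AL) →
      ∑ i, a i * x i = ∑ i, a i * x' i → x = x') :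
    ∃ κ : ℝ, 0 < κ ∧ ∀ N : ℕ, 0 < N → ∃ A : Finset ℤ,
      A ⊆ Finset.Icc 1 (N : ℤ) ∧
      κ * (N : ℝ) ^ (Real.log AL.card / Real.log L) ≤ A.card ∧
      ∀ x x' : Fin k → ℤ, (∀ i, x i ∈ A) → (∀ i, x' i ∈ A) →
        ∑ i, a i * x i = ∑ i, a i * x' i → x = x' :=
  statement2_general k a L hL AL hALsub hne hmax hAL
end

section
/- Let k ≥ 2 and m ≥ 2 be integers and N ≥ 1. Then there exists a set A ⊆ [N] with |A| ≥ N^{1/k} that contains no non-trivial solutions to the equation x₁ + m·x₂ + m²·x₃ + ⋯ + m^{k−1}·x_k = x₁' + m·x₂' + m²·x₃' + ⋯ + m^{k−1}·x_k'. -/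
/-!
Let `spread m k x` be the number whose base-`m` digit in position `k * j` is the `j`-th base-`m`
digit of `x`, all other digits being zero. In `∑ i, m ^ i * spread m k (x i)` the base-`m` digit
in position `k * j + i` is the `j`-th digit of `x i`; no carries occur, so the sum determines the
tuple `x`. Moreover `spread m k x ≤ x ^ k`, so taking `A = {1 + spread m k x | x < n}` with `n` the
least integer satisfying `N ≤ n ^ k` gives `A ⊆ [N]` and `|A| = n ≥ N ^ (1 / k)`; the shift by one
only adds the constant `∑ i, m ^ i` to both sides of the equation.
-/

open Finset

namespace SpreadDigits

variable {m : ℕ} (k : ℕ)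

def spread (m k x : ℕ) : ℕ := Nat.ofDigits (m ^ k) (Nat.digits m x)

theorem spread_eq_mod_add (hm : 1 < m) (x : ℕ) :
    spread m k x = x % m + m ^ k * spread m k (x / m) := by
  rcases Nat.eq_zero_or_pos x with rfl | hx
  · simp [spread]
  · rw [spread, Nat.digits_def' hm hx, Nat.ofDigits_cons, spread]

theorem spread_injective (hm : 1 < m) (hk : k ≠ 0) : Function.Injective (spread m k) := by
  have digits_spread (x : ℕ) : Nat.digits (m ^ k) (spread m k x) = Nat.digits m x :=
    Nat.digits_ofDigits _ (Nat.one_lt_pow hk hm) _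
      (fun _ hd => (Nat.digits_lt_base hm hd).trans_le (Nat.le_self_pow hk m))
      (fun h => Nat.getLast_digit_ne_zero m (by rintro rfl; simp at h))
  intro x y hxy
  rw [← Nat.digits_inj_iff (b := m), ← digits_spread x, ← digits_spread y, hxy]

theorem spread_le_pow (hm : 1 < m) (hk : k ≠ 0) (x : ℕ) : spread m k x ≤ x ^ k := by
  induction x using Nat.strong_induction_on with
  | _ x ih =>
  rcases Nat.eq_zero_or_pos x with rfl | hx
  · simp [spread]
  calc spread m k x = x % m + m ^ k * spread m k (x / m) := spread_eq_mod_add k hm x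
    _ ≤ (x % m) ^ k + (m * (x / m)) ^ k := by
        rw [mul_pow]
        gcongr
        exacts [Nat.le_self_pow hk _, ih _ (Nat.div_lt_self hx hm)]
    _ ≤ (x % m + m * (x / m)) ^ k := pow_add_pow_le (by positivity) (by positivity) hk
    _ = x ^ k := by rw [Nat.mod_add_div]

def spreadSum (m k : ℕ) (u : Fin k → ℕ) : ℕ := ∑ i, m ^ i.val * spread m k (u i)

theorem spreadSum_eq (hm : 1 < m) (u : Fin k → ℕ) :
    spreadSum m k u =
      ∑ i, m ^ i.val * (u i % m) + m ^ k * spreadSum m k (fun i => u i / m) := by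
  simp only [spreadSum, mul_sum, ← sum_add_distrib]
  refine sum_congr rfl fun i _ => ?_
  rw [spread_eq_mod_add k hm]
  ring

theorem sum_pow_mul_eq_finFunctionFinEquiv (c : Fin k → Fin m) :
    ∑ i, m ^ i.val * (c i : ℕ) = finFunctionFinEquiv c := by
  simp only [finFunctionFinEquiv_apply, mul_comm]

theorem mod_eq_and_spreadSum_div_eq (hm : 1 < m) {u u' : Fin k → ℕ}
    (h : spreadSum m k u = spreadSum m k u') :
    (∀ i, u i % m = u' i % m) ∧
      spreadSum m k (fun i => u i / m) = spreadSum m k (fun i => u' i / m) := by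
  let r (v : Fin k → ℕ) : Fin k → Fin m := fun i => ⟨v i % m, Nat.mod_lt _ (by omega)⟩
  have hr (v : Fin k → ℕ) :
      spreadSum m k v = finFunctionFinEquiv (r v) + m ^ k * spreadSum m k (fun i => v i / m) := by
    rw [spreadSum_eq k hm, ← sum_pow_mul_eq_finFunctionFinEquiv]
  rw [hr u, hr u'] at h
  obtain ⟨hhigh, hlow⟩ := (Nat.div_mod_unique (by positivity)).2 ⟨h, (finFunctionFinEquiv _).isLt⟩
  rw [Nat.add_mul_div_left _ _ (by positivity), Nat.div_eq_of_lt (finFunctionFinEquiv _).isLt,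
    zero_add] at hhigh
  rw [Nat.add_mul_mod_self_left, Nat.mod_eq_of_lt (finFunctionFinEquiv _).isLt] at hlow
  have hres := finFunctionFinEquiv.injective (Fin.ext hlow)
  exact ⟨fun i => (congrArg Fin.val (congrFun hres i)).symm, hhigh.symm⟩

theorem eq_of_spreadSum_eq_of_lt_pow (hm : 1 < m) (b : ℕ) {u u' : Fin k → ℕ}
    (hu : ∀ i, u i < m ^ b) (hu' : ∀ i, u' i < m ^ b) (h : spreadSum m k u = spreadSum m k u') :
    u = u' := by
  induction b generalizing u u' with
  | zero =>
    funext i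
    simp_all
  | succ b ih =>
    have hdiv {v : Fin k → ℕ} (hv : ∀ i, v i < m ^ (b + 1)) (i : Fin k) : v i / m < m ^ b :=
      (Nat.div_lt_iff_lt_mul (by omega)).2 (pow_succ m b ▸ hv i)
    obtain ⟨hmod, hquot⟩ := mod_eq_and_spreadSum_div_eq k hm h
    have hq := ih (hdiv hu) (hdiv hu') hquot
    funext i
    rw [← Nat.mod_add_div (u i) m, ← Nat.mod_add_div (u' i) m, hmod i, congrFun hq i]

theorem spreadSum_injective (hm : 1 < m) : Function.Injective (spreadSum m k) := by
  intro u u' h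
  have hlt (i : Fin k) : u i + u' i < m ^ ∑ j, (u j + u' j) :=
    (single_le_sum_of_canonicallyOrdered (f := fun j => u j + u' j) (mem_univ i)).trans_lt
      (Nat.lt_pow_self hm)
  exact eq_of_spreadSum_eq_of_lt_pow k hm _ (fun i => (Nat.le_add_right _ _).trans_lt (hlt i))
    (fun i => (Nat.le_add_left _ _).trans_lt (hlt i)) h

end SpreadDigits

theorem exists_rpow_one_div_le_and_pow_lt (N k : ℕ) (hk : k ≠ 0) :
    ∃ n : ℕ, (N : ℝ) ^ ((1 : ℝ) / k) ≤ n ∧ ∀ x < n, x ^ k < N := by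
  have hex : ∃ n : ℕ, N ≤ n ^ k := ⟨N, Nat.le_self_pow hk N⟩
  refine ⟨Nat.find hex, ?_, fun x hx => not_le.1 (Nat.find_min hex hx)⟩
  calc (N : ℝ) ^ ((1 : ℝ) / k) ≤ ((Nat.find hex : ℝ) ^ k) ^ ((k : ℝ)⁻¹) := by
        rw [one_div]
        gcongr
        exact_mod_cast Nat.find_spec hex
    _ = Nat.find hex := Real.pow_rpow_inv_natCast (by positivity) hk

open SpreadDigits in
theorem statement5_general (k m N : ℕ) (hk : 2 ≤ k) (hm : 2 ≤ m) :
    ∃ A : Finset ℤ, A ⊆ Finset.Icc 1 (N : ℤ) ∧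
      (N : ℝ) ^ ((1 : ℝ) / k) ≤ A.card ∧
      ∀ x x' : Fin k → ℤ, (∀ i, x i ∈ A) → (∀ i, x' i ∈ A) →
        ∑ i, (m : ℤ) ^ i.val * x i = ∑ i, (m : ℤ) ^ i.val * x' i → x = x' := by
  have hk0 : k ≠ 0 := by omega
  obtain ⟨n, hn, hpow⟩ := exists_rpow_one_div_le_and_pow_lt N k hk0
  have hsum (u : Fin k → ℕ) : ∑ i, (m : ℤ) ^ i.val * ((1 + spread m k (u i) : ℕ) : ℤ) =
      ∑ i : Fin k, (m : ℤ) ^ i.val + spreadSum m k u := by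
    simp [spreadSum, mul_add, sum_add_distrib]
  refine ⟨(range n).image fun x => ((1 + spread m k x : ℕ) : ℤ), ?_, ?_, ?_⟩
  · simp only [subset_iff, mem_image, mem_range, mem_Icc, forall_exists_index, and_imp]
    rintro _ x hx rfl
    have hspread := spread_le_pow k hm hk0 x
    have hxN := hpow x hx
    omega
  · rwa [card_image_of_injective _ fun a b h => spread_injective k hm hk0 (by simpa using h),
      card_range]
  · intro x x' hx hx' h
    choose u _ hu using fun i => mem_image.1 (hx i)
    choose u' _ hu' using fun i => mem_image.1 (hx' i)
    obtain rfl : x = fun i => ((1 + spread m k (u i) : ℕ) : ℤ) := funext fun i => (hu i).symm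
    obtain rfl : x' = fun i => ((1 + spread m k (u' i) : ℕ) : ℤ) := funext fun i => (hu' i).symm
    rw [hsum, hsum, add_right_inj] at h
    rw [spreadSum_injective k hm (Nat.cast_injective h)]

/-- For integers `k, m ≥ 2` and `N ≥ 1` there exists `A ⊆ [N]` with
`|A| ≥ N^{1/k}` containing no non-trivial solutions to
`x₁ + m·x₂ + ⋯ + m^{k−1}·x_k = x₁' + m·x₂' + ⋯ + m^{k−1}·x_k'`. -/
theorem statement5 (k m N : ℕ) (hk : 2 ≤ k) (hm : 2 ≤ m) (hN : 1 ≤ N) :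
    ∃ A : Finset ℤ, A ⊆ Finset.Icc 1 (N : ℤ) ∧
      (N : ℝ) ^ ((1 : ℝ) / k) ≤ A.card ∧
      ∀ x x' : Fin k → ℤ, (∀ i, x i ∈ A) → (∀ i, x' i ∈ A) →
        ∑ i, (m : ℤ) ^ i.val * x i = ∑ i, (m : ℤ) ^ i.val * x' i → x = x' :=
  statement5_general k m N hk hm
end

section
/- Let a, b be coprime integers with |a| < |b| and |b| ≥ 2, and let N > 0 be an integer. Then there exists a set A ⊆ [N] with |A| ≥ N^r that contains no non-trivial solutions to the equation a·x₁ + b·x₂ = a·x₁' + b·x₂', where r = log|b| / log(1 + (|a|+|b|)(|b|−1)). Moreover, r ≥ 1/2 − 1/log|b|. -/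
/-!
Read the base-`|b|` digits of `n` in base `q = 1 + (|a| + |b|)(|b| - 1)`. For such numbers, the
difference of the two sides of `a x₁ + b x₂ = a x₁' + b x₂'` is, modulo `q`, the combination
`a e + b f` of the lowest digit differences, which is smaller than `q` in absolute value and hence
vanishes; coprimality and `|e|, |f| < |b|` then force `e = f = 0`, and peeling off the lowest
digit repeats the argument. Reinterpreting digits increases `n` to at most `n ^ (log q / log |b|)`,
so the integers `n < N ^ (log |b| / log q)` land in `[N]`. The bound on the exponent comes from
`q ≤ 2 |b|²`.
-/

open Real

def rebase (d q n : ℕ) : ℕ := Nat.ofDigits q (Nat.digits d n)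

section Rebase

variable {d q : ℕ}

lemma rebase_eq_mod_add (hd : 1 < d) (n : ℕ) :
    rebase d q n = n % d + q * rebase d q (n / d) := by
  rcases Nat.eq_zero_or_pos n with rfl | hn
  · simp [rebase]
  · rw [rebase, Nat.digits_def' hd hn, Nat.ofDigits_cons, rebase]

lemma natCast_le_rpow_of_one_le (n : ℕ) {p : ℝ} (hp : 1 ≤ p) : (n : ℝ) ≤ (n : ℝ) ^ p := by
  rcases Nat.eq_zero_or_pos n with rfl | hn
  · simp [Real.zero_rpow (by linarith : p ≠ 0)]
  · exact Real.self_le_rpow_of_one_le (by exact_mod_cast hn) hp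

lemma one_le_logb_natCast (hd : 1 < d) (hdq : d ≤ q) : 1 ≤ logb d q := by
  rw [Real.le_logb_iff_rpow_le (by exact_mod_cast hd) (by exact_mod_cast (by omega : 0 < q)),
    Real.rpow_one]
  exact_mod_cast hdq

/-- The lowest digit is absorbed by superadditivity of `x ↦ x ^ logb d q`, using
`d ^ logb d q = q`. -/
lemma rebase_le_rpow_logb (hd : 1 < d) (hdq : d ≤ q) (n : ℕ) :
    (rebase d q n : ℝ) ≤ (n : ℝ) ^ logb d q := by
  have hp := one_le_logb_natCast hd hdq
  have hdp : (d : ℝ) ^ logb d q = q :=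
    Real.rpow_logb (by positivity) (by exact_mod_cast hd.ne')
      (by exact_mod_cast (by omega : 0 < q))
  induction n using Nat.strong_induction_on with
  | _ n ih =>
    rcases Nat.eq_zero_or_pos n with rfl | hn
    · simp [rebase, Real.zero_rpow (by linarith : logb d q ≠ 0)]
    have ih_div := ih (n / d) (Nat.div_lt_self hn hd)
    calc (rebase d q n : ℝ) = (n % d : ℕ) + q * (rebase d q (n / d) : ℝ) := by
          rw [rebase_eq_mod_add hd]; push_cast; ring
      _ ≤ ((n % d : ℕ) : ℝ) ^ logb d q + (d : ℝ) ^ logb d q * ((n / d : ℕ) : ℝ) ^ logb d q := by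
          rw [hdp]; gcongr; exact natCast_le_rpow_of_one_le _ hp
      _ = ((n % d : ℕ) : ℝ) ^ logb d q + ((d : ℝ) * (n / d : ℕ)) ^ logb d q := by
          rw [Real.mul_rpow (by positivity) (by positivity)]
      _ ≤ ((n % d : ℕ) + (d : ℝ) * (n / d : ℕ)) ^ logb d q :=
          Real.add_rpow_le_rpow_add (by positivity) (by positivity) hp
      _ = (n : ℝ) ^ logb d q := by
          rw [← Nat.cast_mul, ← Nat.cast_add, Nat.mod_add_div]

lemma rebase_lt_of_lt_rpow_logb (hd : 1 < d) (hdq : d ≤ q) {n N : ℕ}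
    (hn : (n : ℝ) < (N : ℝ) ^ logb q d) : rebase d q n < N := by
  have hp : 0 < logb d q := by linarith [one_le_logb_natCast hd hdq]
  have : (rebase d q n : ℝ) < N :=
    calc (rebase d q n : ℝ) ≤ (n : ℝ) ^ logb d q := rebase_le_rpow_logb hd hdq n
      _ < ((N : ℝ) ^ logb q d) ^ logb d q := Real.rpow_lt_rpow (by positivity) hn hp
      _ = N := by rw [← Real.inv_logb, Real.rpow_inv_rpow (by positivity) hp.ne']
  exact_mod_cast this

end Rebase

section Solutions

variable {a b : ℤ}

lemma eq_zero_and_eq_zero_of_dvd_of_abs_lt (hab : IsCoprime a b) {q : ℤ}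
    (hq : (|a| + |b|) * (|b| - 1) < q) {e f : ℤ} (he : |e| < |b|) (hf : |f| < |b|)
    (hdvd : q ∣ a * e + b * f) :
    e = 0 ∧ f = 0 := by
  have hsmall : |a * e + b * f| < q :=
    calc |a * e + b * f| ≤ |a| * |e| + |b| * |f| := by
          rw [← abs_mul, ← abs_mul]; exact abs_add_le _ _
      _ ≤ |a| * (|b| - 1) + |b| * (|b| - 1) := by
          gcongr <;> linarith
      _ < q := by linarith
  have hzero : a * e + b * f = 0 := Int.eq_zero_of_abs_lt_dvd hdvd hsmall
  have he0 : e = 0 := by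
    have hbe : b ∣ a * e := ⟨-f, by linarith⟩
    exact Int.eq_zero_of_abs_lt_dvd ((abs_dvd b e).mpr (hab.symm.dvd_of_dvd_mul_left hbe)) he
  have hb0 : b ≠ 0 := abs_pos.mp (lt_of_le_of_lt (abs_nonneg e) he)
  refine ⟨he0, ?_⟩
  simpa [he0, hb0] using hzero

theorem eq_and_eq_of_rebase_eq (hab : IsCoprime a b) (hb : 1 < b.natAbs) {q : ℕ}
    (hq : (|a| + |b|) * (|b| - 1) < q) (u v u' v' : ℕ)
    (h : a * rebase b.natAbs q u + b * rebase b.natAbs q v =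
      a * rebase b.natAbs q u' + b * rebase b.natAbs q v') :
    u = u' ∧ v = v' := by
  set d := b.natAbs
  by_cases h0 : u + v + u' + v' = 0
  · omega
  rw [rebase_eq_mod_add hb u, rebase_eq_mod_add hb v, rebase_eq_mod_add hb u',
    rebase_eq_mod_add hb v'] at h
  simp only [Nat.cast_add, Nat.cast_mul] at h
  have hdigit : ∀ x y : ℕ, |((x % d : ℕ) : ℤ) - (y % d : ℕ)| < |b| := by
    intro x y
    have := Nat.mod_lt x (by omega : 0 < d)
    have := Nat.mod_lt y (by omega : 0 < d)
    rw [← Int.natCast_natAbs b, abs_sub_lt_iff]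
    omega
  obtain ⟨he, hf⟩ := eq_zero_and_eq_zero_of_dvd_of_abs_lt hab hq (hdigit u u') (hdigit v v')
    (Dvd.intro (a * (rebase d q (u' / d) - rebase d q (u / d))
      + b * (rebase d q (v' / d) - rebase d q (v / d))) (by linear_combination -h))
  have hq0 : (q : ℤ) ≠ 0 := by
    have hb1 : (1 : ℤ) < |b| := by rw [← Int.natCast_natAbs]; exact_mod_cast hb
    have : 0 ≤ (|a| + |b|) * (|b| - 1) := mul_nonneg (by positivity) (by linarith)
    omega
  have hquot : a * rebase d q (u / d) + b * rebase d q (v / d) =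
      a * rebase d q (u' / d) + b * rebase d q (v' / d) := by
    refine mul_left_cancel₀ hq0 ?_
    linear_combination h - a * he - b * hf
  obtain ⟨hu, hv⟩ := eq_and_eq_of_rebase_eq hab hb hq (u / d) (v / d) (u' / d) (v' / d) hquot
  constructor
  · rw [← Nat.div_add_mod u d, ← Nat.div_add_mod u' d, hu]; omega
  · rw [← Nat.div_add_mod v d, ← Nat.div_add_mod v' d, hv]; omega
termination_by u + v + u' + v'
decreasing_by
  have h2 : 2 ≤ b.natAbs := hb
  have := Nat.div_le_div_left (a := u) h2 two_pos
  have := Nat.div_le_div_left (a := v) h2 two_pos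
  have := Nat.div_le_div_left (a := u') h2 two_pos
  have := Nat.div_le_div_left (a := v') h2 two_pos
  omega

theorem exists_subset_Icc_rpow_le_card_of_coprime (hab : IsCoprime a b)
    (hb : 1 < b.natAbs) {q : ℕ} (hq : (|a| + |b|) * (|b| - 1) < q) (N : ℕ) :
    ∃ A : Finset ℤ, A ⊆ Finset.Icc 1 (N : ℤ) ∧
      (N : ℝ) ^ logb q b.natAbs ≤ A.card ∧
      (∀ x₁ x₂ x₁' x₂' : ℤ, x₁ ∈ A → x₂ ∈ A → x₁' ∈ A → x₂' ∈ A →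
        a * x₁ + b * x₂ = a * x₁' + b * x₂' → x₁ = x₁' ∧ x₂ = x₂') := by
  set d := b.natAbs
  have hdq : d ≤ q := by
    have hbd : |b| = d := (Int.natCast_natAbs b).symm
    have : (d : ℤ) ≤ (|a| + |b|) * (|b| - 1) := by
      rw [hbd]; nlinarith [abs_nonneg a, (by exact_mod_cast hb : (1 : ℤ) < d)]
    omega
  have hsol := eq_and_eq_of_rebase_eq hab hb hq
  refine ⟨(Finset.range ⌈(N : ℝ) ^ logb q d⌉₊).image (fun n ↦ 1 + (rebase d q n : ℤ)),
    ?_, ?_, ?_⟩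
  · intro x hx
    obtain ⟨n, hn, rfl⟩ := Finset.mem_image.mp hx
    have := rebase_lt_of_lt_rpow_logb hb hdq (Nat.lt_ceil.mp (Finset.mem_range.mp hn))
    rw [Finset.mem_Icc]
    omega
  · have hinj : Function.Injective (fun n ↦ 1 + (rebase d q n : ℤ)) := fun n n' h ↦
      (hsol n 0 n' 0 (by simp only [add_right_inj] at h; rw [h])).1
    rw [Finset.card_image_of_injective _ hinj, Finset.card_range]
    exact Nat.le_ceil _
  · simp only [Finset.mem_image]
    rintro _ _ _ _ ⟨u, -, rfl⟩ ⟨v, -, rfl⟩ ⟨u', -, rfl⟩ ⟨v', -, rfl⟩ h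
    obtain ⟨rfl, rfl⟩ := hsol u v u' v' (by linear_combination h)
    exact ⟨rfl, rfl⟩

end Solutions

lemma half_sub_inv_log_le_log_div_log {d q : ℝ} (hd : 1 < d) (hq : 1 < q) (hqd : q ≤ 2 * d ^ 2) :
    1 / 2 - 1 / log d ≤ log d / log q := by
  have hL : 0 < log d := Real.log_pos hd
  have hQ : 0 < log q := Real.log_pos hq
  have hQL : log q ≤ log 2 + 2 * log d := by
    calc log q ≤ log (2 * d ^ 2) := Real.log_le_log (by linarith) hqd
      _ = log 2 + 2 * log d := by
          rw [Real.log_mul two_ne_zero (by positivity), Real.log_pow]; norm_num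
  rw [le_div_iff₀ hQ]
  rcases le_or_gt (1 / 2 - 1 / log d) 0 with hneg | hpos
  · nlinarith
  · calc (1 / 2 - 1 / log d) * log q ≤ (1 / 2 - 1 / log d) * (log 2 + 2 * log d) := by gcongr
      _ = log d - (2 - log 2 / 2) - log 2 / log d := by field_simp; ring
      _ ≤ log d := by
          have := Real.log_two_lt_d9
          have : 0 < log 2 / log d := by positivity
          linarith

theorem statement6_general (a b : ℤ) (hco : IsCoprime a b) (h1 : |a| < |b|) (h2 : 2 ≤ |b|)
    (N : ℕ) :
    ∃ A : Finset ℤ, A ⊆ Finset.Icc 1 (N : ℤ) ∧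
      (N : ℝ) ^ (Real.log ((|b| : ℤ) : ℝ) /
          Real.log (1 + ((|a| : ℝ) + (|b| : ℝ)) * ((|b| : ℝ) - 1))) ≤ A.card ∧
      (∀ x₁ x₂ x₁' x₂' : ℤ, x₁ ∈ A → x₂ ∈ A → x₁' ∈ A → x₂' ∈ A →
        a * x₁ + b * x₂ = a * x₁' + b * x₂' → x₁ = x₁' ∧ x₂ = x₂') ∧
      (1 : ℝ) / 2 - 1 / Real.log ((|b| : ℤ) : ℝ) ≤
        Real.log ((|b| : ℤ) : ℝ) / Real.log (1 + ((|a| : ℝ) + (|b| : ℝ)) * ((|b| : ℝ) - 1)) := by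
  have hb : 1 < b.natAbs := by rw [Int.abs_eq_natAbs] at h2; omega
  set q : ℕ := 1 + (a.natAbs + b.natAbs) * (b.natAbs - 1)
  have hbR : ((b.natAbs : ℕ) : ℝ) = ((|b| : ℤ) : ℝ) := Nat.cast_natAbs b
  have hqR : (q : ℝ) = 1 + ((|a| : ℝ) + (|b| : ℝ)) * ((|b| : ℝ) - 1) := by
    push_cast [q, Nat.cast_sub hb.le, Nat.cast_natAbs]; ring
  have hq : (|a| + |b|) * (|b| - 1) < q := by
    push_cast [q, Nat.cast_sub hb.le, Int.natCast_natAbs]; omega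
  obtain ⟨A, hAN, hAcard, hAsol⟩ := exists_subset_Icc_rpow_le_card_of_coprime hco hb hq N
  have hba : |(a : ℝ)| ≤ |(b : ℝ)| - 1 := by
    have : |a| ≤ |b| - 1 := by omega
    exact_mod_cast this
  have hb2 : (2 : ℝ) ≤ |(b : ℝ)| := by exact_mod_cast h2
  refine ⟨A, hAN, by rwa [← hqR, ← hbR, Real.log_div_log], hAsol,
    half_sub_inv_log_le_log_div_log ?_ ?_ ?_⟩
  · exact_mod_cast h2
  · nlinarith [abs_nonneg (a : ℝ)]
  · push_cast
    nlinarith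

/-- Let `a, b` be coprime integers with `|a| < |b|`, `|b| ≥ 2`, and `N > 0`.
Then there is `A ⊆ [N]` with `|A| ≥ N^r`, `r = log|b| / log(1 + (|a|+|b|)(|b|−1))`,
containing no non-trivial solutions to `a·x₁ + b·x₂ = a·x₁' + b·x₂'`.
Moreover `r ≥ 1/2 − 1/log|b|`. -/
theorem statement6 (a b : ℤ) (hco : IsCoprime a b) (h1 : |a| < |b|) (h2 : 2 ≤ |b|)
    (N : ℕ) (hN : 0 < N) :
    ∃ A : Finset ℤ, A ⊆ Finset.Icc 1 (N : ℤ) ∧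
      (N : ℝ) ^ (Real.log ((|b| : ℤ) : ℝ) /
          Real.log (1 + ((|a| : ℝ) + (|b| : ℝ)) * ((|b| : ℝ) - 1))) ≤ A.card ∧
      (∀ x₁ x₂ x₁' x₂' : ℤ, x₁ ∈ A → x₂ ∈ A → x₁' ∈ A → x₂' ∈ A →
        a * x₁ + b * x₂ = a * x₁' + b * x₂' → x₁ = x₁' ∧ x₂ = x₂') ∧
      (1 : ℝ) / 2 - 1 / Real.log ((|b| : ℤ) : ℝ) ≤
        Real.log ((|b| : ℤ) : ℝ) / Real.log (1 + ((|a| : ℝ) + (|b| : ℝ)) * ((|b| : ℝ) - 1)) :=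
  statement6_general a b hco h1 h2 N
end

section
/- Let a, b be coprime integers with |a| < |b| and |b| ≥ 2, and let N > 0 be an integer. Then there exists a set A ⊆ [N] with |A| ≥ N^{log 6 / log 56} that contains no non-trivial solutions to the equation a·x₁ + b·x₂ = a·x₁' + b·x₂'. -/
/-!
Put `m = |b|` and `q = (|a| + |b|)(m - 1) + 1`, and let `A` consist of the shifts by one of the
numbers below `N` all of whose base-`q` digits are `< m`. For such digits `|a c + b c'| < q`, so
`a x₁ + b x₂ = a x₁' + b x₂'` splits digit by digit without carries, and on each digit
coprimality together with `|c₁ - c₁'| < |b|` forces equality. These numbers are the values of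
the map `φ` reading base-`m` digits in base `q`; subadditivity of `t ↦ t ^ α` gives
`φ(x) ^ α ≤ x` whenever `q ^ α ≤ m`, so at least `N ^ α` of them lie below `N`. Finally
`q ^ (log 6 / log 56) ≤ m`, with equality for `|a| = 5`, `|b| = 6`.
-/

open Finset

lemma IsCoprime.eq_zero_of_mul_add_mul_eq_zero {a b x y : ℤ} (hab : IsCoprime a b)
    (h : a * x + b * y = 0) (hx : |x| < |b|) : x = 0 ∧ y = 0 := by
  have hbx : b ∣ x := hab.symm.dvd_of_dvd_mul_left ⟨-y, by linear_combination h⟩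
  have hx0 : x = 0 := Int.eq_zero_of_abs_lt_dvd ((abs_dvd b x).2 hbx) hx
  have hb0 : b ≠ 0 := abs_pos.1 ((abs_nonneg x).trans_lt hx)
  subst hx0
  exact ⟨rfl, (by simpa using h : b = 0 ∨ y = 0).resolve_left hb0⟩

/-- Since `(|a| + |b|) D < q`, no carries occur when the last base-`q` digits are compared. -/
lemma digit_eq_of_linear_eq {a b q D c₁ c₂ c₁' c₂' z₁ z₂ z₁' z₂' : ℤ} (hab : IsCoprime a b)
    (hD : D < |b|) (hq : (|a| + |b|) * D < q)
    (hc₁ : c₁ ∈ Set.Icc 0 D) (hc₂ : c₂ ∈ Set.Icc 0 D)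
    (hc₁' : c₁' ∈ Set.Icc 0 D) (hc₂' : c₂' ∈ Set.Icc 0 D)
    (h : a * (c₁ + q * z₁) + b * (c₂ + q * z₂) = a * (c₁' + q * z₁') + b * (c₂' + q * z₂')) :
    c₁ = c₁' ∧ c₂ = c₂' ∧ a * z₁ + b * z₂ = a * z₁' + b * z₂' := by
  have hΔ₁ : |c₁ - c₁'| ≤ D :=
    abs_sub_le_iff.2 ⟨by linarith [hc₁.2, hc₁'.1], by linarith [hc₁.1, hc₁'.2]⟩
  have hΔ₂ : |c₂ - c₂'| ≤ D :=
    abs_sub_le_iff.2 ⟨by linarith [hc₂.2, hc₂'.1], by linarith [hc₂.1, hc₂'.2]⟩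
  have hdvd : q ∣ a * (c₁ - c₁') + b * (c₂ - c₂') :=
    ⟨a * (z₁' - z₁) + b * (z₂' - z₂), by linear_combination h⟩
  have hlt : |a * (c₁ - c₁') + b * (c₂ - c₂')| < q :=
    calc |a * (c₁ - c₁') + b * (c₂ - c₂')| ≤ |a| * |c₁ - c₁'| + |b| * |c₂ - c₂'| := by
          rw [← abs_mul, ← abs_mul]; exact abs_add_le _ _
      _ ≤ |a| * D + |b| * D := by gcongr
      _ < q := by linarith
  obtain ⟨hΔ₁0, hΔ₂0⟩ := hab.eq_zero_of_mul_add_mul_eq_zero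
    (Int.eq_zero_of_abs_lt_dvd hdvd hlt) (hΔ₁.trans_lt hD)
  have hq0 : q ≠ 0 := ((mul_nonneg (by positivity) (hc₁.1.trans hc₁.2)).trans_lt hq).ne'
  refine ⟨by linarith, by linarith, mul_left_cancel₀ hq0 ?_⟩
  linear_combination h - a * hΔ₁0 - b * hΔ₂0

namespace Nat

def rebase (p q x : ℕ) : ℕ := ofDigits q (digits p x)

lemma rebase_add_mul {p : ℕ} (q : ℕ) (hp : 1 < p) {c : ℕ} (hc : c < p) (v : ℕ) :
    rebase p q (c + p * v) = c + q * rebase p q v := by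
  rcases eq_or_ne c 0 with rfl | hc0
  · rcases eq_or_ne v 0 with rfl | hv0
    · simp [rebase]
    · rw [rebase, digits_add p hp 0 v hc (Or.inr hv0), ofDigits_cons, rebase]
  · rw [rebase, digits_add p hp c v hc (Or.inl hc0), ofDigits_cons, rebase]

lemma le_rebase {p q : ℕ} (hpq : p ≤ q) (x : ℕ) : x ≤ rebase p q x := by
  conv_lhs => rw [← ofDigits_digits p x]
  exact ofDigits_monotone _ hpq

lemma ofDigits_rpow_le {p q : ℕ} {α : ℝ} (hα₀ : 0 < α) (hα₁ : α ≤ 1)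
    (hqp : (q : ℝ) ^ α ≤ p) (L : List ℕ) :
    ((ofDigits q L : ℕ) : ℝ) ^ α ≤ (ofDigits p L : ℕ) := by
  induction L with
  | nil => simp [ofDigits_nil, Real.zero_rpow hα₀.ne']
  | cons c L ih =>
    have hc : (c : ℝ) ^ α ≤ c := by
      rcases c.eq_zero_or_pos with rfl | hc
      · simp [Real.zero_rpow hα₀.ne']
      · exact Real.rpow_le_self_of_one_le (by exact_mod_cast hc) hα₁
    simp only [ofDigits_cons, cast_add, cast_mul]
    calc ((c : ℝ) + q * (ofDigits q L : ℕ)) ^ α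
        ≤ (c : ℝ) ^ α + (q : ℝ) ^ α * ((ofDigits q L : ℕ) : ℝ) ^ α := by
          rw [← Real.mul_rpow (by positivity) (by positivity)]
          exact Real.rpow_add_le_add_rpow (by positivity) (by positivity) hα₀.le hα₁
      _ ≤ c + p * (ofDigits p L : ℕ) := by gcongr

lemma rebase_rpow_le {p q : ℕ} {α : ℝ} (hα₀ : 0 < α) (hα₁ : α ≤ 1)
    (hqp : (q : ℝ) ^ α ≤ p) (x : ℕ) : (rebase p q x : ℝ) ^ α ≤ x := by
  have h := ofDigits_rpow_le hα₀ hα₁ hqp (digits p x)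
  rwa [ofDigits_digits] at h

lemma rebase_eq_of_linear_eq {a b : ℤ} {p q : ℕ} (hab : IsCoprime a b) (hp : 1 < p)
    (hpb : (p : ℤ) ≤ |b|) (hq : (|a| + |b|) * ((p : ℤ) - 1) < q) {u₁ u₂ u₁' u₂' : ℕ}
    (h : a * rebase p q u₁ + b * rebase p q u₂ = a * rebase p q u₁' + b * rebase p q u₂') :
    u₁ = u₁' ∧ u₂ = u₂' := by
  induction hn : u₁ + u₂ + u₁' + u₂' using Nat.strong_induction_on
    generalizing u₁ u₂ u₁' u₂' with
  | _ n ih =>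
    rcases n.eq_zero_or_pos with rfl | hn0
    · omega
    have hsplit (u : ℕ) : rebase p q u = u % p + q * rebase p q (u / p) := by
      conv_lhs => rw [← mod_add_div u p]
      exact rebase_add_mul q hp (mod_lt u (by omega)) _
    have hdigit (u : ℕ) : ((u % p : ℕ) : ℤ) ∈ Set.Icc 0 ((p : ℤ) - 1) :=
      ⟨by positivity, by have := mod_lt u (by omega : 0 < p); omega⟩
    rw [hsplit u₁, hsplit u₂, hsplit u₁', hsplit u₂'] at h
    simp only [cast_add, cast_mul] at h
    obtain ⟨e₁, e₂, h'⟩ := digit_eq_of_linear_eq hab (by omega) hq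
      (hdigit u₁) (hdigit u₂) (hdigit u₁') (hdigit u₂') h
    have hlt : u₁ / p + u₂ / p + u₁' / p + u₂' / p < n := by
      have : p * (u₁ / p + u₂ / p + u₁' / p + u₂' / p) ≤ n := by
        simp only [mul_add]
        linarith [mul_div_le u₁ p, mul_div_le u₂ p, mul_div_le u₁' p, mul_div_le u₂' p]
      nlinarith
    obtain ⟨f₁, f₂⟩ := ih _ hlt h' rfl
    have e₁' : u₁ % p = u₁' % p := by exact_mod_cast e₁
    have e₂' : u₂ % p = u₂' % p := by exact_mod_cast e₂
    constructor
    · rw [← mod_add_div u₁ p, ← mod_add_div u₁' p, e₁', f₁]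
    · rw [← mod_add_div u₂ p, ← mod_add_div u₂' p, e₂', f₂]

end Nat

lemma rpow_le_card_filter_lt {f : ℕ → ℕ} {α : ℝ} (hα : 0 ≤ α) (hf : ∀ x, x ≤ f x)
    (hfα : ∀ x, (f x : ℝ) ^ α ≤ x) (N : ℕ) :
    (N : ℝ) ^ α ≤ #{x ∈ range N | f x < N} := by
  set S := {x ∈ range N | f x < N}
  obtain ⟨x, hx, hxS⟩ := exists_mem_notMem_of_card_lt_card (s := S) (t := range (#S + 1))
    (by simp)
  have hNx : N ≤ f x := by
    by_contra hlt
    exact hxS (mem_filter.2 ⟨mem_range.2 (by linarith [hf x]), by omega⟩)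
  calc (N : ℝ) ^ α ≤ (f x : ℝ) ^ α := by gcongr
    _ ≤ x := hfα x
    _ ≤ #S := by exact_mod_cast mem_range_succ_iff.1 hx

/-- `57 / 128` separates `log 6 / log 56` from `log m / log ((2m - 1)(m - 1) + 1)` for `m ≠ 6`;
the latter is minimal at `m = 6`, where it equals `log 6 / log 56`. -/
lemma quadratic_pow_57_le_pow_128 {m : ℕ} (hm : 2 ≤ m) (h6 : m ≠ 6) :
    ((2 * m - 1) * (m - 1) + 1) ^ 57 ≤ m ^ 128 := by
  rcases lt_or_ge m 17 with hlt | hge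
  · exact (by decide : ∀ m < 17, 2 ≤ m → m ≠ 6 → ((2 * m - 1) * (m - 1) + 1) ^ 57 ≤ m ^ 128)
      m hlt hm h6
  have hQ : (2 * m - 1) * (m - 1) + 1 ≤ 2 * m ^ 2 := by
    obtain ⟨k, rfl⟩ : ∃ k, m = k + 2 := ⟨m - 2, by omega⟩
    rw [show 2 * (k + 2) - 1 = 2 * k + 3 by omega, show k + 2 - 1 = k + 1 by omega]
    nlinarith
  calc ((2 * m - 1) * (m - 1) + 1) ^ 57 ≤ (2 * m ^ 2) ^ 57 := by gcongr
    _ = 2 ^ 57 * m ^ 114 := by ring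
    _ ≤ 17 ^ 14 * m ^ 114 := Nat.mul_le_mul_right _ (by norm_num)
    _ ≤ m ^ 14 * m ^ 114 := by gcongr
    _ = m ^ 128 := by ring

lemma rpow_log_six_div_log_fiftySix_le {m q : ℕ} (hm : 2 ≤ m) (hq : 0 < q)
    (hqm : q ≤ (2 * m - 1) * (m - 1) + 1) :
    (q : ℝ) ^ (Real.log 6 / Real.log 56) ≤ m := by
  rw [Real.log_div_log]
  rcases eq_or_ne m 6 with rfl | h6
  · calc (q : ℝ) ^ Real.logb 56 6 ≤ (56 : ℝ) ^ Real.logb 56 6 :=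
          Real.rpow_le_rpow (by positivity) (by exact_mod_cast hqm)
            (Real.logb_nonneg (by norm_num) (by norm_num))
      _ = 6 := by rw [Real.rpow_logb] <;> norm_num
      _ = ((6 : ℕ) : ℝ) := by norm_num
  have hθ : Real.logb 56 6 ≤ 57 / 128 := by
    rw [Real.logb_le_iff_le_rpow (by norm_num) (by norm_num),
      ← pow_le_pow_iff_left₀ (by norm_num) (by positivity) (by norm_num : 128 ≠ 0),
      ← Real.rpow_mul_natCast (by norm_num)]
    norm_num
  have hpow : (q : ℝ) ^ 57 ≤ (m : ℝ) ^ 128 := by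
    exact_mod_cast (pow_le_pow_left' hqm 57).trans (quadratic_pow_57_le_pow_128 hm h6)
  calc (q : ℝ) ^ Real.logb 56 6 ≤ (q : ℝ) ^ (57 / 128 : ℝ) :=
        Real.rpow_le_rpow_of_exponent_le (by exact_mod_cast hq) hθ
    _ ≤ m := by
        rw [← pow_le_pow_iff_left₀ (by positivity) (by positivity) (by norm_num : 128 ≠ 0),
          ← Real.rpow_mul_natCast (by positivity)]
        norm_num
        exact_mod_cast hpow

lemma exists_solutionFree_subset_Icc {a b : ℤ} {p q : ℕ} {α : ℝ} (hab : IsCoprime a b)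
    (hp : 1 < p) (hpb : (p : ℤ) ≤ |b|) (hq : (|a| + |b|) * ((p : ℤ) - 1) < q)
    (hα₀ : 0 < α) (hα₁ : α ≤ 1) (hqp : (q : ℝ) ^ α ≤ p) (N : ℕ) :
    ∃ A : Finset ℤ, A ⊆ Icc 1 (N : ℤ) ∧ (N : ℝ) ^ α ≤ #A ∧
      ∀ x₁ x₂ x₁' x₂' : ℤ, x₁ ∈ A → x₂ ∈ A → x₁' ∈ A → x₂' ∈ A →
        a * x₁ + b * x₂ = a * x₁' + b * x₂' → x₁ = x₁' ∧ x₂ = x₂' := by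
  have hinj (u₁ u₂ u₁' u₂' : ℕ) := Nat.rebase_eq_of_linear_eq (u₁ := u₁) (u₂ := u₂)
    (u₁' := u₁') (u₂' := u₂') hab hp hpb hq
  have hpq : p ≤ q := by
    have : (p : ℤ) ≤ q := by nlinarith [abs_nonneg a]
    exact_mod_cast this
  have hrebase_inj : Function.Injective (Nat.rebase p q) := fun u u' h =>
    (hinj u u u' u' (by rw [h])).1
  refine ⟨{u ∈ range N | Nat.rebase p q u < N}.image (fun u => (Nat.rebase p q u : ℤ) + 1),
    ?_, ?_, ?_⟩
  · intro x hx
    obtain ⟨u, hu, rfl⟩ := mem_image.1 hx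
    have := (mem_filter.1 hu).2
    rw [mem_Icc]
    omega
  · rw [card_image_of_injective _ fun u u' h => hrebase_inj (by simpa using h)]
    exact rpow_le_card_filter_lt hα₀.le (Nat.le_rebase hpq) (Nat.rebase_rpow_le hα₀ hα₁ hqp) N
  · intro x₁ x₂ x₁' x₂' hx₁ hx₂ hx₁' hx₂' h
    obtain ⟨u₁, -, rfl⟩ := mem_image.1 hx₁
    obtain ⟨u₂, -, rfl⟩ := mem_image.1 hx₂
    obtain ⟨u₁', -, rfl⟩ := mem_image.1 hx₁'
    obtain ⟨u₂', -, rfl⟩ := mem_image.1 hx₂'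
    obtain ⟨rfl, rfl⟩ := hinj u₁ u₂ u₁' u₂' (by linear_combination h)
    exact ⟨rfl, rfl⟩

theorem statement7_general (a b : ℤ) (hco : IsCoprime a b) (h1 : |a| < |b|) (h2 : 2 ≤ |b|)
    (N : ℕ) :
    ∃ A : Finset ℤ, A ⊆ Finset.Icc 1 (N : ℤ) ∧
      (N : ℝ) ^ (Real.log 6 / Real.log 56) ≤ A.card ∧
      ∀ x₁ x₂ x₁' x₂' : ℤ, x₁ ∈ A → x₂ ∈ A → x₁' ∈ A → x₂' ∈ A →
        a * x₁ + b * x₂ = a * x₁' + b * x₂' → x₁ = x₁' ∧ x₂ = x₂' := by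
  set m := b.natAbs
  set q := (a.natAbs + m) * (m - 1) + 1
  have ha : |a| = a.natAbs := Int.abs_eq_natAbs a
  have hb : |b| = m := Int.abs_eq_natAbs b
  have ham : a.natAbs < m := by rw [ha, hb] at h1; omega
  have hm : 2 ≤ m := by rw [hb] at h2; omega
  have hqZ : (q : ℤ) = (|a| + |b|) * ((m : ℤ) - 1) + 1 := by
    simp only [q, ha, hb]; push_cast [Nat.cast_sub (by omega : 1 ≤ m)]; ring
  have hθ : (q : ℝ) ^ (Real.log 6 / Real.log 56) ≤ m := rpow_log_six_div_log_fiftySix_le hm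
    (by omega) (Nat.add_le_add_right (Nat.mul_le_mul_right _ (by omega)) 1)
  exact exists_solutionFree_subset_Icc hco hm hb.ge (by rw [hqZ]; linarith) (by positivity)
    ((div_le_one (by positivity)).2 (Real.log_le_log (by norm_num) (by norm_num))) hθ N

/-- Let `a, b` be coprime integers with `|a| < |b|`, `|b| ≥ 2`, and `N > 0`.
Then there is `A ⊆ [N]` with `|A| ≥ N^{log 6/log 56}` containing no non-trivial solutions
to `a·x₁ + b·x₂ = a·x₁' + b·x₂'`. -/
theorem statement7 (a b : ℤ) (hco : IsCoprime a b) (h1 : |a| < |b|) (h2 : 2 ≤ |b|)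
    (N : ℕ) (hN : 0 < N) :
    ∃ A : Finset ℤ, A ⊆ Finset.Icc 1 (N : ℤ) ∧
      (N : ℝ) ^ (Real.log 6 / Real.log 56) ≤ A.card ∧
      ∀ x₁ x₂ x₁' x₂' : ℤ, x₁ ∈ A → x₂ ∈ A → x₁' ∈ A → x₂' ∈ A →
        a * x₁ + b * x₂ = a * x₁' + b * x₂' → x₁ = x₁' ∧ x₂ = x₂' :=
  statement7_general a b hco h1 h2 N
end

section
/- Let k, a, b ≥ 2 be integers with gcd(a,b) = 1 and a ≤ b^{k−1}, and let N ≥ 1. Then there exists a set A ⊆ [N] with |A| ≥ N^{1/k − 1/log b} that contains no non-trivial solutions to the equation a·x₁ + b·x₂ + b²·x₃ + ⋯ + b^{k−1}·x_k = a·x₁' + b·x₂' + b²·x₃' + ⋯ + b^{k−1}·x_k'. -/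
/-!
Let `σ n` be `n` with its base-`b` digits reread in base `b ^ k`, and take
`A = {1 + σ n : n < c * b ^ m}`. If `∑ wᵢ σ(nᵢ) = ∑ wᵢ σ(n'ᵢ)` for the weights
`w = (a, b, …, b ^ (k - 1))`, then modulo `b ^ k` only the last digits
`eᵢ = nᵢ % b - n'ᵢ % b` survive. As `|eᵢ| < b`, reducing modulo `b, b ^ 2, …, b ^ k` and
using `gcd(a, b) = 1` kills them one at a time; dividing by `b ^ k` then gives the same equation
for the `nᵢ / b`, so induction on the number of digits yields `n = n'`.

With `m = ⌊log_b N / k⌋` and `c ≤ b` maximal subject to `c * b ^ (k * m) ≤ N`, the set `A` lies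
in `[N]` and has `c * b ^ m ≥ N ^ (1/k)` elements up to a factor `2` lost in rounding `c` down;
that factor is absorbed by `N ^ (1 / log b) ≥ e` once `N ≥ b`.
-/

open Finset

def eqnCoeff {k : ℕ} (a b : ℤ) (i : Fin k) : ℤ := if i.val = 0 then a else b ^ i.val

theorem eqnCoeff_zero {k : ℕ} (a b : ℤ) : eqnCoeff a b (0 : Fin (k + 1)) = a := rfl

theorem eqnCoeff_succ {k : ℕ} (a b : ℤ) (i : Fin k) :
    eqnCoeff a b i.succ = b * eqnCoeff 1 b i := by
  unfold eqnCoeff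
  split_ifs with hi <;> simp_all [pow_succ']

theorem eq_zero_of_pow_dvd_sum_eqnCoeff_mul {a b : ℤ} (hab : IsCoprime a b) {k : ℕ}
    (e : Fin k → ℤ) (he : ∀ i, |e i| < b) (h : b ^ k ∣ ∑ i, eqnCoeff a b i * e i) : e = 0 := by
  induction k generalizing a with
  | zero => exact Subsingleton.elim _ _
  | succ k ih =>
    have hb : 0 < b := (abs_nonneg _).trans_lt (he 0)
    simp only [Fin.sum_univ_succ, eqnCoeff_zero, eqnCoeff_succ, mul_assoc, ← mul_sum] at h
    have h0 : e 0 = 0 := by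
      refine Int.eq_zero_of_abs_lt_dvd (hab.symm.dvd_of_dvd_mul_left ?_) (he 0)
      exact (dvd_add_left (dvd_mul_right b _)).mp ((dvd_pow_self b k.succ_ne_zero).trans h)
    rw [h0, mul_zero, zero_add, pow_succ', mul_dvd_mul_iff_left hb.ne'] at h
    have htail := ih isCoprime_one_left (fun i => e i.succ) (fun i => he _) h
    ext i
    exact Fin.cases h0 (congrFun htail) i

def spreadDigits (b k n : ℕ) : ℕ := Nat.ofDigits (b ^ k) (Nat.digits b n)

namespace spreadDigits

variable {b : ℕ} (k : ℕ)

theorem eq_mod_add (hb : 1 < b) (n : ℕ) :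
    spreadDigits b k n = n % b + b ^ k * spreadDigits b k (n / b) := by
  rcases Nat.eq_zero_or_pos n with rfl | hn
  · simp [spreadDigits]
  · rw [spreadDigits, Nat.digits_def' hb hn, Nat.ofDigits_cons]; rfl

theorem digits_pow (hb : 1 < b) (hk : k ≠ 0) (n : ℕ) :
    Nat.digits (b ^ k) (spreadDigits b k n) = Nat.digits b n := by
  refine Nat.digits_ofDigits _ (Nat.one_lt_pow hk hb) _
    (fun d hd => (Nat.digits_lt_base hb hd).trans_le (Nat.le_self_pow hk b)) fun hne => ?_
  have hn : n ≠ 0 := by rintro rfl; simp at hne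
  exact Nat.getLast_digit_ne_zero b hn

theorem injective (hb : 1 < b) (hk : k ≠ 0) : Function.Injective (spreadDigits b k) :=
  fun m n h => Nat.digits_inj_iff.mp <| by rw [← digits_pow k hb hk, h, digits_pow k hb hk]

theorem lt_mul_pow (hb : 1 < b) (hk : k ≠ 0) {c : ℕ} (hc : c ≤ b) (m : ℕ) {n : ℕ}
    (hn : n < c * b ^ m) : spreadDigits b k n < c * b ^ (k * m) := by
  induction m generalizing n with
  | zero =>
    simp only [mul_zero, pow_zero, mul_one] at hn ⊢
    have hnb : n < b := hn.trans_le hc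
    rwa [eq_mod_add k hb n, Nat.mod_eq_of_lt hnb, Nat.div_eq_of_lt hnb, spreadDigits,
      Nat.digits_zero, Nat.ofDigits_nil, mul_zero, add_zero]
  | succ m ih =>
    have hdiv : n / b < c * b ^ m := by
      rw [Nat.div_lt_iff_lt_mul (by omega)]; rwa [pow_succ, ← mul_assoc] at hn
    have hmod : n % b < b ^ k := (Nat.mod_lt n (by omega)).trans_le (Nat.le_self_pow hk b)
    calc spreadDigits b k n = n % b + b ^ k * spreadDigits b k (n / b) := eq_mod_add k hb n
      _ < b ^ k * (1 + spreadDigits b k (n / b)) := by rw [mul_add, mul_one]; omega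
      _ ≤ b ^ k * (c * b ^ (k * m)) := Nat.mul_le_mul_left _ (by have := ih hdiv; omega)
      _ = c * b ^ (k * (m + 1)) := by ring

theorem sum_mul {ι : Type*} [Fintype ι] (hb : 1 < b) (w : ι → ℤ) (n : ι → ℕ) :
    ∑ i, w i * spreadDigits b k (n i) =
      ∑ i, w i * (n i % b : ℕ) + (b : ℤ) ^ k * ∑ i, w i * spreadDigits b k (n i / b) := by
  simp only [eq_mod_add k hb (n _), mul_sum]
  push_cast
  rw [← sum_add_distrib]
  exact sum_congr rfl fun i _ => by ring

theorem mod_eq_of_sum_eqnCoeff_mul_eq {a : ℤ} (hb : 1 < b)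
    (hab : IsCoprime a b) {n n' : Fin k → ℕ}
    (h : ∑ i, eqnCoeff a b i * spreadDigits b k (n i) =
      ∑ i, eqnCoeff a b i * spreadDigits b k (n' i)) (i : Fin k) :
    n i % b = n' i % b := by
  rw [sum_mul k hb _ n, sum_mul k hb _ n'] at h
  have hdigits : (fun i => ((n i % b : ℕ) : ℤ) - (n' i % b : ℕ)) = 0 := by
    refine eq_zero_of_pow_dvd_sum_eqnCoeff_mul hab _ (fun i => ?_)
      ⟨∑ i, eqnCoeff a b i * spreadDigits b k (n' i / b) -
        ∑ i, eqnCoeff a b i * spreadDigits b k (n i / b), ?_⟩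
    · have hr : n i % b < b := Nat.mod_lt _ (by omega)
      have hr' : n' i % b < b := Nat.mod_lt _ (by omega)
      exact abs_sub_lt_of_nonneg_of_lt (by positivity) (by exact_mod_cast hr)
        (by positivity) (by exact_mod_cast hr')
    · simp only [mul_sub, sum_sub_distrib]
      linear_combination h
  exact_mod_cast sub_eq_zero.mp (congrFun hdigits i)

theorem eq_of_sum_eqnCoeff_mul_eq_of_lt_pow {a : ℤ} (hb : 1 < b)
    (hab : IsCoprime a b) (t : ℕ) {n n' : Fin k → ℕ} (hn : ∀ i, n i < b ^ t)
    (hn' : ∀ i, n' i < b ^ t)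
    (h : ∑ i, eqnCoeff a b i * spreadDigits b k (n i) =
      ∑ i, eqnCoeff a b i * spreadDigits b k (n' i)) :
    n = n' := by
  induction t generalizing n n' with
  | zero =>
    ext i
    have := hn i; have := hn' i
    simp_all
  | succ t ih =>
    have hmod := mod_eq_of_sum_eqnCoeff_mul_eq k hb hab h
    rw [sum_mul k hb _ n, sum_mul k hb _ n'] at h
    simp only [hmod] at h
    have hbk : (b : ℤ) ^ k ≠ 0 := pow_ne_zero _ (by exact_mod_cast (by omega : b ≠ 0))
    have hdiv : (fun i => n i / b) = fun i => n' i / b := by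
      refine ih (fun i => ?_) (fun i => ?_) (mul_left_cancel₀ hbk (add_left_cancel h))
      · exact Nat.div_lt_of_lt_mul (by rw [mul_comm, ← pow_succ]; exact hn i)
      · exact Nat.div_lt_of_lt_mul (by rw [mul_comm, ← pow_succ]; exact hn' i)
    ext i
    rw [← Nat.div_add_mod (n i) b, ← Nat.div_add_mod (n' i) b, congrFun hdiv i, hmod i]

theorem injective_sum_eqnCoeff_mul {a : ℤ} (hb : 1 < b)
    (hab : IsCoprime a b) :
    Function.Injective fun n : Fin k → ℕ => ∑ i, eqnCoeff a b i * spreadDigits b k (n i) := by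
  intro n n' h
  have hbound : ∀ i, n i + n' i < b ^ ∑ j, (n j + n' j) := fun i =>
    (single_le_sum (f := fun j => n j + n' j) (fun j _ => Nat.zero_le _) (mem_univ i)).trans_lt
      (Nat.lt_pow_self hb)
  exact eq_of_sum_eqnCoeff_mul_eq_of_lt_pow k hb hab (∑ j, (n j + n' j))
    (fun i => by have := hbound i; omega) (fun i => by have := hbound i; omega) h

end spreadDigits

theorem Real.rpow_one_div_le_of_le_pow {x y : ℝ} {k : ℕ} (hx : 0 ≤ x) (hy : 0 ≤ y) (hk : k ≠ 0)
    (h : x ≤ y ^ k) : x ^ ((1 : ℝ) / k) ≤ y := by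
  rw [one_div, Real.rpow_inv_le_iff_of_pos hx hy (by positivity), Real.rpow_natCast]
  exact h

theorem Real.two_le_rpow_one_div_log {b x : ℝ} (hb : 1 < b) (hbx : b ≤ x) :
    2 ≤ x ^ (1 / Real.log b) := by
  have hlogb : 0 < Real.log b := Real.log_pos hb
  have hlog : 1 ≤ Real.log x * (1 / Real.log b) := by
    rw [mul_one_div, one_le_div hlogb]
    exact Real.log_le_log (by linarith) hbx
  rw [Real.rpow_def_of_pos (by linarith)]
  linarith [Real.add_one_le_exp (Real.log x * (1 / Real.log b))]

theorem exists_mul_pow_le_and_rpow_le {b k N : ℕ} (hb : 1 < b) (hk : k ≠ 0) (hN : 1 ≤ N) :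
    ∃ c m : ℕ, c ≤ b ∧ c * b ^ (k * m) ≤ N ∧
      (N : ℝ) ^ ((1 : ℝ) / k - 1 / Real.log b) ≤ c * b ^ m := by
  have hNR : (1 : ℝ) ≤ N := by exact_mod_cast hN
  have hexp : (1 : ℝ) / k - 1 / Real.log b ≤ 1 / k := by
    have := Real.log_pos (by exact_mod_cast hb : (1 : ℝ) < b)
    linarith [one_div_pos.mpr this]
  rcases lt_or_ge N b with hNb | hbN
  · refine ⟨N, 0, hNb.le, by simp, ?_⟩
    calc (N : ℝ) ^ ((1 : ℝ) / k - 1 / Real.log b) ≤ (N : ℝ) ^ (1 : ℝ) := by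
          refine Real.rpow_le_rpow_of_exponent_le hNR (hexp.trans ?_)
          exact div_le_one_of_le₀ (by exact_mod_cast Nat.one_le_iff_ne_zero.mpr hk) (by positivity)
      _ = N * b ^ 0 := by simp
  set m := Nat.log b N / k
  have hlow : b ^ (k * m) ≤ N :=
    (Nat.pow_le_pow_right (by omega) (Nat.mul_div_le _ _)).trans (Nat.pow_log_le_self b (by omega))
  have hhigh : N < (b ^ (m + 1)) ^ k := by
    rw [← pow_mul]
    exact (Nat.lt_pow_succ_log_self hb N).trans_le
      (Nat.pow_le_pow_right (by omega) (by rw [mul_comm]; exact Nat.lt_mul_div_succ _ (by omega)))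
  by_cases hbm : b * b ^ (k * m) ≤ N
  · refine ⟨b, m, le_rfl, hbm, ?_⟩
    calc (N : ℝ) ^ ((1 : ℝ) / k - 1 / Real.log b) ≤ (N : ℝ) ^ ((1 : ℝ) / k) :=
          Real.rpow_le_rpow_of_exponent_le hNR hexp
      _ ≤ b * b ^ m := by
          refine Real.rpow_one_div_le_of_le_pow (by positivity) (by positivity) hk ?_
          rw [← pow_succ']; exact_mod_cast hhigh.le
  have hpos : 0 < b ^ (k * m) := by positivity
  set c := N / b ^ (k * m)
  have hcb : c < b := (Nat.div_lt_iff_lt_mul hpos).mpr (by omega)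
  have hc1 : 1 ≤ c := (Nat.one_le_div_iff hpos).mpr hlow
  refine ⟨c, m, hcb.le, Nat.div_mul_le_self _ _, ?_⟩
  have hN2 : N ≤ (2 * c * b ^ m) ^ k :=
    calc N ≤ (c + 1) * b ^ (k * m) := by rw [add_one_mul]; exact (Nat.lt_div_mul_add hpos).le
      _ ≤ (2 * c) ^ k * (b ^ m) ^ k := by
          rw [← pow_mul, mul_comm m k]
          exact Nat.mul_le_mul_right _ ((by omega : c + 1 ≤ 2 * c).trans (Nat.le_self_pow hk _))
      _ = (2 * c * b ^ m) ^ k := (mul_pow _ _ _).symm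
  calc (N : ℝ) ^ ((1 : ℝ) / k - 1 / Real.log b)
        = (N : ℝ) ^ ((1 : ℝ) / k) / (N : ℝ) ^ (1 / Real.log b) := Real.rpow_sub (by positivity) _ _
    _ ≤ 2 * c * b ^ m / 2 := by
        refine div_le_div₀ (by positivity) ?_ two_pos
          (Real.two_le_rpow_one_div_log (by exact_mod_cast hb) (by exact_mod_cast hbN))
        exact Real.rpow_one_div_le_of_le_pow (by positivity) (by positivity) hk
          (by exact_mod_cast hN2)
    _ = c * b ^ m := by ring

theorem statement8_general (k a b : ℕ) (hk : 2 ≤ k) (hb : 2 ≤ b)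
    (hco : Nat.Coprime a b) (N : ℕ) (hN : 1 ≤ N) :
    ∃ A : Finset ℤ, A ⊆ Finset.Icc 1 (N : ℤ) ∧
      (N : ℝ) ^ ((1 : ℝ) / k - 1 / Real.log b) ≤ A.card ∧
      ∀ x x' : Fin k → ℤ, (∀ i, x i ∈ A) → (∀ i, x' i ∈ A) →
        (∑ i, (if i.val = 0 then (a : ℤ) else (b : ℤ) ^ i.val) * x i) =
          (∑ i, (if i.val = 0 then (a : ℤ) else (b : ℤ) ^ i.val) * x' i) → x = x' := by
  obtain ⟨c, m, hcb, hcN, hcard⟩ := exists_mul_pow_le_and_rpow_le (k := k) hb (by omega) hN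
  have hinj : Function.Injective fun n => (1 + spreadDigits b k n : ℤ) := fun n n' h =>
    spreadDigits.injective k hb (by omega) (by simpa using h)
  refine ⟨(range (c * b ^ m)).image fun n => (1 + spreadDigits b k n : ℤ), ?_, ?_, ?_⟩
  · intro z hz
    obtain ⟨n, hn, rfl⟩ := mem_image.mp hz
    have hlt := spreadDigits.lt_mul_pow k hb (by omega) hcb m (mem_range.mp hn)
    rw [mem_Icc]
    constructor <;> omega
  · rw [card_image_of_injective _ hinj, card_range]
    exact_mod_cast hcard
  · intro x x' hx hx' h
    choose n _ hxn using fun i => mem_image.mp (hx i)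
    choose n' _ hxn' using fun i => mem_image.mp (hx' i)
    change ∑ i, eqnCoeff (a : ℤ) b i * x i = ∑ i, eqnCoeff (a : ℤ) b i * x' i at h
    simp only [← hxn, ← hxn', mul_add, mul_one, sum_add_distrib, add_right_inj] at h
    have hnn := spreadDigits.injective_sum_eqnCoeff_mul k hb
      (Nat.isCoprime_iff_coprime.mpr hco) h
    ext i
    rw [← hxn, ← hxn', hnn]

/-- Let `k, a, b ≥ 2` be integers with `gcd(a,b) = 1` and `a ≤ b^{k−1}`, and
`N ≥ 1`. Then there is `A ⊆ [N]` with `|A| ≥ N^{1/k − 1/log b}` containing no non-trivial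
solutions to `a·x₁ + b·x₂ + ⋯ + b^{k−1}·x_k = a·x₁' + b·x₂' + ⋯ + b^{k−1}·x_k'`. -/
theorem statement8 (k a b : ℕ) (hk : 2 ≤ k) (ha : 2 ≤ a) (hb : 2 ≤ b)
    (hco : Nat.Coprime a b) (hab : a ≤ b ^ (k - 1)) (N : ℕ) (hN : 1 ≤ N) :
    ∃ A : Finset ℤ, A ⊆ Finset.Icc 1 (N : ℤ) ∧
      (N : ℝ) ^ ((1 : ℝ) / k - 1 / Real.log b) ≤ A.card ∧
      ∀ x x' : Fin k → ℤ, (∀ i, x i ∈ A) → (∀ i, x' i ∈ A) →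
        (∑ i, (if i.val = 0 then (a : ℤ) else (b : ℤ) ^ i.val) * x i) =
          (∑ i, (if i.val = 0 then (a : ℤ) else (b : ℤ) ^ i.val) * x' i) → x = x' :=
  statement8_general k a b hk hb hco N hN
end

section
/- Let k ≥ 2 be an integer, ε > 0, and let C be an integer with C ≥ (ε^{−1}·2^k)^{1/(εk)}. Then there are at least (1−ε)·C^k tuples (a₁, a₂, …, a_k) ∈ {1,…,C}^k for which the map (i₁,…,i_k) ↦ i₁a₁ + i₂a₂ + ⋯ + i_ka_k is injective on the set of integer tuples (i₁,…,i_k) with 1 ≤ i_j ≤ C^{1/k−ε} for all j. -/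
/-!
If `i ↦ ∑ i_j a_j` is not injective on the box `[1, M]^k`, then `a` satisfies a nontrivial
linear relation `∑ d_j a_j = 0` with `|d_j| < M`. There are fewer than `(2M)^k` such `d`, and
each relation has at most `C^(k-1)` solutions in `[1, C]^k`, as a solution is determined by all
but one of its coordinates. With `M ≤ C^(1/k - ε)`, the number of bad tuples is at most
`2^k C^(k - εk)`, which the hypothesis on `C` makes at most `ε C^k`.
-/

open Finset

section
variable {ι : Type*} [Fintype ι] [DecidableEq ι]

lemma card_filter_sum_mul_eq_zero_le (s : ι → Finset ℕ) {d : ι → ℤ} {j₀ : ι}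
    (hd : d j₀ ≠ 0) :
    #{a ∈ Fintype.piFinset s | ∑ j, d j * (a j : ℤ) = 0} ≤ ∏ j ∈ univ.erase j₀, #(s j) := by
  have htarget : #(Fintype.piFinset (Function.update s j₀ {0})) = ∏ j ∈ univ.erase j₀, #(s j) := by
    rw [Fintype.card_piFinset, ← prod_erase_mul univ _ (mem_univ j₀)]
    simp only [Function.update_self, card_singleton, mul_one]
    exact prod_congr rfl fun j hj => by rw [Function.update_of_ne (ne_of_mem_erase hj)]
  rw [← htarget]
  refine card_le_card_of_injOn (Function.update · j₀ 0) (fun a ha => ?_) fun a ha b hb hab => ?_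
  · simp only [coe_filter, Fintype.mem_piFinset, Set.mem_ofPred_eq] at ha
    rw [mem_coe, Fintype.mem_piFinset]
    intro j
    rcases eq_or_ne j j₀ with rfl | hj
    · simp
    · simpa [Function.update_of_ne hj] using ha.1 j
  · simp only [coe_filter, Fintype.mem_piFinset, Set.mem_ofPred_eq] at ha hb
    have hoff : ∀ j ≠ j₀, a j = b j := fun j hj => by
      simpa [Function.update_of_ne hj] using congrFun hab j
    have hdiff : ∑ j, d j * ((a j : ℤ) - b j) = 0 := by
      simp only [mul_sub, sum_sub_distrib, ha.2, hb.2, sub_zero]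
    rw [sum_eq_single j₀ (fun j _ hj => by rw [hoff j hj, sub_self, mul_zero])
      (by simp)] at hdiff
    have hj₀ : a j₀ = b j₀ := by
      exact_mod_cast sub_eq_zero.mp ((mul_eq_zero.mp hdiff).resolve_left hd)
    funext j
    rcases eq_or_ne j j₀ with rfl | hj
    · exact hj₀
    · exact hoff j hj

open Classical in
lemma card_filter_not_injOn_le (C M : ℕ) :
    #{a ∈ Fintype.piFinset fun _ : ι => Icc 1 C |
        ¬ Set.InjOn (fun x : ι → ℤ => ∑ j, x j * (a j : ℤ))
          (Set.univ.pi fun _ => Set.Icc 1 (M : ℤ))} ≤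
      (2 * M) ^ Fintype.card ι * C ^ (Fintype.card ι - 1) := by
  set D := Fintype.piFinset fun _ : ι => Icc (1 - M : ℤ) (M - 1)
  set A := Fintype.piFinset fun _ : ι => Icc 1 C
  have hcover : {a ∈ A | ¬ Set.InjOn (fun x : ι → ℤ => ∑ j, x j * (a j : ℤ))
        (Set.univ.pi fun _ => Set.Icc 1 (M : ℤ))} ⊆
      (D.erase 0).biUnion fun d => {a ∈ A | ∑ j, d j * (a j : ℤ) = 0} := by
    intro a ha
    simp only [mem_filter, Set.InjOn, not_forall] at ha
    obtain ⟨haA, x, hx, y, hy, hxy, hne⟩ := ha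
    simp only [Set.mem_univ_pi, Set.mem_Icc] at hx hy
    refine mem_biUnion.mpr
      ⟨x - y, mem_erase.mpr ⟨sub_ne_zero.mpr hne, ?_⟩, mem_filter.mpr ⟨haA, ?_⟩⟩
    · simp only [D, Fintype.mem_piFinset, mem_Icc, Pi.sub_apply]
      intro j
      have hxj := hx j
      have hyj := hy j
      omega
    · simp only [Pi.sub_apply, sub_mul, sum_sub_distrib, hxy, sub_self]
  calc _ ≤ #((D.erase 0).biUnion fun d => {a ∈ A | ∑ j, d j * (a j : ℤ) = 0}) :=
        card_le_card hcover
    _ ≤ ∑ d ∈ D.erase 0, #{a ∈ A | ∑ j, d j * (a j : ℤ) = 0} := card_biUnion_le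
    _ ≤ ∑ _d ∈ D.erase 0, C ^ (Fintype.card ι - 1) := sum_le_sum fun d hd => by
        obtain ⟨j₀, hj₀⟩ := Function.ne_iff.mp (ne_of_mem_erase hd)
        refine (card_filter_sum_mul_eq_zero_le _ hj₀).trans_eq ?_
        rw [prod_const, card_erase_of_mem (mem_univ _), card_univ, Nat.card_Icc,
          Nat.add_sub_cancel]
    _ ≤ #D * C ^ (Fintype.card ι - 1) := by
        rw [sum_const, smul_eq_mul]
        exact Nat.mul_le_mul_right _ (card_le_card (erase_subset _ _))
    _ ≤ (2 * M) ^ Fintype.card ι * C ^ (Fintype.card ι - 1) := by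
        rw [Fintype.card_piFinset, prod_const, card_univ, Int.card_Icc]
        gcongr
        omega
end

open Real in
lemma two_mul_pow_mul_pow_pred_le {k : ℕ} (hk : 1 ≤ k) {ε C M : ℝ} (hε : 0 < ε)
    (hC : (ε⁻¹ * 2 ^ k) ^ (1 / (ε * k)) ≤ C) (hM₀ : 0 ≤ M) (hM : M ≤ C ^ (1 / k - ε)) :
    (2 * M) ^ k * C ^ (k - 1) ≤ ε * C ^ k := by
  have hk₀ : (0 : ℝ) < k := by exact_mod_cast hk
  have hC₀ : 0 < C := (rpow_pos_of_pos (by positivity) _).trans_le hC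
  have h2k : (2 : ℝ) ^ k ≤ ε * C ^ (ε * k) := by
    have h := rpow_le_rpow (by positivity) hC (by positivity : 0 ≤ ε * k)
    rw [← rpow_mul (by positivity), one_div_mul_cancel (by positivity), rpow_one] at h
    calc (2 : ℝ) ^ k = ε * (ε⁻¹ * 2 ^ k) := by field_simp
      _ ≤ ε * C ^ (ε * k) := by gcongr
  calc (2 * M) ^ k * C ^ (k - 1) ≤ 2 ^ k * (C ^ (1 / k - ε)) ^ k * C ^ (k - 1) := by
        rw [mul_pow]; gcongr
    _ = 2 ^ k * C ^ ((k : ℝ) - ε * k) := by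
        rw [← rpow_natCast (C ^ _), ← rpow_mul hC₀.le, ← rpow_natCast C, mul_assoc, ← rpow_add hC₀]
        congr 2
        push_cast [hk]
        field_simp
        ring
    _ ≤ ε * C ^ (ε * k) * C ^ ((k : ℝ) - ε * k) := by gcongr
    _ = ε * C ^ k := by rw [mul_assoc, ← rpow_add hC₀, add_sub_cancel, rpow_natCast]

/-- Let `k ≥ 2`, `ε > 0`, and `C` an integer with `C ≥ (ε⁻¹·2^k)^{1/(εk)}`.
Then there are at least `(1−ε)·C^k` tuples `(a₁,…,a_k) ∈ {1,…,C}^k` for which the map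
`(i₁,…,i_k) ↦ i₁a₁ + ⋯ + i_ka_k` is injective on integer tuples with `1 ≤ i_j ≤ C^{1/k−ε}`. -/
theorem statement12 (k : ℕ) (hk : 2 ≤ k) (ε : ℝ) (hε : 0 < ε) (C : ℕ)
    (hC : (ε⁻¹ * 2 ^ k) ^ (1 / (ε * k)) ≤ (C : ℝ)) :
    (1 - ε) * (C : ℝ) ^ k ≤
      (Set.ncard {a : Fin k → ℕ |
        (∀ i, a i ∈ Finset.Icc 1 C) ∧
        ∀ x y : Fin k → ℤ,
          (∀ j, 1 ≤ x j ∧ (x j : ℝ) ≤ (C : ℝ) ^ ((1 : ℝ) / k - ε)) →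
          (∀ j, 1 ≤ y j ∧ (y j : ℝ) ≤ (C : ℝ) ^ ((1 : ℝ) / k - ε)) →
          ∑ j, x j * (a j : ℤ) = ∑ j, y j * (a j : ℤ) → x = y} : ℝ) := by
  classical
  set r := (C : ℝ) ^ ((1 : ℝ) / k - ε)
  have hr₀ : 0 ≤ r := by positivity
  have hbox : ∀ z : ℤ, (1 ≤ z ∧ (z : ℝ) ≤ r) ↔ z ∈ Set.Icc 1 (⌊r⌋₊ : ℤ) := fun z => by
    rw [Set.mem_Icc, Int.natCast_floor_eq_floor hr₀, Int.le_floor]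
  set A := Fintype.piFinset fun _ : Fin k => Icc 1 C
  set isInj := fun a : Fin k → ℕ => Set.InjOn (fun x : Fin k → ℤ => ∑ j, x j * (a j : ℤ))
    (Set.univ.pi fun _ => Set.Icc 1 (⌊r⌋₊ : ℤ))
  have hsplit : #{a ∈ A | isInj a} + #{a ∈ A | ¬ isInj a} = C ^ k := by
    simp [card_filter_add_card_filter_not, A]
  have hbad := card_filter_not_injOn_le (ι := Fin k) C ⌊r⌋₊
  have hest :=
    two_mul_pow_mul_pow_pred_le (by omega) hε hC (Nat.cast_nonneg ⌊r⌋₊) (Nat.floor_le hr₀)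
  calc (1 - ε) * (C : ℝ) ^ k ≤ #{a ∈ A | isInj a} := by
        rw [Fintype.card_fin] at hbad
        have hbadR : (#{a ∈ A | ¬ isInj a} : ℝ) ≤ ε * C ^ k :=
          le_trans (by exact_mod_cast hbad) hest
        have hsplitR : (#{a ∈ A | isInj a} : ℝ) + #{a ∈ A | ¬ isInj a} = C ^ k := by
          exact_mod_cast hsplit
        linarith
    _ = _ := by
        rw [← Set.ncard_coe_finset]
        congr 2
        ext a
        simp only [A, isInj, coe_filter, Fintype.mem_piFinset, Set.InjOn, Set.mem_univ_pi,
          ← hbox, Set.mem_ofPred_eq]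
        exact and_congr_right' ⟨fun h x y hx hy => h hx hy, fun h x hx y hy => h x y hx hy⟩
end

section
/- Let a, b, c be integers and L ≥ 1 an integer. Suppose (i₁, j₁, k₁) is an integer solution of the equation i·a + j·b + k·c = 0 with 1 ≤ |i₁| < |j₁|, and suppose that every integer solution (i,j,k) ∈ {−L,…,L}³ of i·a + j·b + k·c = 0 is a rational multiple of (i₁, j₁, k₁). Then there exists a set A ⊆ [L] with |A| ≥ L^{0.44} such that the only triple (i,j,k) ∈ (A−A)³ with i·a + j·b + k·c = 0 is (0,0,0). Moreover, if |j₁|/gcd(|i₁|,|j₁|) > e^{1000}, then A can be chosen with |A| ≥ L^{0.499}. -/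
/-!
Write `p / q` for `|j₁| / |i₁|` in lowest terms. By hypothesis a solution with entries in
`A − A`, `A ⊆ [L]`, is a rational multiple of `(i₁, j₁, k₁)`, so its first two entries are `q f`
and `± p f` for an integer `f`; it therefore suffices that `A` avoids the ratio `p : q`, i.e. that
no `f ≠ 0` has both `p f` and `q f` in `A − A`.

The interval `[0, p)` avoids the ratio, and so does `S + M·T` whenever `S` and `T` do and
`M > (p + q) · max S`: writing `p f = σ + M d` and `q f = τ + M d'` with `σ, τ ∈ S − S` and
`d, d' ∈ T − T`, there is no carry, so `q σ = p τ` and `q d = p d'`, and coprimality makes both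
pairs multiples of `(p, q)`. Iterating with `S = [0, p)` and `M = (p + q)(p − 1) + 1 ≤ 2p²` gives
sets of size about `L ^ (log p / log M)`. The exponent is at least `0.499` once `p ≥ 2 ^ 499`,
and at least `0.44` for every `p ≥ 2`, where for `p ≤ 8` explicit small sets cover the lengths
below which the recursion is not yet efficient.
-/

open Finset Pointwise

def AvoidsRatio (p q : ℕ) (A : Finset ℤ) : Prop :=
  ∀ f : ℤ, (p : ℤ) * f ∈ A - A → (q : ℤ) * f ∈ A - A → f = 0

section DifferenceSet

variable {A : Finset ℤ}

lemma neg_mem_sub_self {x : ℤ} (h : x ∈ A - A) : -x ∈ A - A := by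
  obtain ⟨u, hu, v, hv, rfl⟩ := mem_sub.mp h
  exact mem_sub.mpr ⟨v, hv, u, hu, by ring⟩

lemma natAbs_mul_mem_sub_self {n f : ℤ} (h : n * f ∈ A - A) : (n.natAbs : ℤ) * f ∈ A - A := by
  rcases Int.natAbs_eq n with hn | hn
  · rwa [← hn]
  · have := neg_mem_sub_self h
    rwa [hn, neg_mul, neg_neg] at this

lemma abs_le_of_mem_sub_self {w x : ℤ} (hA : A ⊆ Icc 0 w) (hx : x ∈ A - A) : |x| ≤ w := by
  obtain ⟨u, hu, v, hv, rfl⟩ := mem_sub.mp hx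
  have hu' := mem_Icc.mp (hA hu)
  have hv' := mem_Icc.mp (hA hv)
  rw [abs_le]
  constructor <;> linarith

lemma add_singleton_sub_add_singleton (c : ℤ) : (A + {c}) - (A + {c}) = A - A := by
  rw [add_sub_add_comm, singleton_sub_singleton, sub_self, singleton_zero, add_zero]

end DifferenceSet

lemma IsCoprime.exists_eq_mul_of_mul_eq_mul {p q x y : ℤ} (hpq : IsCoprime p q) (hp : p ≠ 0)
    (h : q * x = p * y) : ∃ g, x = p * g ∧ y = q * g := by
  obtain ⟨g, rfl⟩ := hpq.dvd_of_dvd_mul_left ⟨y, h⟩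
  exact ⟨g, rfl, mul_left_cancel₀ hp (by linear_combination -h)⟩

/-- The set `S + M·T`, written out because `M • T` on `Finset ℤ` denotes an iterated sumset. -/
def digitJoin (M : ℤ) (S T : Finset ℤ) : Finset ℤ :=
  image₂ (fun s t => s + M * t) S T

section DigitJoin

variable {M w : ℤ} {S T : Finset ℤ}

lemma mem_digitJoin {x : ℤ} : x ∈ digitJoin M S T ↔ ∃ s ∈ S, ∃ t ∈ T, s + M * t = x :=
  mem_image₂

lemma digitJoin_subset_Icc {N : ℤ} (hS : S ⊆ Icc 0 w) (hT : T ⊆ Icc 0 N) (hM : 0 ≤ M) :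
    digitJoin M S T ⊆ Icc 0 (w + M * N) := by
  intro x hx
  obtain ⟨s, hs, t, ht, rfl⟩ := mem_digitJoin.mp hx
  have hs' := mem_Icc.mp (hS hs)
  have ht' := mem_Icc.mp (hT ht)
  have : M * t ≤ M * N := mul_le_mul_of_nonneg_left ht'.2 hM
  exact mem_Icc.mpr ⟨by nlinarith, by linarith⟩

lemma card_digitJoin (hS : S ⊆ Icc 0 w) (hM : w < M) : #(digitJoin M S T) = #S * #T := by
  refine card_image₂_iff.mpr ?_
  rintro ⟨s, t⟩ ⟨hs, ht⟩ ⟨s', t'⟩ ⟨hs', ht'⟩ h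
  simp only at h
  have hM0 : M ≠ 0 := by
    have := mem_Icc.mp (hS hs)
    omega
  have hss' : s - s' = 0 := Int.eq_zero_of_abs_lt_dvd ⟨t' - t, by linear_combination h⟩
    ((abs_le_of_mem_sub_self hS (sub_mem_sub hs hs')).trans_lt hM)
  have htt' : t = t' := mul_left_cancel₀ hM0 (by linear_combination h - hss')
  rw [Prod.mk.injEq]
  exact ⟨by omega, htt'⟩

lemma exists_eq_of_mem_digitJoin_sub {x : ℤ} (hx : x ∈ digitJoin M S T - digitJoin M S T) :
    ∃ σ ∈ S - S, ∃ d ∈ T - T, x = σ + M * d := by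
  obtain ⟨y, hy, z, hz, rfl⟩ := mem_sub.mp hx
  obtain ⟨s, hs, t, ht, rfl⟩ := mem_digitJoin.mp hy
  obtain ⟨s', hs', t', ht', rfl⟩ := mem_digitJoin.mp hz
  exact ⟨s - s', sub_mem_sub hs hs', t - t', sub_mem_sub ht ht', by ring⟩

end DigitJoin

namespace AvoidsRatio

variable {p q : ℕ} {A S T : Finset ℤ}

lemma of_Icc_zero {u : ℤ} (hu : u < p) : AvoidsRatio p q (Icc 0 u) := by
  intro f hpf _
  by_contra hf
  have hle := abs_le_of_mem_sub_self subset_rfl hpf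
  rw [abs_mul, Nat.abs_cast] at hle
  have : (p : ℤ) * 1 ≤ p * |f| := mul_le_mul_of_nonneg_left (Int.one_le_abs hf) (by positivity)
  omega

lemma of_forall_mem_Icc {w : ℤ} (hq : 1 ≤ q) (hA : A ⊆ Icc 0 w)
    (h : ∀ f ∈ Icc 1 w, ¬((p : ℤ) * f ∈ A - A ∧ (q : ℤ) * f ∈ A - A)) : AvoidsRatio p q A := by
  have hpos : ∀ f : ℤ, 0 < f → (p : ℤ) * f ∈ A - A → (q : ℤ) * f ∈ A - A → False := by
    intro f hf hpf hqf
    have hle := abs_le_of_mem_sub_self hA hqf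
    have : 1 * f ≤ q * f := mul_le_mul_of_nonneg_right (by exact_mod_cast hq) hf.le
    rw [abs_of_pos (by positivity)] at hle
    exact h f (mem_Icc.mpr ⟨hf, by linarith⟩) ⟨hpf, hqf⟩
  intro f hpf hqf
  rcases lt_trichotomy f 0 with hf | hf | hf
  · refine (hpos (-f) (by omega) ?_ ?_).elim <;> rw [mul_neg] <;> exact neg_mem_sub_self ‹_›
  · exact hf
  · exact (hpos f hf hpf hqf).elim

lemma add_singleton (h : AvoidsRatio p q A) (c : ℤ) : AvoidsRatio p q (A + {c}) := by
  simpa only [AvoidsRatio, add_singleton_sub_add_singleton] using h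

lemma digitJoin {M w : ℤ} (hpq : IsCoprime (p : ℤ) q) (hp : p ≠ 0) (hS : S ⊆ Icc 0 w)
    (hM : (p + q) * w < M) (hSa : AvoidsRatio p q S) (hTa : AvoidsRatio p q T) :
    AvoidsRatio p q (digitJoin M S T) := by
  have hp' : (p : ℤ) ≠ 0 := by exact_mod_cast hp
  intro f hpf hqf
  obtain ⟨σ, hσ, d, hd, hpf⟩ := exists_eq_of_mem_digitJoin_sub hpf
  obtain ⟨τ, hτ, d', hd', hqf⟩ := exists_eq_of_mem_digitJoin_sub hqf
  have hlow : (q : ℤ) * σ = p * τ := by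
    have hbound : |(q : ℤ) * σ - p * τ| < M := by
      have hσ' := abs_le_of_mem_sub_self hS hσ
      have hτ' := abs_le_of_mem_sub_self hS hτ
      calc |(q : ℤ) * σ - p * τ| ≤ q * |σ| + p * |τ| := by
            simpa [abs_mul] using abs_sub (q * σ : ℤ) (p * τ)
        _ ≤ q * w + p * w := by gcongr
        _ < M := by linarith
    have := Int.eq_zero_of_abs_lt_dvd ⟨p * d' - q * d, by linear_combination -q * hpf + p * hqf⟩
      hbound
    linarith
  have hM0 : M ≠ 0 := by
    have hw : 0 ≤ w := (abs_nonneg σ).trans (abs_le_of_mem_sub_self hS hσ)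
    exact ((mul_nonneg (by positivity) hw).trans_lt hM).ne'
  obtain ⟨g, rfl, rfl⟩ := hpq.exists_eq_mul_of_mul_eq_mul hp' hlow
  obtain rfl := hSa g hσ hτ
  have hhigh : (q : ℤ) * d = p * d' :=
    mul_left_cancel₀ hM0 (by linear_combination -q * hpf + p * hqf)
  obtain ⟨h, rfl, rfl⟩ := hpq.exists_eq_mul_of_mul_eq_mul hp' hhigh
  obtain rfl := hTa h hd hd'
  simpa [hp] using hpf

end AvoidsRatio

def digitBase (p q : ℕ) : ℕ := (p + q) * (p - 1) + 1

def HasLargeAvoidingSet (p q a b L : ℕ) : Prop :=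
  ∃ A : Finset ℤ, AvoidsRatio p q A ∧ A ⊆ Icc 0 ((L : ℤ) - 1) ∧ L ^ a ≤ #A ^ b

/-- The inequality under which one step `L ↦ ⌊(L - p) / B⌋ + 1`, `B = digitBase p q`, of the digit
recursion, which multiplies the size by `p`, preserves `|A| ≥ L ^ (a / b)`. -/
def RecursionEfficient (p q a b L : ℕ) : Prop :=
  p ≤ L ∧ digitBase p q ^ a * L ^ a ≤ p ^ b * (L + 1 - p) ^ a

section Construction

variable {p q a b : ℕ}

lemma digitBase_cast (hp : 1 ≤ p) : (digitBase p q : ℤ) = (p + q) * (p - 1) + 1 := by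
  rw [digitBase, Nat.cast_add, Nat.cast_mul, Nat.cast_sub hp]
  push_cast
  ring

lemma card_Icc_zero_sub_one (u : ℕ) : #(Icc (0 : ℤ) (u - 1)) = u := by
  simp

lemma hasLargeAvoidingSet_of_pow_le {L : ℕ} (hab : a ≤ b) (hL : 1 ≤ L) (h : L ^ a ≤ p ^ b) :
    HasLargeAvoidingSet p q a b L := by
  refine ⟨Icc 0 ((min L p : ℕ) - 1), AvoidsRatio.of_Icc_zero (by omega),
    Icc_subset_Icc le_rfl (by omega), ?_⟩
  rw [card_Icc_zero_sub_one]
  rcases min_cases L p with ⟨hmin, -⟩ | ⟨hmin, -⟩ <;> rw [hmin]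
  · exact Nat.pow_le_pow_right hL hab
  · exact h

lemma RecursionEfficient.mono {L₀ L : ℕ} (hp : 1 ≤ p) (h : RecursionEfficient p q a b L₀)
    (hL : L₀ ≤ L) : RecursionEfficient p q a b L := by
  obtain ⟨hpL₀, h₀⟩ := h
  refine ⟨hpL₀.trans hL, ?_⟩
  have hcross : (L₀ + 1 - p) * L ≤ (L + 1 - p) * L₀ := by
    zify [(by omega : p ≤ L₀ + 1), (by omega : p ≤ L + 1)]
    have hL' : (L₀ : ℤ) ≤ L := by exact_mod_cast hL
    have hp' : (1 : ℤ) ≤ p := by exact_mod_cast hp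
    nlinarith
  refine Nat.le_of_mul_le_mul_right ?_ (pow_pos (by omega : 0 < L₀) a)
  calc digitBase p q ^ a * L ^ a * L₀ ^ a = digitBase p q ^ a * L₀ ^ a * L ^ a := by ring
    _ ≤ p ^ b * (L₀ + 1 - p) ^ a * L ^ a := Nat.mul_le_mul_right _ h₀
    _ = p ^ b * ((L₀ + 1 - p) * L) ^ a := by rw [mul_pow]; ring
    _ ≤ p ^ b * ((L + 1 - p) * L₀) ^ a := by gcongr
    _ = p ^ b * (L + 1 - p) ^ a * L₀ ^ a := by rw [mul_pow]; ring

theorem hasLargeAvoidingSet_of_recursionEfficient (hp : 2 ≤ p) (hpq : Nat.Coprime p q) {L₀ : ℕ}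
    (h₀ : RecursionEfficient p q a b L₀)
    (hsmall : ∀ L, 1 ≤ L → L < L₀ → HasLargeAvoidingSet p q a b L) :
    ∀ L, 1 ≤ L → HasLargeAvoidingSet p q a b L := by
  intro L
  induction L using Nat.strong_induction_on with
  | _ L IH =>
  intro hL
  rcases lt_or_ge L L₀ with hL₀ | hL₀
  · exact hsmall L hL hL₀
  obtain ⟨hpL, hstep⟩ := h₀.mono (by omega) hL₀
  set B := digitBase p q
  have hBZ : (B : ℤ) = (p + q) * (p - 1) + 1 := digitBase_cast (by omega)
  have hB : 0 < B := Nat.succ_pos _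
  obtain ⟨t, ht⟩ : ∃ t, t = (L - p) / B := ⟨_, rfl⟩
  have htL : B * t + p ≤ L := by
    have := Nat.mul_div_le (L - p) B
    rw [← ht] at this
    omega
  have hLt : L + 1 - p ≤ B * (t + 1) := by
    have := Nat.lt_mul_div_succ (L - p) hB
    rw [← ht] at this
    omega
  have htB : t ≤ B * t := Nat.le_mul_of_pos_left t hB
  obtain ⟨A, hA, hAsub, hAcard⟩ := IH (t + 1) (by omega) (by omega)
  refine ⟨digitJoin B (Icc 0 ((p : ℕ) - 1)) A,
    (AvoidsRatio.of_Icc_zero (by omega)).digitJoin (Nat.isCoprime_iff_coprime.mpr hpq)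
      (by omega) subset_rfl (by rw [hBZ]; linarith) hA, ?_, ?_⟩
  · refine (digitJoin_subset_Icc subset_rfl hAsub (by positivity)).trans
      (Icc_subset_Icc le_rfl ?_)
    have : ((B * t + p : ℕ) : ℤ) ≤ L := by exact_mod_cast htL
    push_cast at this ⊢
    linarith
  · have hpB : ((p : ℕ) : ℤ) - 1 < B := by rw [hBZ]; nlinarith
    rw [card_digitJoin subset_rfl hpB, card_Icc_zero_sub_one, mul_pow]
    have hL' : L ^ a ≤ p ^ b * (t + 1) ^ a := by
      refine Nat.le_of_mul_le_mul_left ?_ (pow_pos hB a)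
      calc B ^ a * L ^ a ≤ p ^ b * (L + 1 - p) ^ a := hstep
        _ ≤ p ^ b * (B * (t + 1)) ^ a := by gcongr
        _ = B ^ a * (p ^ b * (t + 1) ^ a) := by rw [mul_pow]; ring
    exact hL'.trans (Nat.mul_le_mul_left _ hAcard)

theorem hasLargeAvoidingSet_of_pow_le_pow (hab : a ≤ b) (hp : 2 ≤ p) (hpq : Nat.Coprime p q)
    (h : (digitBase p q + p - 1) ^ a ≤ p ^ b) : ∀ L, 1 ≤ L → HasLargeAvoidingSet p q a b L := by
  set B := digitBase p q
  refine hasLargeAvoidingSet_of_recursionEfficient hp hpq (L₀ := B + p) ⟨by omega, ?_⟩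
    fun L hL hLB => hasLargeAvoidingSet_of_pow_le hab hL
      ((Nat.pow_le_pow_left (show L ≤ B + p - 1 by omega) a).trans h)
  have hB : B * (B + p) ≤ (B + p - 1) * (B + 1) := by
    zify [(by omega : 1 ≤ B + p)]
    nlinarith
  rw [show B + p + 1 - p = B + 1 by omega, ← mul_pow]
  calc (B * (B + p)) ^ a ≤ ((B + p - 1) * (B + 1)) ^ a := by gcongr
    _ = (B + p - 1) ^ a * (B + 1) ^ a := mul_pow _ _ _
    _ ≤ p ^ b * (B + 1) ^ a := by gcongr

lemma digitBase_add_sub_one_le (hqp : q < p) : digitBase p q + p - 1 ≤ 2 * p ^ 2 := by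
  zify [(by omega : 1 ≤ digitBase p q + p)]
  rw [digitBase_cast (by omega)]
  have hq : (q : ℤ) ≤ p - 1 := by omega
  nlinarith

theorem hasLargeAvoidingSet_of_two_pow_le (hab : a ≤ b) (hp : 2 ≤ p) (hqp : q < p)
    (hpq : Nat.Coprime p q) (h : 2 ^ a * p ^ (2 * a) ≤ p ^ b) :
    ∀ L, 1 ≤ L → HasLargeAvoidingSet p q a b L :=
  hasLargeAvoidingSet_of_pow_le_pow hab hp hpq <| calc
    (digitBase p q + p - 1) ^ a ≤ (2 * p ^ 2) ^ a :=
        Nat.pow_le_pow_left (digitBase_add_sub_one_le hqp) a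
    _ = 2 ^ a * p ^ (2 * a) := by rw [mul_pow, ← pow_mul]
    _ ≤ p ^ b := h

/-- Lengths up to `L₁`, `L₂` and `L₃` are covered by `[0, p)`, by `S` and by the two-digit set
`[0, p) + B·{0, 1}` respectively; beyond `L₃` the recursion is efficient. -/
theorem hasLargeAvoidingSet_of_witness (hab : a ≤ b) (hq : 1 ≤ q) (hp : 2 ≤ p)
    (hpq : Nat.Coprime p q) {S : Finset ℤ} {w L₁ L₂ L₃ : ℕ} (hSw : S ⊆ Icc 0 (w : ℤ))
    (hS : ∀ f ∈ Icc 1 (w : ℤ), ¬((p : ℤ) * f ∈ S - S ∧ (q : ℤ) * f ∈ S - S))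
    (hwL₁ : w ≤ L₁) (h₁ : L₁ ^ a ≤ p ^ b) (h₂ : L₂ ^ a ≤ #S ^ b)
    (hBL₂ : digitBase p q + p ≤ L₂ + 1) (h₃ : L₃ ^ a ≤ (2 * p) ^ b)
    (h₀ : RecursionEfficient p q a b (L₃ + 1)) :
    ∀ L, 1 ≤ L → HasLargeAvoidingSet p q a b L := by
  refine hasLargeAvoidingSet_of_recursionEfficient hp hpq h₀ fun L hL hL₃ => ?_
  rcases le_or_gt L L₁ with hL₁ | hL₁
  · exact hasLargeAvoidingSet_of_pow_le hab hL ((Nat.pow_le_pow_left hL₁ a).trans h₁)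
  rcases le_or_gt L L₂ with hL₂ | hL₂
  · exact ⟨S, .of_forall_mem_Icc hq hSw hS, hSw.trans (Icc_subset_Icc le_rfl (by omega)),
      (Nat.pow_le_pow_left hL₂ a).trans h₂⟩
  set B := digitBase p q
  have hBZ : (B : ℤ) = (p + q) * (p - 1) + 1 := digitBase_cast (by omega)
  have hpB : ((p : ℕ) : ℤ) - 1 < B := by rw [hBZ]; nlinarith
  refine ⟨digitJoin B (Icc 0 ((p : ℕ) - 1)) (Icc 0 1),
    (AvoidsRatio.of_Icc_zero (by omega)).digitJoin (Nat.isCoprime_iff_coprime.mpr hpq)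
      (by omega) subset_rfl (by rw [hBZ]; linarith) (.of_Icc_zero (by omega)), ?_, ?_⟩
  · refine (digitJoin_subset_Icc subset_rfl subset_rfl (by positivity)).trans
      (Icc_subset_Icc le_rfl ?_)
    have hBL : B + p ≤ L := by omega
    have : ((B + p : ℕ) : ℤ) ≤ L := by exact_mod_cast hBL
    push_cast at this
    linarith
  · rw [card_digitJoin subset_rfl hpB, card_Icc_zero_sub_one, Int.card_Icc]
    exact (Nat.pow_le_pow_left (show L ≤ L₃ by omega) a).trans (by simpa [mul_comm] using h₃)

lemma hasLargeAvoidingSet_pred_of_le_eight (hp : 2 ≤ p) (hp8 : p ≤ 8) :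
    ∀ L, 1 ≤ L → HasLargeAvoidingSet p (p - 1) 11 25 L := by
  interval_cases p <;> [
    apply hasLargeAvoidingSet_of_witness (S := {0, 1, 4}) (w := 4) (L₁ := 4) (L₂ := 5) (L₃ := 5);
    apply hasLargeAvoidingSet_of_witness (S := {0, 1, 2, 11}) (w := 11) (L₁ := 12) (L₂ := 21)
      (L₃ := 21);
    apply hasLargeAvoidingSet_of_witness (S := {0, 1, 2, 3, 11}) (w := 11) (L₁ := 23) (L₂ := 38)
      (L₃ := 51);
    apply hasLargeAvoidingSet_of_witness (S := {0, 1, 2, 3, 4, 17}) (w := 17) (L₁ := 38)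
      (L₂ := 58) (L₃ := 87);
    apply hasLargeAvoidingSet_of_witness (S := {0, 1, 2, 3, 4, 5, 16}) (w := 16) (L₁ := 58)
      (L₂ := 83) (L₃ := 109);
    apply hasLargeAvoidingSet_of_witness (S := {0, 1, 2, 3, 4, 5, 6, 19}) (w := 19) (L₁ := 83)
      (L₂ := 112) (L₃ := 116);
    apply hasLargeAvoidingSet_of_witness (S := {0, 1, 2, 3, 4, 5, 6, 7, 22}) (w := 22) (L₁ := 112)
      (L₂ := 115) (L₃ := 115)] <;>
  first | decide | norm_num [RecursionEfficient, digitBase]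

theorem hasLargeAvoidingSet_11_25 (hq : 1 ≤ q) (hqp : q < p)
    (hpq : Nat.Coprime p q) : ∀ L, 1 ≤ L → HasLargeAvoidingSet p q 11 25 L := by
  rcases le_or_gt 13 p with hp | hp
  · refine hasLargeAvoidingSet_of_two_pow_le (by norm_num) (by omega) hqp hpq ?_
    calc 2 ^ 11 * p ^ (2 * 11) ≤ p ^ 3 * p ^ 22 :=
          Nat.mul_le_mul_right _ ((by norm_num : 2 ^ 11 ≤ 13 ^ 3).trans (Nat.pow_le_pow_left hp 3))
      _ = p ^ 25 := by ring
  by_cases hpred : p ≤ 8 ∧ q = p - 1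
  · obtain ⟨hp8, rfl⟩ := hpred
    exact hasLargeAvoidingSet_pred_of_le_eight (by omega) hp8
  interval_cases p <;> interval_cases q <;>
    first
      | exact absurd hpq (by decide)
      | exact absurd hpred (by decide)
      | exact hasLargeAvoidingSet_of_pow_le_pow (by norm_num) (by norm_num) hpq
          (by norm_num [digitBase])

theorem hasLargeAvoidingSet_499_1000 (hqp : q < p) (hpq : Nat.Coprime p q)
    (hp : 2 ^ 499 ≤ p) : ∀ L, 1 ≤ L → HasLargeAvoidingSet p q 499 1000 L := by
  refine hasLargeAvoidingSet_of_two_pow_le (by norm_num)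
    ((Nat.le_self_pow (by norm_num) 2).trans hp) hqp hpq ?_
  calc 2 ^ 499 * p ^ (2 * 499) ≤ p ^ 2 * p ^ 998 :=
        Nat.mul_le_mul_right _ (hp.trans (Nat.le_self_pow two_ne_zero p))
    _ = p ^ 1000 := by ring

end Construction

lemma rpow_le_of_pow_le_pow {L m a b : ℕ} {r : ℝ} (hb : b ≠ 0) (hr : r * b = a)
    (h : L ^ a ≤ m ^ b) : (L : ℝ) ^ r ≤ m := by
  refine (pow_le_pow_iff_left₀ (by positivity) (by positivity) hb).mp ?_
  rw [← Real.rpow_mul_natCast (by positivity), hr, Real.rpow_natCast]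
  exact_mod_cast h

lemma exists_subset_Icc_one_of_hasLargeAvoidingSet {p q a b L : ℕ} {r : ℝ}
    (h : HasLargeAvoidingSet p q a b L) (hb : b ≠ 0) (hr : r * b = a) :
    ∃ A : Finset ℤ, A ⊆ Icc 1 (L : ℤ) ∧ (L : ℝ) ^ r ≤ #A ∧ AvoidsRatio p q A := by
  obtain ⟨A, hA, hAL, hcard⟩ := h
  refine ⟨A + {1}, fun x hx => ?_, ?_, hA.add_singleton 1⟩
  · obtain ⟨y, hy, z, hz, rfl⟩ := mem_add.mp hx
    have := mem_Icc.mp (hAL hy)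
    rw [mem_singleton.mp hz, mem_Icc]
    omega
  · rw [card_add_singleton]
    exact rpow_le_of_pow_le_pow hb hr hcard

section DivGcd

variable {i j : ℤ}

lemma one_le_natAbs_ediv_gcd (hi : i ≠ 0) : 1 ≤ (i / Int.gcd i j).natAbs := by
  rw [Int.natAbs_ediv_of_dvd (Int.gcd_dvd_left i j), Int.natAbs_natCast]
  exact Nat.div_pos (Nat.le_of_dvd (Int.natAbs_pos.mpr hi) (Int.gcd_dvd_natAbs_left i j))
    (Int.gcd_pos_of_ne_zero_left j hi)

lemma natAbs_ediv_gcd_lt (hij : |i| < |j|) :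
    (i / Int.gcd i j).natAbs < (j / Int.gcd i j).natAbs := by
  rw [Int.natAbs_ediv_of_dvd (Int.gcd_dvd_left i j), Int.natAbs_ediv_of_dvd (Int.gcd_dvd_right i j),
    Int.natAbs_natCast]
  refine Nat.div_lt_div_of_lt_of_dvd (Int.gcd_dvd_natAbs_right i j) ?_
  zify
  simpa using hij

lemma coprime_natAbs_ediv_gcd (hi : i ≠ 0) :
    Nat.Coprime (j / Int.gcd i j).natAbs (i / Int.gcd i j).natAbs := by
  have := Int.gcd_div_gcd_div_gcd (Int.gcd_pos_of_ne_zero_left j hi)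
  rwa [Int.gcd_comm] at this

lemma abs_div_gcd_eq_natAbs_ediv_gcd :
    ((|j| : ℤ) : ℝ) / (Int.gcd i j : ℝ) = ((j / Int.gcd i j).natAbs : ℝ) := by
  rw [Int.natAbs_ediv_of_dvd (Int.gcd_dvd_right i j), Int.natAbs_natCast,
    Nat.cast_div_charZero (Int.gcd_dvd_natAbs_right i j), Nat.cast_natAbs, Int.cast_abs]

end DivGcd

lemma eq_zero_of_proportional {A : Finset ℤ} {i j k d₁ d₂ d₃ : ℤ} {t : ℚ} (hi : i ≠ 0)
    (hA : AvoidsRatio (j / Int.gcd i j).natAbs (i / Int.gcd i j).natAbs A)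
    (hd₁ : d₁ ∈ A - A) (hd₂ : d₂ ∈ A - A)
    (h₁ : (d₁ : ℚ) = t * i) (h₂ : (d₂ : ℚ) = t * j) (h₃ : (d₃ : ℚ) = t * k) :
    d₁ = 0 ∧ d₂ = 0 ∧ d₃ = 0 := by
  set g : ℤ := (Int.gcd i j : ℤ)
  have hg : g ≠ 0 := Int.natCast_ne_zero.mpr (Int.gcd_pos_of_ne_zero_left j hi).ne'
  have hig : i / g * g = i := Int.ediv_mul_cancel (Int.gcd_dvd_left i j)
  have hjg : j / g * g = j := Int.ediv_mul_cancel (Int.gcd_dvd_right i j)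
  have hcop : IsCoprime (i / g) (j / g) :=
    Int.isCoprime_iff_gcd_eq_one.mpr (Int.gcd_div_gcd_div_gcd (Int.gcd_pos_of_ne_zero_left j hi))
  have hcross : d₁ * j = d₂ * i := by
    have : (d₁ : ℚ) * j = d₂ * i := by rw [h₁, h₂]; ring
    exact_mod_cast this
  have hig0 : i / g ≠ 0 := by
    rintro h
    rw [h, zero_mul] at hig
    exact hi hig.symm
  have hcross' : j / g * d₁ = i / g * d₂ :=
    mul_left_cancel₀ hg (by linear_combination hcross + d₁ * hjg - d₂ * hig)
  obtain ⟨f, rfl, rfl⟩ := hcop.exists_eq_mul_of_mul_eq_mul hig0 hcross'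
  obtain rfl := hA f (natAbs_mul_mem_sub_self hd₂) (natAbs_mul_mem_sub_self hd₁)
  have ht : t = 0 := by simpa [hi] using h₁.symm
  rw [ht, zero_mul] at h₃
  exact ⟨mul_zero _, mul_zero _, by exact_mod_cast h₃⟩

lemma solution_trivial_of_avoidsRatio {a b c i₁ j₁ k₁ : ℤ} {L : ℕ} {A : Finset ℤ}
    (hi₁ : i₁ ≠ 0)
    (honly : ∀ i j k : ℤ, |i| ≤ (L : ℤ) → |j| ≤ (L : ℤ) → |k| ≤ (L : ℤ) →
      i * a + j * b + k * c = 0 →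
      ∃ t : ℚ, (i : ℚ) = t * (i₁ : ℚ) ∧ (j : ℚ) = t * (j₁ : ℚ) ∧ (k : ℚ) = t * (k₁ : ℚ))
    (hAL : A ⊆ Icc 1 (L : ℤ))
    (hA : AvoidsRatio (j₁ / Int.gcd i₁ j₁).natAbs (i₁ / Int.gcd i₁ j₁).natAbs A) :
    ∀ x₁ y₁ x₂ y₂ x₃ y₃ : ℤ, x₁ ∈ A → y₁ ∈ A → x₂ ∈ A → y₂ ∈ A → x₃ ∈ A → y₃ ∈ A →
      (x₁ - y₁) * a + (x₂ - y₂) * b + (x₃ - y₃) * c = 0 → x₁ = y₁ ∧ x₂ = y₂ ∧ x₃ = y₃ := by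
  intro x₁ y₁ x₂ y₂ x₃ y₃ hx₁ hy₁ hx₂ hy₂ hx₃ hy₃ heq
  have hA0 : A ⊆ Icc 0 (L : ℤ) := hAL.trans (Icc_subset_Icc zero_le_one le_rfl)
  have hd₁ := sub_mem_sub hx₁ hy₁
  have hd₂ := sub_mem_sub hx₂ hy₂
  have hd₃ := sub_mem_sub hx₃ hy₃
  obtain ⟨t, h₁, h₂, h₃⟩ := honly _ _ _ (abs_le_of_mem_sub_self hA0 hd₁)
    (abs_le_of_mem_sub_self hA0 hd₂) (abs_le_of_mem_sub_self hA0 hd₃) heq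
  obtain ⟨e₁, e₂, e₃⟩ := eq_zero_of_proportional hi₁ hA hd₁ hd₂ h₁ h₂ h₃
  omega

lemma two_pow_le_exp_thousand : (2 : ℝ) ^ 499 ≤ Real.exp 1000 := calc
  (2 : ℝ) ^ 499 ≤ Real.exp 1 ^ 499 :=
      pow_le_pow_left₀ (by norm_num) (by linarith [Real.add_one_le_exp 1]) 499
  _ = Real.exp 499 := by rw [Real.exp_one_pow]; norm_num
  _ ≤ Real.exp 1000 := Real.exp_le_exp.mpr (by norm_num)

theorem statement13_general (a b c : ℤ) (L : ℕ) (hL : 1 ≤ L) (i₁ j₁ k₁ : ℤ)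
    (hi₁ : 1 ≤ |i₁|) (hij : |i₁| < |j₁|)
    (honly : ∀ i j k : ℤ, |i| ≤ (L : ℤ) → |j| ≤ (L : ℤ) → |k| ≤ (L : ℤ) →
      i * a + j * b + k * c = 0 →
      ∃ t : ℚ, (i : ℚ) = t * (i₁ : ℚ) ∧ (j : ℚ) = t * (j₁ : ℚ) ∧ (k : ℚ) = t * (k₁ : ℚ)) :
    (∃ A : Finset ℤ, A ⊆ Finset.Icc 1 (L : ℤ) ∧
      (L : ℝ) ^ (0.44 : ℝ) ≤ A.card ∧
      ∀ x₁ y₁ x₂ y₂ x₃ y₃ : ℤ, x₁ ∈ A → y₁ ∈ A → x₂ ∈ A → y₂ ∈ A → x₃ ∈ A → y₃ ∈ A →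
        (x₁ - y₁) * a + (x₂ - y₂) * b + (x₃ - y₃) * c = 0 →
        x₁ = y₁ ∧ x₂ = y₂ ∧ x₃ = y₃) ∧
    (Real.exp 1000 < ((|j₁| : ℤ) : ℝ) / (Int.gcd i₁ j₁ : ℝ) →
      ∃ A : Finset ℤ, A ⊆ Finset.Icc 1 (L : ℤ) ∧
        (L : ℝ) ^ (0.499 : ℝ) ≤ A.card ∧
        ∀ x₁ y₁ x₂ y₂ x₃ y₃ : ℤ, x₁ ∈ A → y₁ ∈ A → x₂ ∈ A → y₂ ∈ A → x₃ ∈ A → y₃ ∈ A →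
          (x₁ - y₁) * a + (x₂ - y₂) * b + (x₃ - y₃) * c = 0 →
          x₁ = y₁ ∧ x₂ = y₂ ∧ x₃ = y₃) := by
  have hi₁0 : i₁ ≠ 0 := abs_pos.mp (by omega)
  set p := (j₁ / Int.gcd i₁ j₁).natAbs
  set q := (i₁ / Int.gcd i₁ j₁).natAbs
  have hq : 1 ≤ q := one_le_natAbs_ediv_gcd hi₁0
  have hqp : q < p := natAbs_ediv_gcd_lt hij
  have hpq : Nat.Coprime p q := coprime_natAbs_ediv_gcd hi₁0
  refine ⟨?_, fun hexp => ?_⟩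
  · obtain ⟨A, hAL, hcard, hA⟩ := exists_subset_Icc_one_of_hasLargeAvoidingSet (r := 0.44)
      (hasLargeAvoidingSet_11_25 hq hqp hpq L hL) (by norm_num) (by norm_num)
    exact ⟨A, hAL, hcard, solution_trivial_of_avoidsRatio hi₁0 honly hAL hA⟩
  · have hp : 2 ^ 499 ≤ p := by
      rw [abs_div_gcd_eq_natAbs_ediv_gcd] at hexp
      exact_mod_cast two_pow_le_exp_thousand.trans hexp.le
    obtain ⟨A, hAL, hcard, hA⟩ := exists_subset_Icc_one_of_hasLargeAvoidingSet (r := 0.499)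
      (hasLargeAvoidingSet_499_1000 hqp hpq hp L hL) (by norm_num) (by norm_num)
    exact ⟨A, hAL, hcard, solution_trivial_of_avoidsRatio hi₁0 honly hAL hA⟩

/-- Let `a, b, c` be integers, `L ≥ 1`, and `(i₁, j₁, k₁)` an integer solution of
`i·a + j·b + k·c = 0` with `1 ≤ |i₁| < |j₁|`, such that every integer solution in `{−L,…,L}³`
is a rational multiple of `(i₁, j₁, k₁)`. Then there is `A ⊆ [L]` with `|A| ≥ L^{0.44}` such
that the only triple of `(A−A)³` solving the equation is `(0,0,0)`; moreover if
`|j₁|/gcd(|i₁|,|j₁|) > e^{1000}` then `A` can be chosen with `|A| ≥ L^{0.499}`. -/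
theorem statement13 (a b c : ℤ) (L : ℕ) (hL : 1 ≤ L) (i₁ j₁ k₁ : ℤ)
    (hsol : i₁ * a + j₁ * b + k₁ * c = 0)
    (hi₁ : 1 ≤ |i₁|) (hij : |i₁| < |j₁|)
    (honly : ∀ i j k : ℤ, |i| ≤ (L : ℤ) → |j| ≤ (L : ℤ) → |k| ≤ (L : ℤ) →
      i * a + j * b + k * c = 0 →
      ∃ t : ℚ, (i : ℚ) = t * (i₁ : ℚ) ∧ (j : ℚ) = t * (j₁ : ℚ) ∧ (k : ℚ) = t * (k₁ : ℚ)) :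
    (∃ A : Finset ℤ, A ⊆ Finset.Icc 1 (L : ℤ) ∧
      (L : ℝ) ^ (0.44 : ℝ) ≤ A.card ∧
      ∀ x₁ y₁ x₂ y₂ x₃ y₃ : ℤ, x₁ ∈ A → y₁ ∈ A → x₂ ∈ A → y₂ ∈ A → x₃ ∈ A → y₃ ∈ A →
        (x₁ - y₁) * a + (x₂ - y₂) * b + (x₃ - y₃) * c = 0 →
        x₁ = y₁ ∧ x₂ = y₂ ∧ x₃ = y₃) ∧
    (Real.exp 1000 < ((|j₁| : ℤ) : ℝ) / (Int.gcd i₁ j₁ : ℝ) →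
      ∃ A : Finset ℤ, A ⊆ Finset.Icc 1 (L : ℤ) ∧
        (L : ℝ) ^ (0.499 : ℝ) ≤ A.card ∧
        ∀ x₁ y₁ x₂ y₂ x₃ y₃ : ℤ, x₁ ∈ A → y₁ ∈ A → x₂ ∈ A → y₂ ∈ A → x₃ ∈ A → y₃ ∈ A →
          (x₁ - y₁) * a + (x₂ - y₂) * b + (x₃ - y₃) * c = 0 →
          x₁ = y₁ ∧ x₂ = y₂ ∧ x₃ = y₃) :=
  statement13_general a b c L hL i₁ j₁ k₁ hi₁ hij honly
end

section
/- Let a, b, c be positive integers with a ≤ b ≤ c and gcd(b,c) = 1. Suppose that for a real number α₂ ∈ (0, 1/2) there exist integers i₁, j₁, k₁, not all zero, with |i₁|, |j₁|, |k₁| ≤ b^{α₂} such that i₁·a + j₁·b + k₁·c = 0. If integers i₂, j₂, k₂ satisfy i₂·a + j₂·b + k₂·c = 0 and (i₂, j₂, k₂) is not of the form (t·i₁, t·j₁, t·k₁) for any rational number t, then max(|i₂|, |j₂|, |k₂|) ≥ (1/2)·b^{1−α₂}. -/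
/-!
Let `u = (i₁, j₁, k₁) × (i₂, j₂, k₂)`. Both vectors are orthogonal to `w = (a, b, c)`, so `u` is
parallel to `w`, and `u ≠ 0` because the two vectors are not proportional. The relation
`b u₂ = c u₁` together with `gcd(b, c) = 1` forces `c ∣ u₂ ≠ 0`, hence
`b ≤ c ≤ |i₁ j₂ - j₁ i₂| ≤ b^α₂ (|i₂| + |j₂|) ≤ 2 b^α₂ max(|i₂|, |j₂|, |k₂|)`.
-/

open Matrix

section CrossProduct

variable {R : Type*} [CommRing R]

theorem cross_cross_eq_zero_of_dotProduct_eq_zero {u v w : Fin 3 → R}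
    (hu : u ⬝ᵥ w = 0) (hv : v ⬝ᵥ w = 0) : u ⨯₃ v ⨯₃ w = 0 := by
  simp [cross_cross_eq_smul_sub_smul, hu, hv]

theorem RingHom.comp_cross {S : Type*} [CommRing S] (f : R →+* S) (v w : Fin 3 → R) :
    f ∘ (v ⨯₃ w) = (f ∘ v) ⨯₃ (f ∘ w) := by
  ext i
  fin_cases i <;> simp [cross_apply]

theorem exists_eq_smul_of_cross_eq_zero {K : Type*} [Field K] (f : R →+* K)
    (hf : Function.Injective f) {v w : Fin 3 → R} (hv : v ≠ 0) (h : v ⨯₃ w = 0) :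
    ∃ t : K, f ∘ w = t • (f ∘ v) := by
  have hv' : f ∘ v ≠ 0 := fun h0 => hv (funext fun i => hf (by simpa using congrFun h0 i))
  have hdep : ¬ LinearIndependent K ![f ∘ v, f ∘ w] := by
    rw [← crossProduct_ne_zero_iff_linearIndependent, ← f.comp_cross, h, not_not]
    ext
    simp
  simpa [LinearIndependent.pair_iff' hv', eq_comm] using hdep

theorem eq_zero_of_cross_eq_zero_of_apply_two_eq_zero [NoZeroDivisors R] {u w : Fin 3 → R}
    (h : u ⨯₃ w = 0) (hw : w 2 ≠ 0) (hu : u 2 = 0) : u = 0 := by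
  have h0 := congrFun h 0
  have h1 := congrFun h 1
  simp only [cross_apply, hu, Fin.isValue, cons_val, Pi.zero_apply, zero_mul, sub_zero,
    zero_sub, neg_eq_zero] at h0 h1
  ext i
  fin_cases i
  · exact (mul_eq_zero.mp h1).resolve_right hw
  · exact (mul_eq_zero.mp h0).resolve_right hw
  · exact hu

theorem apply_two_dvd_of_cross_eq_zero {u w : Fin 3 → R} (h : u ⨯₃ w = 0)
    (hw : IsCoprime (w 2) (w 1)) : w 2 ∣ u 2 := by
  have h0 : u 1 * w 2 = u 2 * w 1 := sub_eq_zero.mp (congrFun h 0)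
  exact hw.dvd_of_dvd_mul_right ⟨u 1, by rw [← h0, mul_comm]⟩

end CrossProduct

theorem Int.le_abs_apply_two_of_cross_eq_zero {u w : Fin 3 → ℤ} (h : u ⨯₃ w = 0) (hu : u ≠ 0)
    (hw : IsCoprime (w 2) (w 1)) (hw₂ : 0 < w 2) : w 2 ≤ |u 2| := by
  have hu₂ : u 2 ≠ 0 := fun hu₂ =>
    hu (eq_zero_of_cross_eq_zero_of_apply_two_eq_zero h hw₂.ne' hu₂)
  exact Int.le_of_dvd (abs_pos.mpr hu₂) ((dvd_abs _ _).mpr (apply_two_dvd_of_cross_eq_zero h hw))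

theorem abs_mul_sub_mul_le {α : Type*} [Ring α] [LinearOrder α] [IsOrderedRing α]
    {x₁ y₁ x₂ y₂ B : α} (hx : |x₁| ≤ B) (hy : |y₁| ≤ B) :
    |x₁ * y₂ - y₁ * x₂| ≤ B * (|x₂| + |y₂|) :=
  calc |x₁ * y₂ - y₁ * x₂| ≤ |x₁| * |y₂| + |y₁| * |x₂| := by
        simpa only [abs_mul] using abs_sub (x₁ * y₂) (y₁ * x₂)
    _ ≤ B * |y₂| + B * |x₂| := by gcongr
    _ = B * (|x₂| + |y₂|) := by rw [mul_add, add_comm]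

theorem Real.half_mul_rpow_one_sub_le {x α M : ℝ} (hx : 0 < x) (h : x ≤ x ^ α * (2 * M)) :
    1 / 2 * x ^ (1 - α) ≤ M := by
  have hdiv : x / x ^ α ≤ 2 * M := (div_le_iff₀' (Real.rpow_pos_of_pos hx α)).mpr h
  rw [Real.rpow_sub hx, Real.rpow_one]
  linarith

theorem statement14_general (a b c : ℕ) (ha : 0 < a) (hab : a ≤ b) (hbc : b ≤ c)
    (hco : Nat.Coprime b c) (α₂ : ℝ)
    (i₁ j₁ k₁ : ℤ) (hnz : ¬(i₁ = 0 ∧ j₁ = 0 ∧ k₁ = 0))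
    (hi : ((|i₁| : ℤ) : ℝ) ≤ (b : ℝ) ^ α₂) (hj : ((|j₁| : ℤ) : ℝ) ≤ (b : ℝ) ^ α₂)
    (heq1 : i₁ * (a : ℤ) + j₁ * (b : ℤ) + k₁ * (c : ℤ) = 0)
    (i₂ j₂ k₂ : ℤ)
    (heq2 : i₂ * (a : ℤ) + j₂ * (b : ℤ) + k₂ * (c : ℤ) = 0)
    (hnm : ¬ ∃ t : ℚ, (i₂ : ℚ) = t * (i₁ : ℚ) ∧ (j₂ : ℚ) = t * (j₁ : ℚ) ∧
      (k₂ : ℚ) = t * (k₁ : ℚ)) :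
    (1 / 2 : ℝ) * (b : ℝ) ^ ((1 : ℝ) - α₂) ≤ ((max |i₂| (max |j₂| |k₂|) : ℤ) : ℝ) := by
  set v₁ : Fin 3 → ℤ := ![i₁, j₁, k₁]
  set v₂ : Fin 3 → ℤ := ![i₂, j₂, k₂]
  set w : Fin 3 → ℤ := ![a, b, c]
  have hparallel : v₁ ⨯₃ v₂ ⨯₃ w = 0 := cross_cross_eq_zero_of_dotProduct_eq_zero
    (by simpa [v₁, w, vec3_dotProduct, add_assoc] using heq1)
    (by simpa [v₂, w, vec3_dotProduct, add_assoc] using heq2)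
  have hcross : v₁ ⨯₃ v₂ ≠ 0 := by
    intro h
    obtain ⟨t, ht⟩ := exists_eq_smul_of_cross_eq_zero (Int.castRingHom ℚ) Int.cast_injective
      (by simpa [v₁, funext_iff, Fin.forall_fin_succ] using hnz) h
    exact hnm ⟨t, by simpa [v₁, v₂] using congrFun ht 0, by simpa [v₁, v₂] using congrFun ht 1,
      by simpa [v₁, v₂] using congrFun ht 2⟩
  have hc_le : (c : ℤ) ≤ |i₁ * j₂ - j₁ * i₂| := by
    simpa [v₁, v₂, w, cross_apply] using Int.le_abs_apply_two_of_cross_eq_zero hparallel hcross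
      (by simpa [w] using hco.isCoprime.symm) (by simp [w]; omega)
  have hmax : |i₂| + |j₂| ≤ 2 * max |i₂| (max |j₂| |k₂|) := by grind
  refine Real.half_mul_rpow_one_sub_le (by exact_mod_cast ha.trans_le hab) ?_
  calc (b : ℝ) ≤ |(i₁ : ℝ) * j₂ - j₁ * i₂| := by exact_mod_cast (Int.ofNat_le.mpr hbc).trans hc_le
    _ ≤ b ^ α₂ * (|(i₂ : ℝ)| + |(j₂ : ℝ)|) :=
      abs_mul_sub_mul_le (by exact_mod_cast hi) (by exact_mod_cast hj)
    _ ≤ b ^ α₂ * (2 * ((max |i₂| (max |j₂| |k₂|) : ℤ) : ℝ)) := by gcongr; exact_mod_cast hmax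

/-- Let `a ≤ b ≤ c` be positive integers with `gcd(b,c) = 1`, and `α₂ ∈ (0,1/2)`.
Suppose `i₁, j₁, k₁`, not all zero, satisfy `|i₁|,|j₁|,|k₁| ≤ b^{α₂}` and
`i₁·a + j₁·b + k₁·c = 0`. If `i₂, j₂, k₂` satisfy `i₂·a + j₂·b + k₂·c = 0` and are not a
rational multiple of `(i₁,j₁,k₁)`, then `max(|i₂|,|j₂|,|k₂|) ≥ (1/2)·b^{1−α₂}`. -/
theorem statement14 (a b c : ℕ) (ha : 0 < a) (hab : a ≤ b) (hbc : b ≤ c)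
    (hco : Nat.Coprime b c) (α₂ : ℝ) (hα₂ : 0 < α₂) (hα₂' : α₂ < 1 / 2)
    (i₁ j₁ k₁ : ℤ) (hnz : ¬(i₁ = 0 ∧ j₁ = 0 ∧ k₁ = 0))
    (hi : ((|i₁| : ℤ) : ℝ) ≤ (b : ℝ) ^ α₂) (hj : ((|j₁| : ℤ) : ℝ) ≤ (b : ℝ) ^ α₂)
    (hk : ((|k₁| : ℤ) : ℝ) ≤ (b : ℝ) ^ α₂)
    (heq1 : i₁ * (a : ℤ) + j₁ * (b : ℤ) + k₁ * (c : ℤ) = 0)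
    (i₂ j₂ k₂ : ℤ)
    (heq2 : i₂ * (a : ℤ) + j₂ * (b : ℤ) + k₂ * (c : ℤ) = 0)
    (hnm : ¬ ∃ t : ℚ, (i₂ : ℚ) = t * (i₁ : ℚ) ∧ (j₂ : ℚ) = t * (j₁ : ℚ) ∧
      (k₂ : ℚ) = t * (k₁ : ℚ)) :
    (1 / 2 : ℝ) * (b : ℝ) ^ ((1 : ℝ) - α₂) ≤ ((max |i₂| (max |j₂| |k₂|) : ℤ) : ℝ) :=
  statement14_general a b c ha hab hbc hco α₂ i₁ j₁ k₁ hnz hi hj heq1 i₂ j₂ k₂ heq2 hnm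
end

section
/- Let d ≥ 2 be an integer and let A be a finite set of integers containing no non-trivial solutions to the equation x₁ + x₂ + d·x₃ + d·x₄ = 2y₁ + 2d·y₂. Consider the set A ∔ dA = {a₁ + d·a₂ : a₁, a₂ ∈ A, a₁ ≠ a₂}. Then: (i) the values a₁ + d·a₂ over ordered pairs (a₁,a₂) ∈ A² with a₁ ≠ a₂ are pairwise distinct, so |A ∔ dA| = |A|² − |A|; and (ii) there are no three elements u, v, w ∈ A ∔ dA with u < v < w and u + w = 2v. -/
/-!
A three-term progression `u + w = 2v` in `A ∔ dA`, written out as `u = a₁ + d a₂`,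
`v = b₁ + d b₂`, `w = c₁ + d c₂`, is a solution `(a₁, c₁, a₂, c₂, b₁, b₂)` of the equation with
entries in `A`. If it is trivial, the weight `-2d` at `b₂` and the weight `-2` at `b₁` can only be
cancelled by the positive coefficients `1, 1, d, d`; as `d ≥ 2` and all three pairs are
off-diagonal, this forces `(a₁, a₂) = (b₁, b₂) = (c₁, c₂)`. Taking `w = u` gives (i),
and `u = v` contradicts `u < v` in (ii).
-/

open Finset

def IsTrivialSolution {m : ℕ} (c z : Fin m → ℤ) : Prop :=
  ∀ α : ℤ, ∑ i ∈ univ.filter (fun i => z i = α), c i = 0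

def apCoeffs (d : ℤ) : Fin 6 → ℤ := ![1, 1, d, d, -2, -2 * d]

theorem sum_apCoeffs_mul (d a₁ a₂ b₁ b₂ c₁ c₂ : ℤ) :
    ∑ i, apCoeffs d i * ![a₁, c₁, a₂, c₂, b₁, b₂] i =
      a₁ + d * a₂ + (c₁ + d * c₂) - 2 * (b₁ + d * b₂) := by
  simp only [Fin.sum_univ_six, apCoeffs, Matrix.cons_val]
  ring

theorem eq_of_isTrivialSolution_apCoeffs {d a₁ a₂ b₁ b₂ c₁ c₂ : ℤ} (hd : 2 ≤ d)
    (ha : a₁ ≠ a₂) (hb : b₁ ≠ b₂) (hc : c₁ ≠ c₂)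
    (htriv : IsTrivialSolution (apCoeffs d) ![a₁, c₁, a₂, c₂, b₁, b₂]) :
    (a₁, a₂) = (b₁, b₂) ∧ (c₁, c₂) = (b₁, b₂) := by
  have hb₁ := htriv b₁
  have hb₂ := htriv b₂
  simp only [sum_filter, Fin.sum_univ_six, apCoeffs, Matrix.cons_val] at hb₁ hb₂
  simp only [Prod.mk.injEq]
  split_ifs at hb₁ hb₂ <;> omega

theorem eq_of_add_eq_two_mul_of_isTrivialSolution {d : ℤ} (hd : 2 ≤ d) {A : Finset ℤ}
    (htriv : ∀ z : Fin 6 → ℤ, (∀ i, z i ∈ A) → ∑ i, apCoeffs d i * z i = 0 →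
      IsTrivialSolution (apCoeffs d) z)
    {p q r : ℤ × ℤ} (hp : p ∈ A.offDiag) (hq : q ∈ A.offDiag) (hr : r ∈ A.offDiag)
    (h : p.1 + d * p.2 + (r.1 + d * r.2) = 2 * (q.1 + d * q.2)) :
    p = q ∧ r = q := by
  obtain ⟨hp₁, hp₂, hp⟩ := mem_offDiag.1 hp
  obtain ⟨hq₁, hq₂, hq⟩ := mem_offDiag.1 hq
  obtain ⟨hr₁, hr₂, hr⟩ := mem_offDiag.1 hr
  refine eq_of_isTrivialSolution_apCoeffs hd hp hq hr (htriv _ ?_ ?_)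
  · intro i
    fin_cases i <;> assumption
  · rw [sum_apCoeffs_mul]
    linarith

/-- Let `d ≥ 2` and let `A` be a finite set of integers containing no non-trivial
solutions (every solution with entries in `A` is trivial, coefficients `(1,1,d,d,−2,−2d)`) to
`x₁ + x₂ + d·x₃ + d·x₄ = 2y₁ + 2d·y₂`. Then: (i) the values `a₁ + d·a₂` over ordered pairs with
`a₁ ≠ a₂` are pairwise distinct, so `|A ∔ dA| = |A|² − |A|`; and (ii) `A ∔ dA` contains no
three elements `u < v < w` with `u + w = 2v`. -/
theorem statement17 (d : ℕ) (hd : 2 ≤ d) (A : Finset ℤ)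
    (htriv : ∀ v : Fin 6 → ℤ, (∀ i, v i ∈ A) →
      (∑ i, ![(1 : ℤ), 1, (d : ℤ), (d : ℤ), -2, -2 * (d : ℤ)] i * v i) = 0 →
      ∀ α : ℤ, (∑ i ∈ Finset.univ.filter (fun i => v i = α),
        ![(1 : ℤ), 1, (d : ℤ), (d : ℤ), -2, -2 * (d : ℤ)] i) = 0) :
    (∀ a₁ a₂ b₁ b₂ : ℤ, a₁ ∈ A → a₂ ∈ A → b₁ ∈ A → b₂ ∈ A → a₁ ≠ a₂ → b₁ ≠ b₂ →
      a₁ + (d : ℤ) * a₂ = b₁ + (d : ℤ) * b₂ → a₁ = b₁ ∧ a₂ = b₂) ∧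
    (((A ×ˢ A).filter (fun p => p.1 ≠ p.2)).image (fun p => p.1 + (d : ℤ) * p.2)).card
      = A.card ^ 2 - A.card ∧
    ∀ u v w : ℤ,
      u ∈ ((A ×ˢ A).filter (fun p => p.1 ≠ p.2)).image (fun p => p.1 + (d : ℤ) * p.2) →
      v ∈ ((A ×ˢ A).filter (fun p => p.1 ≠ p.2)).image (fun p => p.1 + (d : ℤ) * p.2) →
      w ∈ ((A ×ˢ A).filter (fun p => p.1 ≠ p.2)).image (fun p => p.1 + (d : ℤ) * p.2) →
      u < v → v < w → u + w ≠ 2 * v := by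
  have rigid {p q r : ℤ × ℤ} := eq_of_add_eq_two_mul_of_isTrivialSolution (p := p) (q := q)
    (r := r) (by exact_mod_cast hd) htriv
  have inj : Set.InjOn (fun p : ℤ × ℤ => p.1 + (d : ℤ) * p.2) A.offDiag :=
    fun p hp q hq h => (rigid hp hq hp (by simp only at h; linarith)).1
  have hS : (A ×ˢ A).filter (fun p => p.1 ≠ p.2) = A.offDiag := by
    ext
    simp [mem_offDiag, and_assoc]
  rw [hS]
  refine ⟨fun a₁ a₂ b₁ b₂ ha₁ ha₂ hb₁ hb₂ ha hb h => Prod.mk.inj <|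
    inj (x₁ := (a₁, a₂)) (mem_offDiag.2 ⟨ha₁, ha₂, ha⟩) (x₂ := (b₁, b₂))
      (mem_offDiag.2 ⟨hb₁, hb₂, hb⟩) h, ?_, ?_⟩
  · rw [card_image_of_injOn inj, offDiag_card, sq]
  · simp only [mem_image]
    rintro _ _ _ ⟨p, hp, rfl⟩ ⟨q, hq, rfl⟩ ⟨r, hr, rfl⟩ hpq - h
    obtain ⟨rfl, -⟩ := rigid hp hq hr h
    exact hpq.ne rfl
end
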